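/- arXiv:1812.01109 — 12 statements merged into one kernel-verified Lean document; each statement's English description precedes it below -/
import Mathlib

section
/- For positive odd integers a and b, and any nonnegative integer n, the number of representations t(a,2a,2a,2b;n) equals one half of N(a,a,4a,2b; 8n+5a+2b). -/
/-- Number of representations of `n` by `a x² + b y² + c z² + d w²` over ℤ. -/
noncomputable def N4 (a b c d n : ℤ) : ℕ :=
  Set.ncard {v : ℤ × ℤ × ℤ × ℤ |
    n = a * v.1 ^ 2 + b * v.2.1 ^ 2 + c * v.2.2.1 ^ 2 + d * v.2.2.2 ^ 2}

/-- Number of representations of `n` by `a x(x-1)/2 + b y(y-1)/2 + c z(z-1)/2 + d w(w-1)/2`. -/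
noncomputable def t4 (a b c d n : ℤ) : ℕ :=
  Set.ncard {v : ℤ × ℤ × ℤ × ℤ |
    2 * n = a * (v.1 * (v.1 - 1)) + b * (v.2.1 * (v.2.1 - 1))
      + c * (v.2.2.1 * (v.2.2.1 - 1)) + d * (v.2.2.2 * (v.2.2.2 - 1))}

private lemma c0' (n a b A B : ℤ) (ha : a % 2 = 1) (h : 8*n+5*a+2*b = 4*A+2*B) : False := by omega
private lemma c1' (n a b A B : ℤ) (ha : a % 2 = 1) (h : 8*n+3*a+2*b = 4*A+2*B) : False := by omega
private lemma c2' (n a b A B : ℤ) (hb : b % 2 = 1) (h : 8*n+4*a+2*b = 4*A+8*B) : False := by omega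
private lemma c3' (n a A B C : ℤ) (ha : a % 2 = 1) (h : 8*n+4*a = 8*A+16*B+8*C) : False := by omega
private lemma c4' (n a A B C : ℤ) (ha : a % 2 = 1) (h : 8*n = 4*a+8*A+16*B+8*C) : False := by omega

private lemma evenpp (p : ℤ) : ∃ c, p^2 + p = c + c := by
  obtain ⟨c, hc⟩ := Int.even_mul_succ_self p
  exact ⟨c, by linear_combination hc⟩

private lemma key_mem (a b n X Y Z W : ℤ) (ha : a % 2 = 1) (hb : b % 2 = 1)
    (hX : X % 2 = 1)
    (E : 8*n + 5*a + 2*b = a*X^2 + a*Y^2 + 4*a*Z^2 + 2*b*W^2) :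
    ∃ x y z w : ℤ,
      2*n = a*(x*(x-1)) + 2*a*(y*(y-1)) + 2*a*(z*(z-1)) + 2*b*(w*(w-1)) ∧
      2*x - 1 = X ∧ 2*(y+z-1) = Y ∧ y - z = Z ∧ 2*w - 1 = W := by
  obtain ⟨p, rfl⟩ : ∃ p, X = 2*p+1 := ⟨X/2, by omega⟩
  rcases Int.even_or_odd Y with ⟨q, rfl⟩ | ⟨q, rfl⟩
  swap
  · -- Y = 2q+1 : contradiction
    exfalso
    have key : 8*n+3*a+2*b = 4*(a*(p^2+p+q^2+q+Z^2)) + 2*(b*W^2) := by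
      linear_combination E
    exact c1' n a b _ _ ha key
  · -- Y = q + q
    rcases Int.even_or_odd W with ⟨s, rfl⟩ | ⟨s, rfl⟩
    · exfalso
      have key : 8*n+4*a+2*b = 4*(a*(p^2+p+q^2+Z^2)) + 8*(b*s^2) := by
        linear_combination E
      exact c2' n a b _ _ hb key
    · obtain ⟨c, hc⟩ := evenpp p
      rcases Int.even_or_odd q with ⟨q', rfl⟩ | ⟨q', rfl⟩ <;>
        rcases Int.even_or_odd Z with ⟨Z', rfl⟩ | ⟨Z', rfl⟩
      · exfalso
        have key : 8*n+4*a = 8*(a*c) + 16*(a*(q'^2+Z'^2)) + 8*(b*(s^2+s)) := by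
          linear_combination E + 4*a*hc
        exact c3' n a _ _ _ ha key
      · -- q even, Z odd : y = q'+Z'+1, z = q'-Z'
        refine ⟨p+1, q'+Z'+1, q'-Z', s+1, ?_, by ring, by ring, by ring, by ring⟩
        have H4 : 8*n = 4*(a*((p+1)*p)) + 8*(a*((q'+Z'+1)*(q'+Z'))) +
            8*(a*((q'-Z')*(q'-Z'-1))) + 8*(b*((s+1)*s)) := by
          linear_combination E
        linarith [H4]
      · -- q odd, Z even : y = q'+1+Z', z = q'+1-Z'
        refine ⟨p+1, q'+1+Z', q'+1-Z', s+1, ?_, by ring, by ring, by ring, by ring⟩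
        have H4 : 8*n = 4*(a*((p+1)*p)) + 8*(a*((q'+1+Z')*(q'+Z'))) +
            8*(a*((q'+1-Z')*(q'-Z'))) + 8*(b*((s+1)*s)) := by
          linear_combination E
        linarith [H4]
      · exfalso
        have key : 8*n = 4*a + 8*(a*c) + 16*(a*(q'^2+q'+Z'^2+Z')) + 8*(b*(s^2+s)) := by
          linear_combination E + 4*a*hc
        exact c4' n a _ _ _ ha key

private lemma tnonneg (t : ℤ) : 0 ≤ t*(t-1) := by
  rcases le_or_gt t 0 with h|h
  · nlinarith
  · exact mul_nonneg (by linarith) (by linarith)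

private lemma coordBound (c n t : ℤ) (hc : 1 ≤ c) (hn : 0 ≤ n)
    (h : c*(t*(t-1)) ≤ 2*n) : -(2*n+2) ≤ t ∧ t ≤ 2*n+2 := by
  have h1 : 0 ≤ t*(t-1) := tnonneg t
  have h2 : t*(t-1) ≤ 2*n := by nlinarith
  constructor
  · by_contra h'
    push_neg at h'
    have h3 : (2*n+3)*(2*n+2) ≤ (-t)*(1-t) := by
      apply mul_le_mul (by linarith) (by linarith) (by linarith) (by linarith)
    nlinarith
  · by_contra h'
    push_neg at h'
    have h3 : (2*n+3)*(2*n+2) ≤ t*(t-1) := by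
      apply mul_le_mul (by linarith) (by linarith) (by linarith) (by linarith)
    nlinarith

theorem stmt0 (a b n : ℤ) (ha : 0 < a) (hao : Odd a) (hb : 0 < b) (hbo : Odd b)
    (hn : 0 ≤ n) :
    2 * t4 a (2*a) (2*a) (2*b) n = N4 a a (4*a) (2*b) (8*n + 5*a + 2*b) := by
  have ha2 : a % 2 = 1 := Int.odd_iff.mp hao
  have hb2 : b % 2 = 1 := Int.odd_iff.mp hbo
  set S : Set (ℤ × ℤ × ℤ × ℤ) := {v : ℤ × ℤ × ℤ × ℤ |
    2 * n = a * (v.1 * (v.1 - 1)) + 2*a * (v.2.1 * (v.2.1 - 1))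
      + 2*a * (v.2.2.1 * (v.2.2.1 - 1)) + 2*b * (v.2.2.2 * (v.2.2.2 - 1))} with hSdef
  set T : Set (ℤ × ℤ × ℤ × ℤ) := {v : ℤ × ℤ × ℤ × ℤ |
    8*n + 5*a + 2*b = a * v.1 ^ 2 + a * v.2.1 ^ 2 + 4*a * v.2.2.1 ^ 2 + 2*b * v.2.2.2 ^ 2}
    with hTdef
  set f : (ℤ × ℤ × ℤ × ℤ) → (ℤ × ℤ × ℤ × ℤ) :=
    fun v => (2*v.1 - 1, 2*(v.2.1 + v.2.2.1 - 1), v.2.1 - v.2.2.1, 2*v.2.2.2 - 1) with hfdef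
  set g : (ℤ × ℤ × ℤ × ℤ) → (ℤ × ℤ × ℤ × ℤ) :=
    fun v => (2*(v.2.1 + v.2.2.1 - 1), 2*v.1 - 1, v.2.1 - v.2.2.1, 2*v.2.2.2 - 1) with hgdef
  -- S is finite
  have hSfin : S.Finite := by
    apply Set.Finite.subset (Set.finite_Icc
      ((-(2*n+2), -(2*n+2), -(2*n+2), -(2*n+2)) : ℤ × ℤ × ℤ × ℤ) (2*n+2, 2*n+2, 2*n+2, 2*n+2))
    rintro ⟨x, y, z, w⟩ hv
    simp only [hSdef, Set.mem_setOf_eq] at hv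
    have hx0 := tnonneg x
    have hy0 := tnonneg y
    have hz0 := tnonneg z
    have hw0 := tnonneg w
    have bx := coordBound a n x (by linarith) hn (by nlinarith)
    have byy := coordBound (2*a) n y (by linarith) hn (by nlinarith)
    have bz := coordBound (2*a) n z (by linarith) hn (by nlinarith)
    have bw := coordBound (2*b) n w (by linarith) hn (by nlinarith)
    simp only [Set.mem_Icc, Prod.le_def]
    exact ⟨⟨bx.1, byy.1, bz.1, bw.1⟩, ⟨bx.2, byy.2, bz.2, bw.2⟩⟩
  -- T = f '' S ∪ g '' S
  have hunion : T = f '' S ∪ g '' S := by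
    apply Set.Subset.antisymm
    · rintro ⟨X, Y, Z, W⟩ hv
      simp only [hTdef, Set.mem_setOf_eq] at hv
      have hnboth : ¬ (X % 2 = 0 ∧ Y % 2 = 0) := by
        rintro ⟨hX0, hY0⟩
        obtain ⟨p, rfl⟩ : ∃ p, X = 2*p := ⟨X/2, by omega⟩
        obtain ⟨q, rfl⟩ : ∃ q, Y = 2*q := ⟨Y/2, by omega⟩
        have key : 8*n+5*a+2*b = 4*(a*(p^2+q^2+Z^2)) + 2*(b*W^2) := by
          linear_combination hv
        exact c0' n a b _ _ ha2 key
      rcases Int.emod_two_eq X with hX | hX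
      · -- X even, so Y odd; use g
        have hY : Y % 2 = 1 := by
          rcases Int.emod_two_eq Y with hY | hY
          · exact absurd ⟨hX, hY⟩ hnboth
          · exact hY
        obtain ⟨x, y, z, w, hm, h1, h2, h3, h4⟩ :=
          key_mem a b n Y X Z W ha2 hb2 hY (by linarith)
        right
        refine ⟨(x, y, z, w), hm, ?_⟩
        simp only [hgdef]
        exact Prod.ext h2 (Prod.ext h1 (Prod.ext h3 h4))
      · obtain ⟨x, y, z, w, hm, h1, h2, h3, h4⟩ :=
          key_mem a b n X Y Z W ha2 hb2 hX hv
        left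
        refine ⟨(x, y, z, w), hm, ?_⟩
        simp only [hfdef]
        exact Prod.ext h1 (Prod.ext h2 (Prod.ext h3 h4))
    · rintro v (⟨⟨x, y, z, w⟩, hu, rfl⟩ | ⟨⟨x, y, z, w⟩, hu, rfl⟩) <;>
      · simp only [hSdef, Set.mem_setOf_eq] at hu
        simp only [hTdef, hfdef, hgdef, Set.mem_setOf_eq]
        linear_combination 4*hu
  -- injectivity
  have hfinj : Function.Injective f := by
    rintro ⟨x, y, z, w⟩ ⟨x', y', z', w'⟩ h
    simp only [hfdef, Prod.mk.injEq] at h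
    obtain ⟨h1, h2, h3, h4⟩ := h
    simp only [Prod.mk.injEq]
    omega
  have hginj : Function.Injective g := by
    rintro ⟨x, y, z, w⟩ ⟨x', y', z', w'⟩ h
    simp only [hgdef, Prod.mk.injEq] at h
    obtain ⟨h1, h2, h3, h4⟩ := h
    simp only [Prod.mk.injEq]
    omega
  -- disjointness
  have hdisj : Disjoint (f '' S) (g '' S) := by
    rw [Set.disjoint_left]
    rintro v ⟨⟨x, y, z, w⟩, _, rfl⟩ ⟨⟨x', y', z', w'⟩, _, h⟩
    simp only [hfdef, hgdef, Prod.mk.injEq] at h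
    omega
  have hTcard : N4 a a (4*a) (2*b) (8*n + 5*a + 2*b) = T.ncard := rfl
  have hScard : t4 a (2*a) (2*a) (2*b) n = S.ncard := rfl
  rw [hTcard, hScard, hunion,
    Set.ncard_union_eq hdisj (hSfin.image f) (hSfin.image g),
    Set.ncard_image_of_injective S hfinj, Set.ncard_image_of_injective S hginj]
  omega
end

section
/- For positive integers a and b with a*b ≡ -1 (mod 4), and any nonnegative integer n, t(a,a,2a,b;n) = 2*N(a,4a,8a,b; 8n+4a+b). -/
lemma sqmod (t : ℤ) : ∃ c, (t % 4 = 0 ∧ t^2 = 8*c) ∨ (t % 4 = 1 ∧ t^2 = 8*c+1) ∨ (t % 4 = 2 ∧ t^2 = 8*c+4) ∨ (t % 4 = 3 ∧ t^2 = 8*c+1) := by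
  obtain ⟨q, r, hr, rfl⟩ : ∃ q r, (r = 0 ∨ r = 1 ∨ r = 2 ∨ r = 3) ∧ t = 4*q+r := ⟨t/4, t%4, by omega, by omega⟩
  rcases hr with rfl|rfl|rfl|rfl
  · exact ⟨2*q^2, Or.inl ⟨by omega, by ring⟩⟩
  · exact ⟨2*q^2+q, Or.inr <| Or.inl ⟨by omega, by ring⟩⟩
  · exact ⟨2*q^2+2*q, Or.inr <| Or.inr <| Or.inl ⟨by omega, by ring⟩⟩
  · exact ⟨2*q^2+3*q+1, Or.inr <| Or.inr <| Or.inr ⟨by omega, by ring⟩⟩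

lemma key (a b n x y z w : ℤ) (ha2 : a % 2 = 1) (hb2 : b % 2 = 1) (hab4 : (a+b) % 4 = 0)
    (hT : 8*n+4*a+b = a*x^2+4*a*y^2+8*a*z^2+b*w^2) :
    x % 2 = 0 ∧ w % 2 = 1 ∧ (x+2*y) % 4 = 2 := by
  obtain ⟨cx, hx⟩ := sqmod x
  obtain ⟨cy, hy⟩ := sqmod y
  obtain ⟨cw, hw⟩ := sqmod w
  obtain ⟨K, hK⟩ : ∃ K, (x^2-8*cx)*a + 4*(y^2-8*cy)*a + (w^2-8*cw)*b - 4*a - b = 8*K :=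
    ⟨n - a*z^2 - a*cx - 4*a*cy - b*cw, by linear_combination -hT⟩
  rcases hx with ⟨h1,h2⟩|⟨h1,h2⟩|⟨h1,h2⟩|⟨h1,h2⟩ <;>
    rcases hy with ⟨h3,h4⟩|⟨h3,h4⟩|⟨h3,h4⟩|⟨h3,h4⟩ <;>
    rcases hw with ⟨h5,h6⟩|⟨h5,h6⟩|⟨h5,h6⟩|⟨h5,h6⟩ <;>
    rw [h2, h4, h6] at hK <;> ring_nf at hK <;> omega

lemma memA (a b n X Y Z W : ℤ)
    (h : 2*n = a*(X*(X-1)) + a*(Y*(Y-1)) + 2*a*(Z*(Z-1)) + b*(W*(W-1)))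
    (hp : (X+Y) % 2 = 0) :
    8*n+4*a+b = a*(X+Y+2*Z-2)^2 + 4*a*((X+Y)/2 - Z)^2 + 8*a*((X-Y)/2)^2 + b*(2*W-1)^2 := by
  obtain ⟨k, hk⟩ : ∃ k, X = 2*k - Y := ⟨(X+Y)/2, by omega⟩
  have e1 : (X+Y)/2 = k := by omega
  have e2 : (X-Y)/2 = k - Y := by omega
  rw [e1, e2]
  subst hk
  linear_combination 4*h

lemma memB (a b n X Y Z W : ℤ)
    (h : 2*n = a*(X*(X-1)) + a*(Y*(Y-1)) + 2*a*(Z*(Z-1)) + b*(W*(W-1)))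
    (hp : (X+Y) % 2 = 1) :
    8*n+4*a+b = a*(X-Y+2*Z-1)^2 + 4*a*((X-Y+1)/2 - Z)^2 + 8*a*((X+Y-1)/2)^2 + b*(2*W-1)^2 := by
  obtain ⟨k, hk⟩ : ∃ k, X = 2*k + 1 - Y := ⟨(X+Y-1)/2, by omega⟩
  have e1 : (X-Y+1)/2 = k + 1 - Y := by omega
  have e2 : (X+Y-1)/2 = k := by omega
  rw [e1, e2]
  subst hk
  linear_combination 4*h

lemma memAinv (a b n x y z w : ℤ) (ha2 : a % 2 = 1) (hb2 : b % 2 = 1) (hab4 : (a+b) % 4 = 0)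
    (hT : 8*n+4*a+b = a*x^2+4*a*y^2+8*a*z^2+b*w^2) :
    2*n = a*((x/2+y+2*z+1)/2 * ((x/2+y+2*z+1)/2 - 1))
        + a*((x/2+y-2*z+1)/2 * ((x/2+y-2*z+1)/2 - 1))
        + 2*a*((x-2*y+2)/4 * ((x-2*y+2)/4 - 1))
        + b*((w+1)/2 * ((w+1)/2 - 1)) := by
  obtain ⟨h1, h2, h3⟩ := key a b n x y z w ha2 hb2 hab4 hT
  obtain ⟨u, hu⟩ : ∃ u, x = 2*u := ⟨x/2, by omega⟩
  obtain ⟨s, hs⟩ : ∃ s, u = 2*s+1-y := ⟨(u+y-1)/2, by omega⟩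
  obtain ⟨t, ht⟩ : ∃ t, w = 2*t-1 := ⟨(w+1)/2, by omega⟩
  have e1 : (x/2+y+2*z+1)/2 = s+z+1 := by omega
  have e2 : (x/2+y-2*z+1)/2 = s-z+1 := by omega
  have e3 : (x-2*y+2)/4 = s+1-y := by omega
  have e4 : (w+1)/2 = t := by omega
  rw [e1, e2, e3, e4]
  subst hu ht hs
  have H : 4*(2*n) = 4*(a*((s+z+1)*((s+z+1)-1)) + a*((s-z+1)*((s-z+1)-1))
      + 2*a*((s+1-y)*((s+1-y)-1)) + b*(t*(t-1))) := by linear_combination hT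
  linarith

lemma memBinv (a b n x y z w : ℤ) (ha2 : a % 2 = 1) (hb2 : b % 2 = 1) (hab4 : (a+b) % 4 = 0)
    (hT : 8*n+4*a+b = a*x^2+4*a*y^2+8*a*z^2+b*w^2) :
    2*n = a*((x/2+y+2*z+1)/2 * ((x/2+y+2*z+1)/2 - 1))
        + a*((2*z+1-x/2-y)/2 * ((2*z+1-x/2-y)/2 - 1))
        + 2*a*((x-2*y+2)/4 * ((x-2*y+2)/4 - 1))
        + b*((w+1)/2 * ((w+1)/2 - 1)) := by
  obtain ⟨h1, h2, h3⟩ := key a b n x y z w ha2 hb2 hab4 hT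
  obtain ⟨u, hu⟩ : ∃ u, x = 2*u := ⟨x/2, by omega⟩
  obtain ⟨s, hs⟩ : ∃ s, u = 2*s+1-y := ⟨(u+y-1)/2, by omega⟩
  obtain ⟨t, ht⟩ : ∃ t, w = 2*t-1 := ⟨(w+1)/2, by omega⟩
  have e1 : (x/2+y+2*z+1)/2 = s+z+1 := by omega
  have e2 : (2*z+1-x/2-y)/2 = z-s := by omega
  have e3 : (x-2*y+2)/4 = s+1-y := by omega
  have e4 : (w+1)/2 = t := by omega
  rw [e1, e2, e3, e4]
  subst hu ht hs
  have H : 4*(2*n) = 4*(a*((s+z+1)*((s+z+1)-1)) + a*((z-s)*((z-s)-1))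
      + 2*a*((s+1-y)*((s+1-y)-1)) + b*(t*(t-1))) := by linear_combination hT
  linarith

theorem stmt1 (a b n : ℤ) (ha : 0 < a) (hb : 0 < b) (hab : (a * b) % 4 = 3)
    (hn : 0 ≤ n) :
    t4 a a (2*a) b n = 2 * N4 a (4*a) (8*a) b (8*n + 4*a + b) := by
  have hfacts : a % 2 = 1 ∧ b % 2 = 1 ∧ (a+b) % 4 = 0 := by
    have hmul := Int.mul_emod a b 4
    rw [hab] at hmul
    have h0 : a % 4 = 0 ∨ a % 4 = 1 ∨ a % 4 = 2 ∨ a % 4 = 3 := by omega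
    have h1 : b % 4 = 0 ∨ b % 4 = 1 ∨ b % 4 = 2 ∨ b % 4 = 3 := by omega
    rcases h0 with h0|h0|h0|h0 <;> rcases h1 with h1|h1|h1|h1 <;> rw [h0, h1] at hmul <;> omega
  obtain ⟨ha2, hb2, hab4⟩ := hfacts
  have e : {v : ℤ×ℤ×ℤ×ℤ | 2*n = a*(v.1*(v.1-1)) + a*(v.2.1*(v.2.1-1))
        + 2*a*(v.2.2.1*(v.2.2.1-1)) + b*(v.2.2.2*(v.2.2.2-1))} ≃
      {v : ℤ×ℤ×ℤ×ℤ | 8*n+4*a+b = a*v.1^2 + 4*a*v.2.1^2 + 8*a*v.2.2.1^2 + b*v.2.2.2^2} × Bool :=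
  { toFun := fun p =>
      if hp : (p.1.1 + p.1.2.1) % 2 = 0 then
        (⟨(p.1.1+p.1.2.1+2*p.1.2.2.1-2, ((p.1.1+p.1.2.1)/2 - p.1.2.2.1,
            ((p.1.1-p.1.2.1)/2, 2*p.1.2.2.2-1))), memA a b n _ _ _ _ p.2 hp⟩, false)
      else
        (⟨(p.1.1-p.1.2.1+2*p.1.2.2.1-1, ((p.1.1-p.1.2.1+1)/2 - p.1.2.2.1,
            ((p.1.1+p.1.2.1-1)/2, 2*p.1.2.2.2-1))), memB a b n _ _ _ _ p.2 (by omega)⟩, true),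
    invFun := fun q =>
      bif q.2 then
        ⟨((q.1.1.1/2+q.1.1.2.1+2*q.1.1.2.2.1+1)/2, ((2*q.1.1.2.2.1+1-q.1.1.1/2-q.1.1.2.1)/2,
            ((q.1.1.1-2*q.1.1.2.1+2)/4, (q.1.1.2.2.2+1)/2))),
          memBinv a b n _ _ _ _ ha2 hb2 hab4 q.1.2⟩
      else
        ⟨((q.1.1.1/2+q.1.1.2.1+2*q.1.1.2.2.1+1)/2, ((q.1.1.1/2+q.1.1.2.1-2*q.1.1.2.2.1+1)/2,
            ((q.1.1.1-2*q.1.1.2.1+2)/4, (q.1.1.2.2.2+1)/2))),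
          memAinv a b n _ _ _ _ ha2 hb2 hab4 q.1.2⟩,
    left_inv := by
      rintro ⟨⟨X, Y, Z, W⟩, hp⟩
      by_cases h : (X + Y) % 2 = 0
      · simp only [dif_pos h, cond_false]
        exact Subtype.ext (by simp only [Prod.mk.injEq]; refine ⟨by omega, by omega, by omega, by omega⟩)
      · simp only [dif_neg h, cond_true]
        exact Subtype.ext (by simp only [Prod.mk.injEq]; refine ⟨by omega, by omega, by omega, by omega⟩)
    right_inv := by
      rintro ⟨⟨⟨x, y, z, w⟩, hq⟩, ε⟩
      have hq' : 8*n+4*a+b = a*x^2+4*a*y^2+8*a*z^2+b*w^2 := hq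
      obtain ⟨h1, h2, h3⟩ := key a b n x y z w ha2 hb2 hab4 hq'
      cases ε
      · simp only [cond_false]
        rw [dif_pos (show ((x/2+y+2*z+1)/2 + (x/2+y-2*z+1)/2) % 2 = 0 by omega)]
        refine Prod.ext ?_ rfl
        exact Subtype.ext (by simp only [Prod.mk.injEq]; refine ⟨by omega, by omega, by omega, by omega⟩)
      · simp only [cond_true]
        rw [dif_neg (show ¬((x/2+y+2*z+1)/2 + (2*z+1-x/2-y)/2) % 2 = 0 by omega)]
        refine Prod.ext ?_ rfl
        exact Subtype.ext (by simp only [Prod.mk.injEq]; refine ⟨by omega, by omega, by omega, by omega⟩) }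
  unfold t4 N4
  rw [← Nat.card_coe_set_eq, ← Nat.card_coe_set_eq, Nat.card_congr e, Nat.card_prod]
  simp [Nat.card_eq_fintype_card, mul_comm]
end

section
/- For every nonnegative integer n, N(1,3,4,8; 8n+7) = (1/5)*N(1,1,2,3; 8n+7), i.e., 5*N(1,3,4,8;8n+7) = N(1,1,2,3;8n+7). -/
private def p2 (a : ZMod 8) : ℕ := a.val % 2

private lemma dA1 : ∀ a b c d : ZMod 8, a^2+3*b^2+4*c^2+8*d^2 = 7 → p2 a = 0 ∧ p2 b = 1 := by decide

private lemma dB : ∀ a b c d : ZMod 8, a^2+b^2+2*c^2+3*d^2 = 7 →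
    (p2 a = 1 ∧ p2 b = 1 ∧ p2 c = 1 ∧ p2 d = 1) ∨
    (p2 a = 1 ∧ p2 b = 0 ∧ p2 c = 1 ∧ p2 d = 0) ∨
    (p2 a = 0 ∧ p2 b = 1 ∧ p2 c = 1 ∧ p2 d = 0) ∨
    (p2 a = 0 ∧ p2 b = 0 ∧ p2 c = 0 ∧ p2 d = 1) := by decide

private lemma dA2 : ∀ a b c d : ZMod 8, 4*a^2+3*b^2+4*c^2+8*d^2 = 7 → p2 (a+c) = 1 := by decide
private lemma dP2 : ∀ a b c d : ZMod 8, a^2+4*b^2+2*c^2+12*d^2 = 7 → p2 (b+d) = 1 := by decide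
private lemma dP4 : ∀ a b c d : ZMod 8, 4*a^2+4*b^2+8*c^2+3*d^2 = 7 → p2 (a+b) = 1 := by decide

private lemma odd_iff_p2 (x : ℤ) : Odd x ↔ p2 (x : ZMod 8) = 1 := by
  have hv : ((ZMod.val (x : ZMod 8) : ℤ)) = x % 8 := ZMod.val_intCast x
  unfold p2; rw [Int.odd_iff]; omega

private lemma even_iff_p2 (x : ℤ) : Even x ↔ p2 (x : ZMod 8) = 0 := by
  have hv : ((ZMod.val (x : ZMod 8) : ℤ)) = x % 8 := ZMod.val_intCast x
  unfold p2; rw [Int.even_iff]; omega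

-- cast an integer equation to ZMod 8
private lemma cast8 {m : ℤ} (n : ℤ) (hm : m = 8*n+7) {e : ℤ} (he : m = e) :
    ((e : ZMod 8)) = 7 := by
  rw [← he, hm]; push_cast
  rw [show ((8:ZMod 8)) = 0 by decide]
  ring

private abbrev V4 := ℤ × ℤ × ℤ × ℤ

-- The sets
private def SA (m : ℤ) : Set V4 := {v | m = v.1^2 + 3*v.2.1^2 + 4*v.2.2.1^2 + 8*v.2.2.2^2}
private def QA (m : ℤ) : Set V4 :=
  {v | m = 4*v.1^2 + 3*v.2.1^2 + 4*v.2.2.1^2 + 8*v.2.2.2^2 ∧ Odd v.2.1 ∧ Odd (v.1 + v.2.2.1)}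
private def PP (m : ℤ) : Set V4 :=
  {v | m = 2*v.1^2 + 2*v.2.1^2 + 3*v.2.2.1^2 + 8*v.2.2.2^2 ∧ Odd v.1 ∧ Odd v.2.1 ∧ Odd v.2.2.1}
private def HH (m : ℤ) : Set V4 :=
  {v | m = v.1^2 + v.2.1^2 + 2*v.2.2.1^2 + 3*v.2.2.2^2 ∧ Odd v.1 ∧ Odd v.2.1 ∧ Odd v.2.2.1
    ∧ Odd v.2.2.2 ∧ (4 : ℤ) ∣ (v.1 - v.2.1)}
private def HH2 (m : ℤ) : Set V4 :=
  {v | m = v.1^2 + v.2.1^2 + 2*v.2.2.1^2 + 3*v.2.2.2^2 ∧ Odd v.1 ∧ Odd v.2.1 ∧ Odd v.2.2.1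
    ∧ Odd v.2.2.2 ∧ ¬ (4 : ℤ) ∣ (v.1 - v.2.1)}
private def KK (m : ℤ) : Set V4 :=
  {v | m = v.1^2 + v.2.1^2 + 2*v.2.2.1^2 + 3*v.2.2.2^2 ∧ Odd v.1 ∧ Odd v.2.1 ∧ Odd v.2.2.1
    ∧ Odd v.2.2.2 ∧ (4 : ℤ) ∣ (v.2.1 - v.2.2.2)}
private def KK2 (m : ℤ) : Set V4 :=
  {v | m = v.1^2 + v.2.1^2 + 2*v.2.2.1^2 + 3*v.2.2.2^2 ∧ Odd v.1 ∧ Odd v.2.1 ∧ Odd v.2.2.1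
    ∧ Odd v.2.2.2 ∧ ¬ (4 : ℤ) ∣ (v.2.1 - v.2.2.2)}
private def SB (m : ℤ) : Set V4 := {v | m = v.1^2 + v.2.1^2 + 2*v.2.2.1^2 + 3*v.2.2.2^2}
private def B1 (m : ℤ) : Set V4 :=
  {v ∈ SB m | Odd v.1 ∧ Odd v.2.1 ∧ Odd v.2.2.1 ∧ Odd v.2.2.2}
private def B2 (m : ℤ) : Set V4 :=
  {v ∈ SB m | Odd v.1 ∧ Even v.2.1 ∧ Odd v.2.2.1 ∧ Even v.2.2.2}
private def B3 (m : ℤ) : Set V4 :=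
  {v ∈ SB m | Even v.1 ∧ Odd v.2.1 ∧ Odd v.2.2.1 ∧ Even v.2.2.2}
private def B4 (m : ℤ) : Set V4 :=
  {v ∈ SB m | Even v.1 ∧ Even v.2.1 ∧ Even v.2.2.1 ∧ Odd v.2.2.2}
private def Q2 (m : ℤ) : Set V4 :=
  {v | m = v.1^2 + 4*v.2.1^2 + 2*v.2.2.1^2 + 12*v.2.2.2^2 ∧ Odd v.1 ∧ Odd v.2.2.1
    ∧ Odd (v.2.1 + v.2.2.2)}
private def Q4 (m : ℤ) : Set V4 :=
  {v | m = 4*v.1^2 + 4*v.2.1^2 + 8*v.2.2.1^2 + 3*v.2.2.2^2 ∧ Odd v.2.2.2 ∧ Odd (v.1 + v.2.1)}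

-- ===== A-side chain =====

private lemma SA_eq (n m : ℤ) (hm : m = 8*n+7) :
    SA m = (fun v : V4 => (2*v.1, v.2.1, v.2.2.1, v.2.2.2)) '' QA m := by
  ext ⟨x, y, z, w⟩
  simp only [SA, QA, Set.mem_image, Set.mem_setOf_eq, Prod.exists, Prod.mk.injEq]
  constructor
  · intro hv
    have h8 : ((x:ZMod 8))^2 + 3*((y:ZMod 8))^2 + 4*((z:ZMod 8))^2 + 8*((w:ZMod 8))^2 = 7 := by
      have := cast8 n hm hv; push_cast at this; linear_combination this
    obtain ⟨hxe, hyo⟩ := dA1 _ _ _ _ h8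
    rw [← even_iff_p2] at hxe
    rw [← odd_iff_p2] at hyo
    obtain ⟨c, hc⟩ := hxe
    have hceq : x = 2*c := by omega
    have hv2 : m = 4*c^2 + 3*y^2 + 4*z^2 + 8*w^2 := by rw [hv, hceq]; ring
    have h8' : 4*((c:ZMod 8))^2 + 3*((y:ZMod 8))^2 + 4*((z:ZMod 8))^2 + 8*((w:ZMod 8))^2 = 7 := by
      have := cast8 n hm hv2; push_cast at this; linear_combination this
    have hcz := dA2 _ _ _ _ h8'
    rw [show ((c:ZMod 8)) + ((z:ZMod 8)) = ((c + z : ℤ) : ZMod 8) by push_cast; ring,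
      ← odd_iff_p2] at hcz
    exact ⟨c, y, z, w, ⟨hv2, hyo, hcz⟩, by omega, rfl, rfl, rfl⟩
  · rintro ⟨c, y', z', w', ⟨hv2, _, _⟩, hx, hy, hz, hw⟩
    subst hx hy hz hw
    rw [hv2]; ring

private lemma PP_eq (m : ℤ) :
    PP m = (fun v : V4 => (v.1 + v.2.2.1, v.1 - v.2.2.1, v.2.1, v.2.2.2)) '' QA m := by
  ext ⟨p, q, y, w⟩
  simp only [PP, QA, Set.mem_image, Set.mem_setOf_eq, Prod.exists, Prod.mk.injEq]
  constructor
  · rintro ⟨hv, hp, hq, hy⟩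
    rw [Int.odd_iff] at hp hq
    obtain ⟨c, z, rfl, rfl⟩ : ∃ c z, p = c + z ∧ q = c - z :=
      ⟨(p+q)/2, (p-q)/2, by omega, by omega⟩
    exact ⟨c, y, z, w, ⟨by rw [hv]; ring, hy, by rw [Int.odd_iff]; omega⟩, rfl, rfl, rfl, rfl⟩
  · rintro ⟨c, y', z', w', ⟨hv2, hy, hcz⟩, hp, hq, hy2, hw⟩
    subst hp hq hy2 hw
    rw [Int.odd_iff] at hy hcz
    refine ⟨by rw [hv2]; ring, by rw [Int.odd_iff]; omega, by rw [Int.odd_iff]; omega,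
      by rw [Int.odd_iff]; omega⟩

private lemma HH_eq (m : ℤ) :
    HH m = (fun v : V4 => (v.1 + 2*v.2.2.2, v.1 - 2*v.2.2.2, v.2.1, v.2.2.1)) '' PP m := by
  ext ⟨r, s, q, y⟩
  simp only [HH, PP, Set.mem_image, Set.mem_setOf_eq, Prod.exists, Prod.mk.injEq]
  constructor
  · rintro ⟨hv, hr, hs, hq, hy, hd⟩
    obtain ⟨k, hk⟩ := hd
    rw [Int.odd_iff] at hr hs hq hy
    obtain ⟨p, w, rfl, rfl⟩ : ∃ p w, r = p + 2*w ∧ s = p - 2*w :=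
      ⟨(r+s)/2, (r-s)/4, by omega, by omega⟩
    refine ⟨p, q, y, w, ⟨by rw [hv]; ring, by rw [Int.odd_iff]; omega,
      by rw [Int.odd_iff]; omega, by rw [Int.odd_iff]; omega⟩, rfl, rfl, rfl, rfl⟩
  · rintro ⟨p, q', y', w, ⟨hv2, hp, hq, hy⟩, hr, hs, hq2, hy2⟩
    subst hr hs hq2 hy2
    rw [Int.odd_iff] at hp hq hy
    refine ⟨by rw [hv2]; ring, by rw [Int.odd_iff]; omega, by rw [Int.odd_iff]; omega,
      by rw [Int.odd_iff]; omega, by rw [Int.odd_iff]; omega, ⟨w, by ring⟩⟩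

-- ===== injectivity helpers =====

private lemma inj_scale : Function.Injective (fun v : V4 => (2*v.1, v.2.1, v.2.2.1, v.2.2.2)) := by
  rintro ⟨a1,a2,a3,a4⟩ ⟨b1,b2,b3,b4⟩ h
  simp only [Prod.mk.injEq] at h ⊢
  omega

private lemma inj_pq : Function.Injective
    (fun v : V4 => (v.1 + v.2.2.1, v.1 - v.2.2.1, v.2.1, v.2.2.2)) := by
  rintro ⟨a1,a2,a3,a4⟩ ⟨b1,b2,b3,b4⟩ h
  simp only [Prod.mk.injEq] at h ⊢
  omega

private lemma inj_rs : Function.Injective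
    (fun v : V4 => (v.1 + 2*v.2.2.2, v.1 - 2*v.2.2.2, v.2.1, v.2.2.1)) := by
  rintro ⟨a1,a2,a3,a4⟩ ⟨b1,b2,b3,b4⟩ h
  simp only [Prod.mk.injEq] at h ⊢
  omega

private lemma ncardSA (n m : ℤ) (hm : m = 8*n+7) : (SA m).ncard = (HH m).ncard := by
  rw [SA_eq n m hm, Set.ncard_image_of_injective _ inj_scale,
    ← Set.ncard_image_of_injective (QA m) inj_pq, ← PP_eq,
    HH_eq, Set.ncard_image_of_injective _ inj_rs]

-- ===== finiteness =====

private lemma bnd {x m : ℤ} (h : x^2 ≤ m) : -m ≤ x ∧ x ≤ m := by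
  have h1 : x ≤ x^2 := Int.le_self_sq x
  have h2 : -x ≤ x^2 := by
    have := Int.le_self_sq (-x)
    simpa using this
  omega

private lemma finSB (m : ℤ) : (SB m).Finite := by
  have hsub : SB m ⊆ (Set.Icc (-m) m) ×ˢ ((Set.Icc (-m) m) ×ˢ
      ((Set.Icc (-m) m) ×ˢ (Set.Icc (-m) m))) := by
    rintro ⟨x, y, z, w⟩ hv
    simp only [SB, Set.mem_setOf_eq] at hv
    have hx := bnd (show x^2 ≤ m by nlinarith [sq_nonneg y, sq_nonneg z, sq_nonneg w])
    have hy := bnd (show y^2 ≤ m by nlinarith [sq_nonneg x, sq_nonneg z, sq_nonneg w])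
    have hz := bnd (show z^2 ≤ m by nlinarith [sq_nonneg x, sq_nonneg y, sq_nonneg w])
    have hw := bnd (show w^2 ≤ m by nlinarith [sq_nonneg x, sq_nonneg y, sq_nonneg z])
    simp only [Set.mem_prod, Set.mem_Icc]
    exact ⟨hx, hy, hz, hw⟩
  exact Set.Finite.subset ((Set.finite_Icc _ _).prod ((Set.finite_Icc _ _).prod
    ((Set.finite_Icc _ _).prod (Set.finite_Icc _ _)))) hsub

-- ===== partition of SB =====

private lemma SB_partition (n m : ℤ) (hm : m = 8*n+7) :
    SB m = B1 m ∪ B2 m ∪ B3 m ∪ B4 m := by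
  ext ⟨x, y, z, w⟩
  simp only [SB, B1, B2, B3, B4, Set.mem_union, Set.mem_setOf_eq, Set.mem_sep_iff]
  constructor
  · intro hv
    have h8 : ((x:ZMod 8))^2 + ((y:ZMod 8))^2 + 2*((z:ZMod 8))^2 + 3*((w:ZMod 8))^2 = 7 := by
      have := cast8 n hm hv; push_cast at this; linear_combination this
    rcases dB _ _ _ _ h8 with ⟨h1,h2,h3,h4⟩|⟨h1,h2,h3,h4⟩|⟨h1,h2,h3,h4⟩|⟨h1,h2,h3,h4⟩
    · exact Or.inl (Or.inl (Or.inl ⟨hv, (odd_iff_p2 x).2 h1, (odd_iff_p2 y).2 h2,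
        (odd_iff_p2 z).2 h3, (odd_iff_p2 w).2 h4⟩))
    · exact Or.inl (Or.inl (Or.inr ⟨hv, (odd_iff_p2 x).2 h1, (even_iff_p2 y).2 h2,
        (odd_iff_p2 z).2 h3, (even_iff_p2 w).2 h4⟩))
    · exact Or.inl (Or.inr ⟨hv, (even_iff_p2 x).2 h1, (odd_iff_p2 y).2 h2,
        (odd_iff_p2 z).2 h3, (even_iff_p2 w).2 h4⟩)
    · exact Or.inr ⟨hv, (even_iff_p2 x).2 h1, (even_iff_p2 y).2 h2,
        (even_iff_p2 z).2 h3, (odd_iff_p2 w).2 h4⟩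
  · rintro (((⟨hv,_⟩|⟨hv,_⟩)|⟨hv,_⟩)|⟨hv,_⟩) <;> exact hv

-- ===== B1 as two halves, twice =====

private lemma B1_eq_H (m : ℤ) : B1 m = HH m ∪ HH2 m := by
  ext ⟨x, y, z, w⟩
  simp only [B1, SB, HH, HH2, Set.mem_union, Set.mem_sep_iff, Set.mem_setOf_eq]
  constructor
  · rintro ⟨hv, h1, h2, h3, h4⟩
    rcases em ((4:ℤ) ∣ x - y) with hd | hd
    · exact Or.inl ⟨hv, h1, h2, h3, h4, hd⟩
    · exact Or.inr ⟨hv, h1, h2, h3, h4, hd⟩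
  · rintro (⟨hv, h1, h2, h3, h4, _⟩|⟨hv, h1, h2, h3, h4, _⟩) <;> exact ⟨hv, h1, h2, h3, h4⟩

private lemma B1_eq_K (m : ℤ) : B1 m = KK m ∪ KK2 m := by
  ext ⟨x, y, z, w⟩
  simp only [B1, SB, KK, KK2, Set.mem_union, Set.mem_sep_iff, Set.mem_setOf_eq]
  constructor
  · rintro ⟨hv, h1, h2, h3, h4⟩
    rcases em ((4:ℤ) ∣ y - w) with hd | hd
    · exact Or.inl ⟨hv, h1, h2, h3, h4, hd⟩
    · exact Or.inr ⟨hv, h1, h2, h3, h4, hd⟩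
  · rintro (⟨hv, h1, h2, h3, h4, _⟩|⟨hv, h1, h2, h3, h4, _⟩) <;> exact ⟨hv, h1, h2, h3, h4⟩

private lemma HH2_eq (m : ℤ) :
    HH2 m = (fun v : V4 => (v.1, -v.2.1, v.2.2.1, v.2.2.2)) '' HH m := by
  ext ⟨x, y, z, w⟩
  simp only [HH, HH2, Set.mem_image, Set.mem_setOf_eq, Prod.exists, Prod.mk.injEq]
  constructor
  · rintro ⟨hv, h1, h2, h3, h4, hd⟩
    rw [Int.odd_iff] at h1 h2
    refine ⟨x, -y, z, w, ⟨by rw [hv]; ring, by rw [Int.odd_iff]; omega,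
      by rw [Int.odd_iff]; omega, h3, h4, ?_⟩, rfl, by ring, rfl, rfl⟩
    omega
  · rintro ⟨a, b, c, d, ⟨hv, h1, h2, h3, h4, hd⟩, ha, hb, hc, hdd⟩
    subst ha hc hdd
    rw [Int.odd_iff] at h1 h2
    refine ⟨by rw [hv, ← hb]; ring, by rw [Int.odd_iff]; omega,
      by rw [Int.odd_iff]; omega, h3, h4, by omega⟩

private lemma KK2_eq (m : ℤ) :
    KK2 m = (fun v : V4 => (v.1, v.2.1, v.2.2.1, -v.2.2.2)) '' KK m := by
  ext ⟨x, y, z, w⟩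
  simp only [KK, KK2, Set.mem_image, Set.mem_setOf_eq, Prod.exists, Prod.mk.injEq]
  constructor
  · rintro ⟨hv, h1, h2, h3, h4, hd⟩
    rw [Int.odd_iff] at h2 h4
    refine ⟨x, y, z, -w, ⟨by rw [hv]; ring, h1, by rw [Int.odd_iff]; omega, h3,
      by rw [Int.odd_iff]; omega, ?_⟩, rfl, rfl, rfl, by ring⟩
    omega
  · rintro ⟨a, b, c, d, ⟨hv, h1, h2, h3, h4, hd⟩, ha, hb, hc, hdd⟩
    subst ha hb hc
    rw [Int.odd_iff] at h2 h4
    refine ⟨by rw [hv, ← hdd]; ring, h1, by rw [Int.odd_iff]; omega, h3,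
      by rw [Int.odd_iff]; omega, by omega⟩

-- ===== B2 chain =====

private lemma B2_eq (n m : ℤ) (hm : m = 8*n+7) :
    B2 m = (fun v : V4 => (v.1, 2*v.2.1, v.2.2.1, 2*v.2.2.2)) '' Q2 m := by
  ext ⟨x, y, z, w⟩
  simp only [B2, SB, Q2, Set.mem_image, Set.mem_sep_iff, Set.mem_setOf_eq, Prod.exists,
    Prod.mk.injEq]
  constructor
  · rintro ⟨hv, h1, h2, h3, h4⟩
    obtain ⟨b, hb⟩ := h2
    obtain ⟨c, hc⟩ := h4
    have hy : y = 2*b := by omega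
    have hw : w = 2*c := by omega
    have hv2 : m = x^2 + 4*b^2 + 2*z^2 + 12*c^2 := by rw [hv, hy, hw]; ring
    have h8 : ((x:ZMod 8))^2 + 4*((b:ZMod 8))^2 + 2*((z:ZMod 8))^2 + 12*((c:ZMod 8))^2 = 7 := by
      have := cast8 n hm hv2; push_cast at this; linear_combination this
    have hbc := dP2 _ _ _ _ h8
    rw [show ((b:ZMod 8)) + ((c:ZMod 8)) = ((b + c : ℤ) : ZMod 8) by push_cast; ring,
      ← odd_iff_p2] at hbc
    exact ⟨x, b, z, c, ⟨hv2, h1, h3, hbc⟩, rfl, by omega, rfl, by omega⟩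
  · rintro ⟨a, b, c, d, ⟨hv2, h1, h3, hbc⟩, ha, hb, hc, hdd⟩
    subst ha hb hc hdd
    exact ⟨by rw [hv2]; ring, h1, ⟨b, by ring⟩, h3, ⟨d, by ring⟩⟩

private lemma KK_eq_Q2 (m : ℤ) :
    KK m = (fun v : V4 => (v.1, v.2.1 + 3*v.2.2.2, v.2.2.1, v.2.1 - v.2.2.2)) '' Q2 m := by
  ext ⟨x, u, z, t⟩
  simp only [KK, Q2, Set.mem_image, Set.mem_setOf_eq, Prod.exists, Prod.mk.injEq]
  constructor
  · rintro ⟨hv, h1, h2, h3, h4, hd⟩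
    obtain ⟨k, hk⟩ := hd
    rw [Int.odd_iff] at h2 h4
    obtain ⟨b, c, rfl, rfl⟩ : ∃ b c, u = b + 3*c ∧ t = b - c :=
      ⟨(u+3*t)/4, k, by omega, by omega⟩
    exact ⟨x, b, z, c, ⟨by rw [hv]; ring, h1, h3, by rw [Int.odd_iff]; omega⟩,
      rfl, rfl, rfl, rfl⟩
  · rintro ⟨a, b, c, d, ⟨hv2, h1, h3, hbc⟩, ha, hb, hc, hdd⟩
    subst ha hb hc hdd
    rw [Int.odd_iff] at hbc
    refine ⟨by rw [hv2]; ring, h1, by rw [Int.odd_iff]; omega, h3,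
      by rw [Int.odd_iff]; omega, ⟨d, by ring⟩⟩

-- ===== B3 = swap of B2 =====

private lemma B3_eq (m : ℤ) :
    B3 m = (fun v : V4 => (v.2.1, v.1, v.2.2.1, v.2.2.2)) '' B2 m := by
  ext ⟨x, y, z, w⟩
  simp only [B2, B3, SB, Set.mem_image, Set.mem_sep_iff, Set.mem_setOf_eq, Prod.exists,
    Prod.mk.injEq]
  constructor
  · rintro ⟨hv, h1, h2, h3, h4⟩
    exact ⟨y, x, z, w, ⟨by rw [hv]; ring, h2, h1, h3, h4⟩, rfl, rfl, rfl, rfl⟩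
  · rintro ⟨a, b, c, d, ⟨hv, h1, h2, h3, h4⟩, ha, hb, hc, hdd⟩
    subst ha hb hc hdd
    exact ⟨by rw [hv]; ring, h2, h1, h3, h4⟩

-- ===== B4 chain =====

private lemma B4_eq (n m : ℤ) (hm : m = 8*n+7) :
    B4 m = (fun v : V4 => (2*v.1, 2*v.2.1, 2*v.2.2.1, v.2.2.2)) '' Q4 m := by
  ext ⟨x, y, z, w⟩
  simp only [B4, SB, Q4, Set.mem_image, Set.mem_sep_iff, Set.mem_setOf_eq, Prod.exists,
    Prod.mk.injEq]
  constructor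
  · rintro ⟨hv, h1, h2, h3, h4⟩
    obtain ⟨a, ha⟩ := h1
    obtain ⟨b, hb⟩ := h2
    obtain ⟨e, he⟩ := h3
    have hx : x = 2*a := by omega
    have hy : y = 2*b := by omega
    have hz : z = 2*e := by omega
    have hv2 : m = 4*a^2 + 4*b^2 + 8*e^2 + 3*w^2 := by rw [hv, hx, hy, hz]; ring
    have h8 : 4*((a:ZMod 8))^2 + 4*((b:ZMod 8))^2 + 8*((e:ZMod 8))^2 + 3*((w:ZMod 8))^2 = 7 := by
      have := cast8 n hm hv2; push_cast at this; linear_combination this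
    have hab := dP4 _ _ _ _ h8
    rw [show ((a:ZMod 8)) + ((b:ZMod 8)) = ((a + b : ℤ) : ZMod 8) by push_cast; ring,
      ← odd_iff_p2] at hab
    exact ⟨a, b, e, w, ⟨hv2, h4, hab⟩, by omega, by omega, by omega, rfl⟩
  · rintro ⟨a, b, c, d, ⟨hv2, h4, hab⟩, ha, hb, hc, hdd⟩
    subst ha hb hc hdd
    exact ⟨by rw [hv2]; ring, ⟨a, by ring⟩, ⟨b, by ring⟩, ⟨c, by ring⟩, h4⟩

private lemma PP_eq_Q4 (m : ℤ) :
    PP m = (fun v : V4 => (v.1 + v.2.1, v.1 - v.2.1, v.2.2.2, v.2.2.1)) '' Q4 m := by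
  ext ⟨p, q, y, w⟩
  simp only [PP, Q4, Set.mem_image, Set.mem_setOf_eq, Prod.exists, Prod.mk.injEq]
  constructor
  · rintro ⟨hv, hp, hq, hy⟩
    rw [Int.odd_iff] at hp hq
    obtain ⟨a, b, rfl, rfl⟩ : ∃ a b, p = a + b ∧ q = a - b :=
      ⟨(p+q)/2, (p-q)/2, by omega, by omega⟩
    exact ⟨a, b, w, y, ⟨by rw [hv]; ring, hy, by rw [Int.odd_iff]; omega⟩, rfl, rfl, rfl, rfl⟩
  · rintro ⟨a, b, c, d, ⟨hv2, hd, hab⟩, ha, hb, hc, hdd⟩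
    subst ha hb hc hdd
    rw [Int.odd_iff] at hab
    refine ⟨by rw [hv2]; ring, by rw [Int.odd_iff]; omega, by rw [Int.odd_iff]; omega, hd⟩

-- ===== more injectivity lemmas =====

private lemma inj_negy : Function.Injective (fun v : V4 => (v.1, -v.2.1, v.2.2.1, v.2.2.2)) := by
  rintro ⟨a1,a2,a3,a4⟩ ⟨b1,b2,b3,b4⟩ h
  simp only [Prod.mk.injEq] at h ⊢; omega

private lemma inj_negw : Function.Injective (fun v : V4 => (v.1, v.2.1, v.2.2.1, -v.2.2.2)) := by
  rintro ⟨a1,a2,a3,a4⟩ ⟨b1,b2,b3,b4⟩ h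
  simp only [Prod.mk.injEq] at h ⊢; omega

private lemma inj_dbl2 : Function.Injective (fun v : V4 => (v.1, 2*v.2.1, v.2.2.1, 2*v.2.2.2)) := by
  rintro ⟨a1,a2,a3,a4⟩ ⟨b1,b2,b3,b4⟩ h
  simp only [Prod.mk.injEq] at h ⊢; omega

private lemma inj_u3 : Function.Injective
    (fun v : V4 => (v.1, v.2.1 + 3*v.2.2.2, v.2.2.1, v.2.1 - v.2.2.2)) := by
  rintro ⟨a1,a2,a3,a4⟩ ⟨b1,b2,b3,b4⟩ h
  simp only [Prod.mk.injEq] at h ⊢; omega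

private lemma inj_swap : Function.Injective (fun v : V4 => (v.2.1, v.1, v.2.2.1, v.2.2.2)) := by
  rintro ⟨a1,a2,a3,a4⟩ ⟨b1,b2,b3,b4⟩ h
  simp only [Prod.mk.injEq] at h ⊢; omega

private lemma inj_dbl3 : Function.Injective
    (fun v : V4 => (2*v.1, 2*v.2.1, 2*v.2.2.1, v.2.2.2)) := by
  rintro ⟨a1,a2,a3,a4⟩ ⟨b1,b2,b3,b4⟩ h
  simp only [Prod.mk.injEq] at h ⊢; omega

private lemma inj_pq2 : Function.Injective
    (fun v : V4 => (v.1 + v.2.1, v.1 - v.2.1, v.2.2.2, v.2.2.1)) := by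
  rintro ⟨a1,a2,a3,a4⟩ ⟨b1,b2,b3,b4⟩ h
  simp only [Prod.mk.injEq] at h ⊢; omega

-- ===== counting =====

private lemma subset_SB_HH (m : ℤ) : HH m ⊆ SB m := fun v hv => hv.1
private lemma subset_SB_HH2 (m : ℤ) : HH2 m ⊆ SB m := fun v hv => hv.1
private lemma subset_SB_KK (m : ℤ) : KK m ⊆ SB m := fun v hv => hv.1
private lemma subset_SB_KK2 (m : ℤ) : KK2 m ⊆ SB m := fun v hv => hv.1
private lemma subset_SB_B1 (m : ℤ) : B1 m ⊆ SB m := fun v hv => hv.1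
private lemma subset_SB_B2 (m : ℤ) : B2 m ⊆ SB m := fun v hv => hv.1
private lemma subset_SB_B3 (m : ℤ) : B3 m ⊆ SB m := fun v hv => hv.1
private lemma subset_SB_B4 (m : ℤ) : B4 m ⊆ SB m := fun v hv => hv.1

private lemma ncardB1_H (m : ℤ) : (B1 m).ncard = 2 * (HH m).ncard := by
  have hdis : Disjoint (HH m) (HH2 m) := by
    rw [Set.disjoint_left]
    rintro v ⟨_, _, _, _, _, hd⟩ ⟨_, _, _, _, _, hd2⟩
    exact hd2 hd
  rw [B1_eq_H, Set.ncard_union_eq hdis ((finSB m).subset (subset_SB_HH m))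
    ((finSB m).subset (subset_SB_HH2 m)), HH2_eq,
    Set.ncard_image_of_injective _ inj_negy]
  ring

private lemma ncardB1_K (m : ℤ) : (B1 m).ncard = 2 * (KK m).ncard := by
  have hdis : Disjoint (KK m) (KK2 m) := by
    rw [Set.disjoint_left]
    rintro v ⟨_, _, _, _, _, hd⟩ ⟨_, _, _, _, _, hd2⟩
    exact hd2 hd
  rw [B1_eq_K, Set.ncard_union_eq hdis ((finSB m).subset (subset_SB_KK m))
    ((finSB m).subset (subset_SB_KK2 m)), KK2_eq,
    Set.ncard_image_of_injective _ inj_negw]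
  ring

private lemma ncardKK (m : ℤ) : (KK m).ncard = (HH m).ncard := by
  have h1 := ncardB1_H m
  have h2 := ncardB1_K m
  omega

private lemma ncardB2 (n m : ℤ) (hm : m = 8*n+7) : (B2 m).ncard = (HH m).ncard := by
  rw [B2_eq n m hm, Set.ncard_image_of_injective _ inj_dbl2,
    ← Set.ncard_image_of_injective (Q2 m) inj_u3, ← KK_eq_Q2, ncardKK]

private lemma ncardB3 (n m : ℤ) (hm : m = 8*n+7) : (B3 m).ncard = (HH m).ncard := by
  rw [B3_eq, Set.ncard_image_of_injective _ inj_swap, ncardB2 n m hm]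

private lemma ncardB4 (n m : ℤ) (hm : m = 8*n+7) : (B4 m).ncard = (HH m).ncard := by
  rw [B4_eq n m hm, Set.ncard_image_of_injective _ inj_dbl3,
    ← Set.ncard_image_of_injective (Q4 m) inj_pq2, ← PP_eq_Q4,
    ← Set.ncard_image_of_injective (PP m) inj_rs, ← HH_eq]

private lemma oddeven (a : ℤ) (h1 : Odd a) (h2 : Even a) : False :=
  (Int.not_odd_iff_even.mpr h2) h1

private lemma ncardSB (n m : ℤ) (hm : m = 8*n+7) : (SB m).ncard = 5 * (HH m).ncard := by
  have fin1 := (finSB m).subset (subset_SB_B1 m)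
  have fin2 := (finSB m).subset (subset_SB_B2 m)
  have fin3 := (finSB m).subset (subset_SB_B3 m)
  have fin4 := (finSB m).subset (subset_SB_B4 m)
  have d12 : Disjoint (B1 m) (B2 m) := by
    rw [Set.disjoint_left]
    rintro v ⟨_, _, h1, _, _⟩ ⟨_, _, h2, _, _⟩
    exact oddeven _ h1 h2
  have d13 : Disjoint (B1 m) (B3 m) := by
    rw [Set.disjoint_left]
    rintro v ⟨_, h1, _, _, _⟩ ⟨_, h2, _, _, _⟩
    exact oddeven _ h1 h2
  have d23 : Disjoint (B2 m) (B3 m) := by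
    rw [Set.disjoint_left]
    rintro v ⟨_, h1, _, _, _⟩ ⟨_, h2, _, _, _⟩
    exact oddeven _ h1 h2
  have d14 : Disjoint (B1 m) (B4 m) := by
    rw [Set.disjoint_left]
    rintro v ⟨_, h1, _, _, _⟩ ⟨_, h2, _, _, _⟩
    exact oddeven _ h1 h2
  have d24 : Disjoint (B2 m) (B4 m) := by
    rw [Set.disjoint_left]
    rintro v ⟨_, h1, _, _, _⟩ ⟨_, h2, _, _, _⟩
    exact oddeven _ h1 h2
  have d34 : Disjoint (B3 m) (B4 m) := by
    rw [Set.disjoint_left]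
    rintro v ⟨_, _, h1, _, _⟩ ⟨_, _, h2, _, _⟩
    exact oddeven _ h1 h2
  rw [SB_partition n m hm]
  rw [Set.ncard_union_eq (by
      simp only [Set.disjoint_union_left]
      exact ⟨⟨d14, d24⟩, d34⟩) ((fin1.union fin2).union fin3) fin4]
  rw [Set.ncard_union_eq (by
      simp only [Set.disjoint_union_left]
      exact ⟨d13, d23⟩) (fin1.union fin2) fin3]
  rw [Set.ncard_union_eq d12 fin1 fin2]
  rw [ncardB1_H m, ncardB2 n m hm, ncardB3 n m hm, ncardB4 n m hm]
  ring

theorem stmt2 (n : ℤ) (hn : 0 ≤ n) :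
    5 * N4 1 3 4 8 (8*n + 7) = N4 1 1 2 3 (8*n + 7) := by
  have hSA : N4 1 3 4 8 (8*n+7) = (SA (8*n+7)).ncard := by
    unfold N4 SA
    congr 1
    ext v
    simp only [Set.mem_setOf_eq]
    constructor <;> intro h <;> linarith
  have hSB : N4 1 1 2 3 (8*n+7) = (SB (8*n+7)).ncard := by
    unfold N4 SB
    congr 1
    ext v
    simp only [Set.mem_setOf_eq]
    constructor <;> intro h <;> linarith
  rw [hSA, hSB, ncardSA n (8*n+7) rfl, ncardSB n (8*n+7) rfl]
end

section
/- For positive odd integers a and b, and any nonnegative integer n, t(a,3a,3a,2b;n) = N(3a,3a,4a,2b; 8n+7a+2b). -/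
/-- Forward map from triangular-number representations to square representations. -/
def F4s (x : ℤ × ℤ × ℤ × ℤ) : ℤ × ℤ × ℤ × ℤ :=
  if (2*x.2.1 - 1 + (2*x.2.2.1 - 1)) % 4 = 0 then
    if (2*x.1 - 2*x.2.1) % 4 = 0 then
      (2*x.2.2.1 - 1, x.1 - x.2.1, (2*x.1 + 6*x.2.1 - 4)/4, 2*x.2.2.2 - 1)
    else
      (2*x.2.2.1 - 1, x.1 + x.2.1 - 1, (2*x.1 - 6*x.2.1 + 2)/4, 2*x.2.2.2 - 1)
  else
    if (2*x.1 - 2*x.2.2.1) % 4 = 0 then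
      (x.1 - x.2.2.1, 2*x.2.1 - 1, (2*x.1 + 6*x.2.2.1 - 4)/4, 2*x.2.2.2 - 1)
    else
      (x.1 + x.2.2.1 - 1, 2*x.2.1 - 1, (2*x.1 - 6*x.2.2.1 + 2)/4, 2*x.2.2.2 - 1)

/-- Inverse map. -/
def G4s (y : ℤ × ℤ × ℤ × ℤ) : ℤ × ℤ × ℤ × ℤ :=
  if y.1 % 2 = 1 then
    ((3*y.2.1 + 2*y.2.2.1 + 2)/4,
     if (y.2.2.1 - y.2.1/2 + y.1) % 4 = 0 then (y.2.2.1 - y.2.1/2 + 1)/2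
       else (y.2.1/2 - y.2.2.1 + 1)/2,
     (y.1+1)/2, (y.2.2.2+1)/2)
  else
    ((3*y.1 + 2*y.2.2.1 + 2)/4,
     (y.2.1+1)/2,
     if (y.2.2.1 - y.1/2 + y.2.1) % 4 = 0 then (y.1/2 - y.2.2.1 + 1)/2
       else (y.2.2.1 - y.1/2 + 1)/2,
     (y.2.2.2+1)/2)

lemma sq_split8 (X : ℤ) : ∃ k, X^2 = 8*k + (X%4)*(X%4) := by
  have hX : X = 4*(X/4) + X%4 := by omega
  exact ⟨2*(X/4)^2+(X/4)*(X%4), by linear_combination (X + 4*(X/4) + X%4) * hX⟩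

set_option maxHeartbeats 2000000 in
lemma keyPar (a b n X Y Z W : ℤ) (ha : a % 2 = 1) (hb : b % 2 = 1)
    (h : 8*n+7*a+2*b = 3*a*X^2 + 3*a*Y^2 + 4*a*Z^2 + 2*b*W^2) :
    W % 2 = 1 ∧ X % 2 + Y % 2 = 1 ∧ (X % 2 = 1 → (Y/2 + Z) % 2 = 1) ∧
      (Y % 2 = 1 → (X/2 + Z) % 2 = 1) := by
  obtain ⟨kX, hkX⟩ := sq_split8 X
  obtain ⟨kY, hkY⟩ := sq_split8 Y
  obtain ⟨kZ, hkZ⟩ := sq_split8 Z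
  obtain ⟨kW, hkW⟩ := sq_split8 W
  have H : 8*n+7*a+2*b = 24*(a*kX) + 24*(a*kY) + 32*(a*kZ) + 16*(b*kW)
      + 3*((X%4)*(X%4))*a + 3*((Y%4)*(Y%4))*a + 4*((Z%4)*(Z%4))*a
      + 2*((W%4)*(W%4))*b := by
    linear_combination h + 3*a*hkX + 3*a*hkY + 4*a*hkZ + 2*b*hkW
  have hx : X%4 = 0 ∨ X%4 = 1 ∨ X%4 = 2 ∨ X%4 = 3 := by omega
  have hy : Y%4 = 0 ∨ Y%4 = 1 ∨ Y%4 = 2 ∨ Y%4 = 3 := by omega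
  have hz : Z%4 = 0 ∨ Z%4 = 1 ∨ Z%4 = 2 ∨ Z%4 = 3 := by omega
  have hw : W%4 = 0 ∨ W%4 = 1 ∨ W%4 = 2 ∨ W%4 = 3 := by omega
  clear hkX hkY hkZ hkW h
  rcases hx with hx | hx | hx | hx <;> rcases hy with hy|hy|hy|hy <;>
    rcases hz with hz|hz|hz|hz <;> rcases hw with hw|hw|hw|hw <;>
    (rw [hx, hy, hz, hw] at H) <;> omega

lemma GF4 (x : ℤ × ℤ × ℤ × ℤ) : G4s (F4s x) = x := by
  obtain ⟨p, q, r, t⟩ := x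
  simp only [F4s]
  split_ifs with h1 h2 h2 <;>
    (simp only [G4s]; split_ifs <;> (simp only [Prod.mk.injEq]; omega))

lemma mapsF4 (a b n p q r t : ℤ)
    (h : 2*n = a*(p*(p-1)) + 3*a*(q*(q-1)) + 3*a*(r*(r-1)) + 2*b*(t*(t-1))) :
    8*n+7*a+2*b = 3*a*(F4s (p,q,r,t)).1^2 + 3*a*(F4s (p,q,r,t)).2.1^2
      + 4*a*(F4s (p,q,r,t)).2.2.1^2 + 2*b*(F4s (p,q,r,t)).2.2.2^2 := by
  simp only [F4s]
  split_ifs with h1 h2 h2 <;> dsimp only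
  · obtain ⟨c, rfl⟩ : ∃ c, q = p - 2*c := ⟨(p-q)/2, by omega⟩
    rw [show (2*p + 6*(p - 2*c) - 4)/4 = 2*p - 3*c - 1 by omega]
    linear_combination 4*h
  · obtain ⟨c, rfl⟩ : ∃ c, q = 2*c + 1 - p := ⟨(q+p-1)/2, by omega⟩
    rw [show (2*p - 6*(2*c + 1 - p) + 2)/4 = 2*p - 3*c - 1 by omega]
    linear_combination 4*h
  · obtain ⟨c, rfl⟩ : ∃ c, r = p - 2*c := ⟨(p-r)/2, by omega⟩
    rw [show (2*p + 6*(p - 2*c) - 4)/4 = 2*p - 3*c - 1 by omega]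
    linear_combination 4*h
  · obtain ⟨c, rfl⟩ : ∃ c, r = 2*c + 1 - p := ⟨(r+p-1)/2, by omega⟩
    rw [show (2*p - 6*(2*c + 1 - p) + 2)/4 = 2*p - 3*c - 1 by omega]
    linear_combination 4*h

lemma mapsG4 (a b n X Y Z W : ℤ) (ha : a % 2 = 1) (hb : b % 2 = 1)
    (h : 8*n+7*a+2*b = 3*a*X^2 + 3*a*Y^2 + 4*a*Z^2 + 2*b*W^2) :
    2*n = a*((G4s (X,Y,Z,W)).1*((G4s (X,Y,Z,W)).1-1))
      + 3*a*((G4s (X,Y,Z,W)).2.1*((G4s (X,Y,Z,W)).2.1-1))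
      + 3*a*((G4s (X,Y,Z,W)).2.2.1*((G4s (X,Y,Z,W)).2.2.1-1))
      + 2*b*((G4s (X,Y,Z,W)).2.2.2*((G4s (X,Y,Z,W)).2.2.2-1)) := by
  obtain ⟨hW, hXY, hK3, hK4⟩ := keyPar a b n X Y Z W ha hb h
  simp only [G4s]
  split_ifs with h1 h2 <;> dsimp only
  · -- X odd, v = Z - Y/2
    have hY2 : Y % 2 = 0 := by omega
    have hZY := hK3 h1
    obtain ⟨x, rfl⟩ : ∃ x, X = 2*x - 1 := ⟨(X+1)/2, by omega⟩
    obtain ⟨c, rfl⟩ : ∃ c, Y = 2*c := ⟨Y/2, by omega⟩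
    obtain ⟨d, rfl⟩ : ∃ d, Z = 2*d + 1 - c := ⟨(Z-1+c)/2, by omega⟩
    obtain ⟨w, rfl⟩ : ∃ w, W = 2*w - 1 := ⟨(W+1)/2, by omega⟩
    rw [show (3*(2*c) + 2*(2*d + 1 - c) + 2)/4 = c + d + 1 by omega,
        show (2*d + 1 - c - 2*c/2 + 1)/2 = d + 1 - c by omega,
        show (2*x - 1 + 1)/2 = x by omega, show (2*w - 1 + 1)/2 = w by omega]
    refine mul_left_cancel₀ (by norm_num : (4:ℤ) ≠ 0) ?_
    linear_combination h
  · -- X odd, v = Y/2 - Z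
    have hY2 : Y % 2 = 0 := by omega
    have hZY := hK3 h1
    obtain ⟨x, rfl⟩ : ∃ x, X = 2*x - 1 := ⟨(X+1)/2, by omega⟩
    obtain ⟨c, rfl⟩ : ∃ c, Y = 2*c := ⟨Y/2, by omega⟩
    obtain ⟨d, rfl⟩ : ∃ d, Z = 2*d + 1 - c := ⟨(Z-1+c)/2, by omega⟩
    obtain ⟨w, rfl⟩ : ∃ w, W = 2*w - 1 := ⟨(W+1)/2, by omega⟩
    rw [show (3*(2*c) + 2*(2*d + 1 - c) + 2)/4 = c + d + 1 by omega,
        show (2*c/2 - (2*d + 1 - c) + 1)/2 = c - d by omega,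
        show (2*x - 1 + 1)/2 = x by omega, show (2*w - 1 + 1)/2 = w by omega]
    refine mul_left_cancel₀ (by norm_num : (4:ℤ) ≠ 0) ?_
    linear_combination h
  · -- X even, Y odd, s = X/2 - Z
    have hX2 : X % 2 = 0 := by omega
    have hY1 : Y % 2 = 1 := by omega
    have hZX := hK4 hY1
    obtain ⟨c, rfl⟩ : ∃ c, X = 2*c := ⟨X/2, by omega⟩
    obtain ⟨y, rfl⟩ : ∃ y, Y = 2*y - 1 := ⟨(Y+1)/2, by omega⟩
    obtain ⟨d, rfl⟩ : ∃ d, Z = 2*d + 1 - c := ⟨(Z-1+c)/2, by omega⟩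
    obtain ⟨w, rfl⟩ : ∃ w, W = 2*w - 1 := ⟨(W+1)/2, by omega⟩
    rw [show (3*(2*c) + 2*(2*d + 1 - c) + 2)/4 = c + d + 1 by omega,
        show (2*c/2 - (2*d + 1 - c) + 1)/2 = c - d by omega,
        show (2*y - 1 + 1)/2 = y by omega, show (2*w - 1 + 1)/2 = w by omega]
    refine mul_left_cancel₀ (by norm_num : (4:ℤ) ≠ 0) ?_
    linear_combination h
  · -- X even, Y odd, s = Z - X/2
    have hX2 : X % 2 = 0 := by omega
    have hY1 : Y % 2 = 1 := by omega
    have hZX := hK4 hY1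
    obtain ⟨c, rfl⟩ : ∃ c, X = 2*c := ⟨X/2, by omega⟩
    obtain ⟨y, rfl⟩ : ∃ y, Y = 2*y - 1 := ⟨(Y+1)/2, by omega⟩
    obtain ⟨d, rfl⟩ : ∃ d, Z = 2*d + 1 - c := ⟨(Z-1+c)/2, by omega⟩
    obtain ⟨w, rfl⟩ : ∃ w, W = 2*w - 1 := ⟨(W+1)/2, by omega⟩
    rw [show (3*(2*c) + 2*(2*d + 1 - c) + 2)/4 = c + d + 1 by omega,
        show (2*d + 1 - c - 2*c/2 + 1)/2 = d + 1 - c by omega,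
        show (2*y - 1 + 1)/2 = y by omega, show (2*w - 1 + 1)/2 = w by omega]
    refine mul_left_cancel₀ (by norm_num : (4:ℤ) ≠ 0) ?_
    linear_combination h

set_option maxHeartbeats 1000000 in
lemma FG4 (a b n X Y Z W : ℤ) (ha : a % 2 = 1) (hb : b % 2 = 1)
    (h : 8*n+7*a+2*b = 3*a*X^2 + 3*a*Y^2 + 4*a*Z^2 + 2*b*W^2) :
    F4s (G4s (X,Y,Z,W)) = (X,Y,Z,W) := by
  obtain ⟨hW, hXY, hK3, hK4⟩ := keyPar a b n X Y Z W ha hb h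
  simp only [G4s]
  split_ifs with h1 h2 <;>
    (simp only [F4s]; split_ifs <;> (simp only [Prod.mk.injEq]; omega))

theorem stmt3 (a b n : ℤ) (ha : 0 < a) (hao : Odd a) (hb : 0 < b) (hbo : Odd b)
    (hn : 0 ≤ n) :
    t4 a (3*a) (3*a) (2*b) n = N4 (3*a) (3*a) (4*a) (2*b) (8*n + 7*a + 2*b) := by
  obtain ⟨α, hα⟩ := hao
  obtain ⟨β, hβ⟩ := hbo
  have ha' : a % 2 = 1 := by omega
  have hb' : b % 2 = 1 := by omega
  unfold t4 N4
  have hbij : Set.BijOn F4s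
      {v : ℤ × ℤ × ℤ × ℤ | 2 * n = a * (v.1 * (v.1 - 1)) + 3*a * (v.2.1 * (v.2.1 - 1))
        + 3*a * (v.2.2.1 * (v.2.2.1 - 1)) + 2*b * (v.2.2.2 * (v.2.2.2 - 1))}
      {v : ℤ × ℤ × ℤ × ℤ | 8*n + 7*a + 2*b = 3*a * v.1 ^ 2 + 3*a * v.2.1 ^ 2
        + 4*a * v.2.2.1 ^ 2 + 2*b * v.2.2.2 ^ 2} := by
    apply Set.InvOn.bijOn (f' := G4s)
    · constructor
      · intro x _
        exact GF4 x
      · rintro ⟨X, Y, Z, W⟩ hy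
        simp only [Set.mem_setOf_eq] at hy
        exact FG4 a b n X Y Z W ha' hb' (by linarith)
    · rintro ⟨p, q, r, t⟩ hx
      simp only [Set.mem_setOf_eq] at hx ⊢
      have := mapsF4 a b n p q r t (by linarith)
      linarith
    · rintro ⟨X, Y, Z, W⟩ hy
      simp only [Set.mem_setOf_eq] at hy ⊢
      have := mapsG4 a b n X Y Z W ha' hb' (by linarith)
      linarith
  rw [← hbij.image_eq, Set.ncard_image_of_injOn hbij.injOn]
end

section
/- For every positive integer n, N(3,3,4,6; 8n+13) = 2*N(1,3,12,24; 8n+13) and N(3,3,4,6; 8n+13) = (2/5)*N(1,3,3,6; 8n+13). -/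
/- ### Auxiliary congruence lemmas -/

private lemma sq8 (v : ℤ) :
    (v % 2 = 0 ∧ v % 4 ≠ 2 ∧ v ^ 2 % 8 = 0) ∨ (v % 4 = 2 ∧ v ^ 2 % 8 = 4) ∨
      (v % 2 = 1 ∧ v ^ 2 % 8 = 1) := by
  have h : v % 4 = 0 ∨ v % 4 = 1 ∨ v % 4 = 2 ∨ v % 4 = 3 := by omega
  rcases h with h | h | h | h
  · obtain ⟨q, rfl⟩ : ∃ q, v = 4 * q := ⟨v / 4, by omega⟩
    refine Or.inl ⟨by omega, by omega, ?_⟩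
    rw [show (4 * q) ^ 2 = 8 * (2 * q ^ 2) by ring]
    exact Int.mul_emod_right 8 _
  · obtain ⟨q, rfl⟩ : ∃ q, v = 4 * q + 1 := ⟨v / 4, by omega⟩
    refine Or.inr (Or.inr ⟨by omega, ?_⟩)
    rw [show (4 * q + 1) ^ 2 = 1 + 8 * (2 * q ^ 2 + q) by ring, Int.add_mul_emod_self_left]
    decide
  · obtain ⟨q, rfl⟩ : ∃ q, v = 4 * q + 2 := ⟨v / 4, by omega⟩
    refine Or.inr (Or.inl ⟨by omega, ?_⟩)
    rw [show (4 * q + 2) ^ 2 = 4 + 8 * (2 * q ^ 2 + 2 * q) by ring, Int.add_mul_emod_self_left]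
    decide
  · obtain ⟨q, rfl⟩ : ∃ q, v = 4 * q + 3 := ⟨v / 4, by omega⟩
    refine Or.inr (Or.inr ⟨by omega, ?_⟩)
    rw [show (4 * q + 3) ^ 2 = 1 + 8 * (2 * q ^ 2 + 3 * q + 1) by ring, Int.add_mul_emod_self_left]
    decide

private lemma keyX0 (n x y z w : ℤ)
    (h : 8 * n + 13 = x ^ 2 + 3 * y ^ 2 + 3 * z ^ 2 + 6 * w ^ 2) (hx : x % 2 = 0) :
    (y % 2 = 0 ∧ z % 2 = 1 ∧ w % 2 = 1) ∨ (y % 2 = 1 ∧ z % 2 = 0 ∧ w % 2 = 1) := by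
  have h1 := sq8 x; have h2 := sq8 y; have h3 := sq8 z; have h4 := sq8 w
  generalize hX : x ^ 2 = X at h h1
  generalize hY : y ^ 2 = Y at h h2
  generalize hZ : z ^ 2 = Z at h h3
  generalize hW : w ^ 2 = W at h h4
  omega

private lemma keyX1 (n x y z w : ℤ)
    (h : 8 * n + 13 = x ^ 2 + 3 * y ^ 2 + 3 * z ^ 2 + 6 * w ^ 2) (hx : x % 2 = 1) :
    (y % 2 = 0 ∧ z % 2 = 0 ∧ w % 2 = 0) ∨ (y % 2 = 1 ∧ z % 2 = 1 ∧ w % 2 = 1) := by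
  have h1 := sq8 x; have h2 := sq8 y; have h3 := sq8 z; have h4 := sq8 w
  generalize hX : x ^ 2 = X at h h1
  generalize hY : y ^ 2 = Y at h h2
  generalize hZ : z ^ 2 = Z at h h3
  generalize hW : w ^ 2 = W at h h4
  omega

private lemma keyZW (n x y z w : ℤ)
    (h : 8 * n + 13 = x ^ 2 + 3 * y ^ 2 + 3 * z ^ 2 + 6 * w ^ 2) (hz : z % 2 = 0)
    (hw : w % 2 = 0) : x % 2 = 1 ∧ y % 2 = 0 := by
  have h1 := sq8 x; have h2 := sq8 y; have h3 := sq8 z; have h4 := sq8 w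
  generalize hX : x ^ 2 = X at h h1
  generalize hY : y ^ 2 = Y at h h2
  generalize hZ : z ^ 2 = Z at h h3
  generalize hW : w ^ 2 = W at h h4
  omega

private lemma keyB (n x y z w : ℤ)
    (h : 8 * n + 13 = x ^ 2 + 3 * y ^ 2 + 3 * z ^ 2 + 6 * w ^ 2) (hx : x % 2 = 0)
    (hy : y % 2 = 0) : (x + y) % 4 = 2 := by
  have h1 := sq8 x; have h2 := sq8 y; have h3 := sq8 z; have h4 := sq8 w
  generalize hX : x ^ 2 = X at h h1
  generalize hY : y ^ 2 = Y at h h2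
  generalize hZ : z ^ 2 = Z at h h3
  generalize hW : w ^ 2 = W at h h4
  omega

private lemma keyU (n x y z w : ℤ)
    (h : 8 * n + 13 = x ^ 2 + 3 * y ^ 2 + 3 * z ^ 2 + 6 * w ^ 2) (hy : y % 2 = 0)
    (hz : z % 2 = 0) : (y + z) % 4 = 2 := by
  have h1 := sq8 x; have h2 := sq8 y; have h3 := sq8 z; have h4 := sq8 w
  generalize hX : x ^ 2 = X at h h1
  generalize hY : y ^ 2 = Y at h h2
  generalize hZ : z ^ 2 = Z at h h3
  generalize hW : w ^ 2 = W at h h4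
  omega

/- ### The solution sets -/

private def sAll (n : ℤ) : Set (ℤ × ℤ × ℤ × ℤ) :=
  {v | 8 * n + 13 = v.1 ^ 2 + 3 * v.2.1 ^ 2 + 3 * v.2.2.1 ^ 2 + 6 * v.2.2.2 ^ 2}

private def sU (n : ℤ) : Set (ℤ × ℤ × ℤ × ℤ) :=
  {v | 8 * n + 13 = v.1 ^ 2 + 3 * v.2.1 ^ 2 + 3 * v.2.2.1 ^ 2 + 6 * v.2.2.2 ^ 2 ∧
    v.1 % 2 = 1 ∧ v.2.1 % 2 = 0 ∧ v.2.2.1 % 2 = 0 ∧ v.2.2.2 % 2 = 0}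

private def sD (n : ℤ) : Set (ℤ × ℤ × ℤ × ℤ) :=
  {v | 8 * n + 13 = v.1 ^ 2 + 3 * v.2.1 ^ 2 + 3 * v.2.2.1 ^ 2 + 6 * v.2.2.2 ^ 2 ∧
    v.1 % 2 = 1 ∧ v.2.1 % 2 = 1 ∧ v.2.2.1 % 2 = 1 ∧ v.2.2.2 % 2 = 1}

private def sB (n : ℤ) : Set (ℤ × ℤ × ℤ × ℤ) :=
  {v | 8 * n + 13 = v.1 ^ 2 + 3 * v.2.1 ^ 2 + 3 * v.2.2.1 ^ 2 + 6 * v.2.2.2 ^ 2 ∧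
    v.1 % 2 = 0 ∧ v.2.1 % 2 = 0 ∧ v.2.2.1 % 2 = 1 ∧ v.2.2.2 % 2 = 1}

private def sC (n : ℤ) : Set (ℤ × ℤ × ℤ × ℤ) :=
  {v | 8 * n + 13 = v.1 ^ 2 + 3 * v.2.1 ^ 2 + 3 * v.2.2.1 ^ 2 + 6 * v.2.2.2 ^ 2 ∧
    v.1 % 2 = 0 ∧ v.2.1 % 2 = 1 ∧ v.2.2.1 % 2 = 0 ∧ v.2.2.2 % 2 = 1}

private def sDg (n : ℤ) : Set (ℤ × ℤ × ℤ × ℤ) :=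
  {v | 8 * n + 13 = v.1 ^ 2 + 3 * v.2.1 ^ 2 + 3 * v.2.2.1 ^ 2 + 6 * v.2.2.2 ^ 2 ∧
    v.1 % 2 = 1 ∧ v.2.1 % 2 = 1 ∧ v.2.2.1 % 2 = 1 ∧ v.2.2.2 % 2 = 1 ∧
    (v.1 - v.2.1) % 4 = 0}

private def sDs (n : ℤ) : Set (ℤ × ℤ × ℤ × ℤ) :=
  {v | 8 * n + 13 = v.1 ^ 2 + 3 * v.2.1 ^ 2 + 3 * v.2.2.1 ^ 2 + 6 * v.2.2.2 ^ 2 ∧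
    v.1 % 2 = 1 ∧ v.2.1 % 2 = 1 ∧ v.2.2.1 % 2 = 1 ∧ v.2.2.2 % 2 = 1 ∧
    (v.2.1 - v.2.2.1) % 4 = 0}

/- ### Finiteness -/

private lemma sqle {x m : ℤ} (h : x ^ 2 ≤ m) : -m ≤ x ∧ x ≤ m := by
  have h0 : 0 ≤ x ^ 2 := sq_nonneg x
  have h3 : x = 0 ∨ 1 ≤ x ∨ x ≤ -1 := by omega
  rcases h3 with rfl | hx | hx
  · constructor <;> linarith
  · have : x ≤ x ^ 2 := by
      nlinarith [mul_nonneg (by linarith : (0:ℤ) ≤ x - 1) (by linarith : (0:ℤ) ≤ x)]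
    constructor <;> linarith
  · have : -x ≤ x ^ 2 := by
      nlinarith [mul_nonneg (by linarith : (0:ℤ) ≤ -x - 1) (by linarith : (0:ℤ) ≤ -x)]
    constructor <;> linarith

private lemma finAll (n : ℤ) : (sAll n).Finite := by
  set m : ℤ := 8 * n + 13 with hm
  apply Set.Finite.subset (Set.finite_Icc ((-m, -m, -m, -m) : ℤ × ℤ × ℤ × ℤ) (m, m, m, m))
  rintro ⟨x, y, z, w⟩ hv
  simp only [sAll, Set.mem_setOf_eq] at hv
  have b1 := sqle (show x ^ 2 ≤ m by nlinarith [sq_nonneg y, sq_nonneg z, sq_nonneg w])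
  have b2 := sqle (show y ^ 2 ≤ m by nlinarith [sq_nonneg x, sq_nonneg z, sq_nonneg w])
  have b3 := sqle (show z ^ 2 ≤ m by nlinarith [sq_nonneg x, sq_nonneg y, sq_nonneg w])
  have b4 := sqle (show w ^ 2 ≤ m by nlinarith [sq_nonneg x, sq_nonneg y, sq_nonneg z])
  simp only [Set.mem_Icc, Prod.le_def]
  exact ⟨⟨b1.1, b2.1, b3.1, b4.1⟩, b1.2, b2.2, b3.2, b4.2⟩

/- ### The transformation maps -/

private def e2 (v : ℤ × ℤ × ℤ × ℤ) : ℤ × ℤ × ℤ × ℤ := (2 * v.2.2.1, v.1, v.2.1, v.2.2.2)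
private def e3 (v : ℤ × ℤ × ℤ × ℤ) : ℤ × ℤ × ℤ × ℤ := (v.1, v.2.1, 2 * v.2.2.1, 2 * v.2.2.2)
private def eswap (v : ℤ × ℤ × ℤ × ℤ) : ℤ × ℤ × ℤ × ℤ := (v.1, v.2.2.1, v.2.1, v.2.2.2)
private def ephi (v : ℤ × ℤ × ℤ × ℤ) : ℤ × ℤ × ℤ × ℤ :=
  (v.1 + 3 * v.2.1, v.1 - v.2.1, v.2.2.1, v.2.2.2)
private def epsi (v : ℤ × ℤ × ℤ × ℤ) : ℤ × ℤ × ℤ × ℤ := (2 * v.1, 2 * v.2.1, v.2.2.1, v.2.2.2)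
private def ephi' (v : ℤ × ℤ × ℤ × ℤ) : ℤ × ℤ × ℤ × ℤ :=
  (v.1, v.2.1 + v.2.2.1 + 2 * v.2.2.2, v.2.1 + v.2.2.1 - 2 * v.2.2.2, v.2.1 - v.2.2.1)
private def epsi' (v : ℤ × ℤ × ℤ × ℤ) : ℤ × ℤ × ℤ × ℤ := (v.1, 2 * v.2.1, 2 * v.2.2.1, 2 * v.2.2.2)
private def enu (v : ℤ × ℤ × ℤ × ℤ) : ℤ × ℤ × ℤ × ℤ := (v.1, -v.2.1, v.2.2.1, v.2.2.2)

private lemma inj_e2 : Function.Injective e2 := by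
  rintro ⟨a, b, c, d⟩ ⟨a', b', c', d'⟩ h
  simp only [e2, Prod.mk.injEq] at h ⊢
  omega

private lemma inj_e3 : Function.Injective e3 := by
  rintro ⟨a, b, c, d⟩ ⟨a', b', c', d'⟩ h
  simp only [e3, Prod.mk.injEq] at h ⊢
  omega

private lemma inj_eswap : Function.Injective eswap := by
  rintro ⟨a, b, c, d⟩ ⟨a', b', c', d'⟩ h
  simp only [eswap, Prod.mk.injEq] at h ⊢
  omega

private lemma inj_ephi : Function.Injective ephi := by
  rintro ⟨a, b, c, d⟩ ⟨a', b', c', d'⟩ h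
  simp only [ephi, Prod.mk.injEq] at h ⊢
  omega

private lemma inj_epsi : Function.Injective epsi := by
  rintro ⟨a, b, c, d⟩ ⟨a', b', c', d'⟩ h
  simp only [epsi, Prod.mk.injEq] at h ⊢
  omega

private lemma inj_ephi' : Function.Injective ephi' := by
  rintro ⟨a, b, c, d⟩ ⟨a', b', c', d'⟩ h
  simp only [ephi', Prod.mk.injEq] at h ⊢
  omega

private lemma inj_epsi' : Function.Injective epsi' := by
  rintro ⟨a, b, c, d⟩ ⟨a', b', c', d'⟩ h
  simp only [epsi', Prod.mk.injEq] at h ⊢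
  omega

private lemma inj_enu : Function.Injective enu := by
  rintro ⟨a, b, c, d⟩ ⟨a', b', c', d'⟩ h
  simp only [enu, Prod.mk.injEq] at h ⊢
  omega

/- ### Image identities -/

/-- `N(3,3,4,6)`-solutions correspond to solutions with even first coordinate. -/
private lemma im2 (n : ℤ) :
    e2 '' {v : ℤ × ℤ × ℤ × ℤ |
        8 * n + 13 = 3 * v.1 ^ 2 + 3 * v.2.1 ^ 2 + 4 * v.2.2.1 ^ 2 + 6 * v.2.2.2 ^ 2} =
      sB n ∪ sC n := by
  apply Set.Subset.antisymm
  · rintro p ⟨⟨x, y, z, w⟩, hv, rfl⟩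
    simp only [Set.mem_setOf_eq] at hv
    have heq : 8 * n + 13 = (2 * z) ^ 2 + 3 * x ^ 2 + 3 * y ^ 2 + 6 * w ^ 2 := by
      linear_combination hv
    simp only [e2, sB, sC, Set.mem_union, Set.mem_setOf_eq]
    rcases keyX0 n (2 * z) x y w heq (by omega) with h | h
    · exact Or.inl ⟨heq, by omega, h.1, h.2.1, h.2.2⟩
    · exact Or.inr ⟨heq, by omega, h.1, h.2.1, h.2.2⟩
  · rintro ⟨x, y, z, w⟩ h
    simp only [sB, sC, Set.mem_union, Set.mem_setOf_eq] at h
    have hx : x % 2 = 0 := by rcases h with ⟨_, h, _⟩ | ⟨_, h, _⟩ <;> exact h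
    obtain ⟨c, rfl⟩ : ∃ c, x = 2 * c := ⟨x / 2, by omega⟩
    have heq : 8 * n + 13 = (2 * c) ^ 2 + 3 * y ^ 2 + 3 * z ^ 2 + 6 * w ^ 2 := by
      rcases h with ⟨h, _⟩ | ⟨h, _⟩ <;> exact h
    exact ⟨(y, z, c, w), by simp only [Set.mem_setOf_eq]; linear_combination heq, rfl⟩

/-- `N(1,3,12,24)`-solutions correspond to the class `sU`. -/
private lemma im3 (n : ℤ) :
    e3 '' {v : ℤ × ℤ × ℤ × ℤ |
        8 * n + 13 = v.1 ^ 2 + 3 * v.2.1 ^ 2 + 12 * v.2.2.1 ^ 2 + 24 * v.2.2.2 ^ 2} =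
      sU n := by
  apply Set.Subset.antisymm
  · rintro p ⟨⟨x, y, z, w⟩, hv, rfl⟩
    simp only [Set.mem_setOf_eq] at hv
    have heq : 8 * n + 13 = x ^ 2 + 3 * y ^ 2 + 3 * (2 * z) ^ 2 + 6 * (2 * w) ^ 2 := by
      linear_combination hv
    obtain ⟨hx1, hy0⟩ := keyZW n x y (2 * z) (2 * w) heq (by omega) (by omega)
    simp only [e3, sU, Set.mem_setOf_eq]
    exact ⟨heq, hx1, hy0, by omega, by omega⟩
  · rintro ⟨x, y, z, w⟩ h
    simp only [sU, Set.mem_setOf_eq] at h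
    obtain ⟨heq, hx, hy, hz, hw⟩ := h
    obtain ⟨c, rfl⟩ : ∃ c, z = 2 * c := ⟨z / 2, by omega⟩
    obtain ⟨d, rfl⟩ : ∃ d, w = 2 * d := ⟨w / 2, by omega⟩
    exact ⟨(x, y, c, d), by simp only [Set.mem_setOf_eq]; linear_combination heq, rfl⟩

/-- Swapping the two middle coordinates gives `sB ≃ sC`. -/
private lemma imswap (n : ℤ) : eswap '' sB n = sC n := by
  apply Set.Subset.antisymm
  · rintro p ⟨⟨x, y, z, w⟩, hv, rfl⟩
    simp only [sB, Set.mem_setOf_eq] at hv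
    obtain ⟨heq, hx, hy, hz, hw⟩ := hv
    simp only [eswap, sC, Set.mem_setOf_eq]
    exact ⟨by linear_combination heq, hx, hz, hy, hw⟩
  · rintro ⟨x, y, z, w⟩ h
    simp only [sC, Set.mem_setOf_eq] at h
    obtain ⟨heq, hx, hy, hz, hw⟩ := h
    refine ⟨(x, z, y, w), ?_, rfl⟩
    simp only [sB, Set.mem_setOf_eq]
    exact ⟨by linear_combination heq, hx, hz, hy, hw⟩

/-- The Gauss-type correspondence between `sB` and `sDg`. -/
private lemma imphi (n : ℤ) : ephi '' sB n = epsi '' sDg n := by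
  apply Set.Subset.antisymm
  · rintro p ⟨⟨x, y, z, w⟩, hv, rfl⟩
    simp only [sB, Set.mem_setOf_eq] at hv
    obtain ⟨heq, hx, hy, hz, hw⟩ := hv
    have hxy := keyB n x y z w heq hx hy
    obtain ⟨a, rfl⟩ : ∃ a, x = 2 * a := ⟨x / 2, by omega⟩
    obtain ⟨b, rfl⟩ : ∃ b, y = 2 * b := ⟨y / 2, by omega⟩
    refine ⟨(a + 3 * b, a - b, z, w), ?_, ?_⟩
    · simp only [sDg, Set.mem_setOf_eq]
      refine ⟨by linear_combination heq, by omega, by omega, hz, hw, by omega⟩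
    · simp only [epsi, ephi, Prod.mk.injEq, and_true, true_and] <;> omega
  · rintro p ⟨⟨x, y, z, w⟩, hv, rfl⟩
    simp only [sDg, Set.mem_setOf_eq] at hv
    obtain ⟨heq, hx, hy, hz, hw, h4⟩ := hv
    obtain ⟨k, hk⟩ : ∃ k, x = y + 4 * k := ⟨(x - y) / 4, by omega⟩
    subst hk
    refine ⟨(2 * y + 2 * k, 2 * k, z, w), ?_, ?_⟩
    · simp only [sB, Set.mem_setOf_eq]
      refine ⟨by linear_combination heq, by omega, by omega, hz, hw⟩
    · simp only [epsi, ephi, Prod.mk.injEq, and_true, true_and] <;> omega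

/-- The correspondence between `sU` and `sDs`. -/
private lemma imphi' (n : ℤ) : ephi' '' sU n = epsi' '' sDs n := by
  apply Set.Subset.antisymm
  · rintro p ⟨⟨x, y, z, w⟩, hv, rfl⟩
    simp only [sU, Set.mem_setOf_eq] at hv
    obtain ⟨heq, hx, hy, hz, hw⟩ := hv
    have hyz := keyU n x y z w heq hy hz
    obtain ⟨b, rfl⟩ : ∃ b, y = 2 * b := ⟨y / 2, by omega⟩
    obtain ⟨c, rfl⟩ : ∃ c, z = 2 * c := ⟨z / 2, by omega⟩
    obtain ⟨e, rfl⟩ : ∃ e, w = 2 * e := ⟨w / 2, by omega⟩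
    refine ⟨(x, b + c + 2 * e, b + c - 2 * e, b - c), ?_, ?_⟩
    · simp only [sDs, Set.mem_setOf_eq]
      refine ⟨by linear_combination heq, hx, by omega, by omega, by omega, by omega⟩
    · simp only [epsi', ephi', Prod.mk.injEq, and_true, true_and] <;> omega
  · rintro p ⟨⟨x, y, z, w⟩, hv, rfl⟩
    simp only [sDs, Set.mem_setOf_eq] at hv
    obtain ⟨heq, hx, hy, hz, hw, h4⟩ := hv
    obtain ⟨k, hk⟩ : ∃ k, y = z + 4 * k := ⟨(y - z) / 4, by omega⟩
    subst hk
    refine ⟨(x, z + 2 * k + w, z + 2 * k - w, 2 * k), ?_, ?_⟩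
    · simp only [sU, Set.mem_setOf_eq]
      refine ⟨by linear_combination heq, hx, by omega, by omega, by omega⟩
    · simp only [epsi', ephi', Prod.mk.injEq, and_true, true_and] <;> omega

/-- The sign-flip involution shows `sDg` is half of `sD`. -/
private lemma imnu_g (n : ℤ) : enu '' sDg n = sD n \ sDg n := by
  apply Set.Subset.antisymm
  · rintro p ⟨⟨x, y, z, w⟩, hv, rfl⟩
    simp only [sDg, Set.mem_setOf_eq] at hv
    obtain ⟨heq, hx, hy, hz, hw, h4⟩ := hv
    constructor
    · simp only [enu, sD, Set.mem_setOf_eq]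
      exact ⟨by linear_combination heq, hx, by omega, hz, hw⟩
    · simp only [sDg, enu, Set.mem_setOf_eq]
      rintro ⟨-, -, -, -, -, h4'⟩
      omega
  · rintro ⟨x, y, z, w⟩ ⟨hmem, hnot⟩
    simp only [sD, Set.mem_setOf_eq] at hmem
    obtain ⟨heq, hx, hy, hz, hw⟩ := hmem
    simp only [sDg, Set.mem_setOf_eq] at hnot
    have h4 : (x - y) % 4 ≠ 0 := fun hc => hnot ⟨heq, hx, hy, hz, hw, hc⟩
    refine ⟨(x, -y, z, w), ?_, ?_⟩
    · simp only [sDg, Set.mem_setOf_eq]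
      exact ⟨by linear_combination heq, hx, by omega, hz, hw, by omega⟩
    · simp only [enu, Prod.mk.injEq, and_true, true_and] <;> omega

private lemma imnu_s (n : ℤ) : enu '' sDs n = sD n \ sDs n := by
  apply Set.Subset.antisymm
  · rintro p ⟨⟨x, y, z, w⟩, hv, rfl⟩
    simp only [sDs, Set.mem_setOf_eq] at hv
    obtain ⟨heq, hx, hy, hz, hw, h4⟩ := hv
    constructor
    · simp only [enu, sD, Set.mem_setOf_eq]
      exact ⟨by linear_combination heq, hx, by omega, hz, hw⟩
    · simp only [sDs, enu, Set.mem_setOf_eq]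
      rintro ⟨-, -, -, -, -, h4'⟩
      omega
  · rintro ⟨x, y, z, w⟩ ⟨hmem, hnot⟩
    simp only [sD, Set.mem_setOf_eq] at hmem
    obtain ⟨heq, hx, hy, hz, hw⟩ := hmem
    simp only [sDs, Set.mem_setOf_eq] at hnot
    have h4 : (y - z) % 4 ≠ 0 := fun hc => hnot ⟨heq, hx, hy, hz, hw, hc⟩
    refine ⟨(x, -y, z, w), ?_, ?_⟩
    · simp only [sDs, Set.mem_setOf_eq]
      exact ⟨by linear_combination heq, hx, by omega, hz, hw, by omega⟩
    · simp only [enu, Prod.mk.injEq, and_true, true_and] <;> omega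

/- ### Cardinality identities -/

private lemma card_B_eq_C (n : ℤ) : (sB n).ncard = (sC n).ncard := by
  rw [← imswap n, Set.ncard_image_of_injective _ inj_eswap]

private lemma card_B_eq_Dg (n : ℤ) : (sB n).ncard = (sDg n).ncard := by
  have h1 : (ephi '' sB n).ncard = (sB n).ncard := Set.ncard_image_of_injective _ inj_ephi
  have h2 : (epsi '' sDg n).ncard = (sDg n).ncard := Set.ncard_image_of_injective _ inj_epsi
  rw [← h1, imphi n, h2]

private lemma card_U_eq_Ds (n : ℤ) : (sU n).ncard = (sDs n).ncard := by
  have h1 : (ephi' '' sU n).ncard = (sU n).ncard := Set.ncard_image_of_injective _ inj_ephi'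
  have h2 : (epsi' '' sDs n).ncard = (sDs n).ncard := Set.ncard_image_of_injective _ inj_epsi'
  rw [← h1, imphi' n, h2]

private lemma subset_All_D (n : ℤ) : sD n ⊆ sAll n := fun v hv => hv.1
private lemma subset_All_U (n : ℤ) : sU n ⊆ sAll n := fun v hv => hv.1
private lemma subset_All_B (n : ℤ) : sB n ⊆ sAll n := fun v hv => hv.1
private lemma subset_All_C (n : ℤ) : sC n ⊆ sAll n := fun v hv => hv.1
private lemma subset_D_Dg (n : ℤ) : sDg n ⊆ sD n := fun v hv =>
  ⟨hv.1, hv.2.1, hv.2.2.1, hv.2.2.2.1, hv.2.2.2.2.1⟩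
private lemma subset_D_Ds (n : ℤ) : sDs n ⊆ sD n := fun v hv =>
  ⟨hv.1, hv.2.1, hv.2.2.1, hv.2.2.2.1, hv.2.2.2.2.1⟩

private lemma card_D_eq_two_Dg (n : ℤ) : (sD n).ncard = 2 * (sDg n).ncard := by
  have hfin : (sD n).Finite := (finAll n).subset (subset_All_D n)
  have h1 : (sD n \ sDg n).ncard + (sDg n).ncard = (sD n).ncard :=
    Set.ncard_diff_add_ncard_of_subset (subset_D_Dg n) hfin
  have h2 : (sD n \ sDg n).ncard = (sDg n).ncard := by
    rw [← imnu_g n, Set.ncard_image_of_injective _ inj_enu]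
  omega

private lemma card_D_eq_two_Ds (n : ℤ) : (sD n).ncard = 2 * (sDs n).ncard := by
  have hfin : (sD n).Finite := (finAll n).subset (subset_All_D n)
  have h1 : (sD n \ sDs n).ncard + (sDs n).ncard = (sD n).ncard :=
    Set.ncard_diff_add_ncard_of_subset (subset_D_Ds n) hfin
  have h2 : (sD n \ sDs n).ncard = (sDs n).ncard := by
    rw [← imnu_s n, Set.ncard_image_of_injective _ inj_enu]
  omega

/-- Partition of the full solution set. -/
private lemma card_All (n : ℤ) :
    (sAll n).ncard = (sU n).ncard + ((sD n).ncard + ((sB n).ncard + (sC n).ncard)) := by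
  have hfin := finAll n
  have hU : (sU n).Finite := hfin.subset (subset_All_U n)
  have hD : (sD n).Finite := hfin.subset (subset_All_D n)
  have hB : (sB n).Finite := hfin.subset (subset_All_B n)
  have hC : (sC n).Finite := hfin.subset (subset_All_C n)
  have hpart : sAll n = sU n ∪ (sD n ∪ (sB n ∪ sC n)) := by
    ext ⟨x, y, z, w⟩
    simp only [sAll, sU, sD, sB, sC, Set.mem_union, Set.mem_setOf_eq]
    constructor
    · intro heq
      have hp : x % 2 = 0 ∨ x % 2 = 1 := by omega
      rcases hp with hp | hp
      · rcases keyX0 n x y z w heq hp with h | h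
        · exact Or.inr (Or.inr (Or.inl ⟨heq, hp, h.1, h.2.1, h.2.2⟩))
        · exact Or.inr (Or.inr (Or.inr ⟨heq, hp, h.1, h.2.1, h.2.2⟩))
      · rcases keyX1 n x y z w heq hp with h | h
        · exact Or.inl ⟨heq, hp, h.1, h.2.1, h.2.2⟩
        · exact Or.inr (Or.inl ⟨heq, hp, h.1, h.2.1, h.2.2⟩)
    · rintro (h | h | h | h) <;> exact h.1
  have d1 : Disjoint (sB n) (sC n) := by
    rw [Set.disjoint_left]
    rintro ⟨x, y, z, w⟩ hv hv'
    simp only [sB, sC, Set.mem_setOf_eq] at hv hv'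
    omega
  have d2 : Disjoint (sD n) (sB n ∪ sC n) := by
    rw [Set.disjoint_left]
    rintro ⟨x, y, z, w⟩ hv hv'
    simp only [sD, sB, sC, Set.mem_union, Set.mem_setOf_eq] at hv hv'
    omega
  have d3 : Disjoint (sU n) (sD n ∪ (sB n ∪ sC n)) := by
    rw [Set.disjoint_left]
    rintro ⟨x, y, z, w⟩ hv hv'
    simp only [sU, sD, sB, sC, Set.mem_union, Set.mem_setOf_eq] at hv hv'
    omega
  rw [hpart, Set.ncard_union_eq d3 hU ((hD.union (hB.union hC))),
    Set.ncard_union_eq d2 hD (hB.union hC), Set.ncard_union_eq d1 hB hC]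

theorem stmt4 (n : ℤ) (hn : 0 < n) :
    N4 3 3 4 6 (8*n + 13) = 2 * N4 1 3 12 24 (8*n + 13) ∧
    5 * N4 3 3 4 6 (8*n + 13) = 2 * N4 1 3 3 6 (8*n + 13) := by
  have e1 : N4 3 3 4 6 (8 * n + 13) = (sB n).ncard + (sC n).ncard := by
    have hrfl : N4 3 3 4 6 (8 * n + 13) =
        Set.ncard {v : ℤ × ℤ × ℤ × ℤ |
          8 * n + 13 = 3 * v.1 ^ 2 + 3 * v.2.1 ^ 2 + 4 * v.2.2.1 ^ 2 + 6 * v.2.2.2 ^ 2} := rfl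
    rw [hrfl, ← Set.ncard_image_of_injective _ inj_e2, im2 n]
    refine Set.ncard_union_eq ?_ ((finAll n).subset (subset_All_B n))
      ((finAll n).subset (subset_All_C n))
    rw [Set.disjoint_left]
    rintro ⟨x, y, z, w⟩ hv hv'
    simp only [sB, sC, Set.mem_setOf_eq] at hv hv'
    omega
  have e2' : N4 1 3 12 24 (8 * n + 13) = (sU n).ncard := by
    have hrfl : N4 1 3 12 24 (8 * n + 13) =
        Set.ncard {v : ℤ × ℤ × ℤ × ℤ |
          8 * n + 13 = v.1 ^ 2 + 3 * v.2.1 ^ 2 + 12 * v.2.2.1 ^ 2 + 24 * v.2.2.2 ^ 2} := by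
      unfold N4
      norm_num
    rw [hrfl, ← Set.ncard_image_of_injective _ inj_e3, im3 n]
  have e3' : N4 1 3 3 6 (8 * n + 13) = (sAll n).ncard := by
    unfold N4 sAll
    norm_num
  have h1 := card_B_eq_C n
  have h2 := card_B_eq_Dg n
  have h3 := card_U_eq_Ds n
  have h4 := card_D_eq_two_Dg n
  have h5 := card_D_eq_two_Ds n
  have h6 := card_All n
  constructor
  · rw [e1, e2']
    omega
  · rw [e1, e3', h6]
    omega
end

section
/- For positive odd integers a and b, and any positive integer n with n ≡ (a-b)/2 (mod 2), t(a,3a,b,3b;n) = 4*N(a,3a,b,3b; 2n+a+b). -/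
def sg : Bool → ℤ
  | true => 1
  | false => -1

lemma sg_cases (ε : Bool) : sg ε = 1 ∨ sg ε = -1 := by cases ε <;> simp [sg]

lemma sg_inj (ε ε' : Bool) (h : sg ε = sg ε') : ε = ε' := by
  cases ε <;> cases ε' <;> simp_all [sg]

lemma sq4 (X : ℤ) : ∃ c, X ^ 2 = 4 * c + X % 2 := by
  rcases Int.even_or_odd X with ⟨k, hk⟩ | ⟨k, hk⟩
  · refine ⟨k * k, ?_⟩
    have h2 : X % 2 = 0 := by omega
    rw [h2, hk]; ring
  · refine ⟨k * k + k, ?_⟩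
    have h2 : X % 2 = 1 := by omega
    rw [h2, hk]; ring

lemma parity4 (a b n X Y Z W : ℤ) (ha : a % 2 = 1) (hb : b % 2 = 1)
    (hmod : n % 2 = ((a - b) / 2) % 2)
    (heq : 2 * n + a + b = a * X ^ 2 + 3 * a * Y ^ 2 + b * Z ^ 2 + 3 * b * W ^ 2) :
    (X + Y) % 2 = 1 ∧ (Z + W) % 2 = 1 := by
  obtain ⟨c1, e1⟩ := sq4 X
  obtain ⟨c2, e2⟩ := sq4 Y
  obtain ⟨c3, e3⟩ := sq4 Z
  obtain ⟨c4, e4⟩ := sq4 W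
  have E : 2 * n + a + b = 4 * (a * c1 + 3 * (a * c2) + b * c3 + 3 * (b * c4))
      + ((X % 2) * a + 3 * ((Y % 2) * a) + (Z % 2) * b + 3 * ((W % 2) * b)) := by
    rw [heq, e1, e2, e3, e4]; ring
  obtain ⟨D, hD⟩ : ∃ D, D = a * c1 + 3 * (a * c2) + b * c3 + 3 * (b * c4) := ⟨_, rfl⟩
  rw [← hD] at E
  have hX2 : X % 2 = 0 ∨ X % 2 = 1 := by omega
  have hY2 : Y % 2 = 0 ∨ Y % 2 = 1 := by omega
  have hZ2 : Z % 2 = 0 ∨ Z % 2 = 1 := by omega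
  have hW2 : W % 2 = 0 ∨ W % 2 = 1 := by omega
  rcases hX2 with h1 | h1 <;> rcases hY2 with h2 | h2 <;> rcases hZ2 with h3 | h3 <;>
    rcases hW2 with h4 | h4 <;> rw [h1, h2, h3, h4] at E <;> omega

lemma quad_id (c x u : ℤ) (h : 2 * x = u + 1) : 4 * (c * (x * (x - 1))) = c * u ^ 2 - c := by
  linear_combination c * (2 * x + u - 1) * h

lemma pair_lift (c x y : ℤ) : ∃ (ε : Bool) (X Y : ℤ),
    X + 3 * Y = 2 * x - 1 ∧ sg ε * (X - Y) = 2 * y - 1 ∧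
    4 * (c * X ^ 2) + 4 * (3 * c * Y ^ 2)
      = 4 * (c * (x * (x - 1))) + 4 * (3 * c * (y * (y - 1))) + 4 * c := by
  by_cases h : (x - y) % 2 = 0
  · obtain ⟨k, hk⟩ : ∃ k, x = 2 * k + y := ⟨(x - y) / 2, by omega⟩
    refine ⟨true, k + 2 * y - 1, k, by omega, ?_, ?_⟩
    · simp only [sg]; ring
    · subst hk; ring
  · obtain ⟨k, hk⟩ : ∃ k, x = 2 * k + 1 + y := ⟨(x - y - 1) / 2, by omega⟩
    refine ⟨false, k + 1 - y, k + y, by omega, ?_, ?_⟩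
    · simp only [sg]; ring
    · subst hk; ring

lemma pair_inj_aux (X Y X' Y' s s' : ℤ) (hs : s = 1 ∨ s = -1) (hs' : s' = 1 ∨ s' = -1)
    (hp : (X + Y) % 2 = 1) (hp' : (X' + Y') % 2 = 1)
    (h1 : (X + 3 * Y + 1) / 2 = (X' + 3 * Y' + 1) / 2)
    (h2 : (s * (X - Y) + 1) / 2 = (s' * (X' - Y') + 1) / 2) :
    s = s' ∧ X = X' ∧ Y = Y' := by
  rcases hs with h | h <;> rcases hs' with h' | h' <;> subst h <;> subst h' <;> omega

lemma mem_fwd_aux (a b n X Y Z W s₁ s₂ : ℤ)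
    (hs₁ : s₁ = 1 ∨ s₁ = -1) (hs₂ : s₂ = 1 ∨ s₂ = -1)
    (hp : (X + Y) % 2 = 1) (hq : (Z + W) % 2 = 1)
    (heq : 2 * n + a + b = a * X ^ 2 + 3 * a * Y ^ 2 + b * Z ^ 2 + 3 * b * W ^ 2) :
    2 * n = a * ((X + 3 * Y + 1) / 2 * ((X + 3 * Y + 1) / 2 - 1))
      + 3 * a * ((s₁ * (X - Y) + 1) / 2 * ((s₁ * (X - Y) + 1) / 2 - 1))
      + b * ((Z + 3 * W + 1) / 2 * ((Z + 3 * W + 1) / 2 - 1))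
      + 3 * b * ((s₂ * (Z - W) + 1) / 2 * ((s₂ * (Z - W) + 1) / 2 - 1)) := by
  obtain ⟨u, hu⟩ : ∃ u, u = s₁ * (X - Y) := ⟨_, rfl⟩
  obtain ⟨v, hv⟩ : ∃ v, v = s₂ * (Z - W) := ⟨_, rfl⟩
  rw [← hu, ← hv]
  have hu2 : u % 2 = 1 := by rcases hs₁ with h | h <;> rw [h] at hu <;> omega
  have hv2 : v % 2 = 1 := by rcases hs₂ with h | h <;> rw [h] at hv <;> omega
  have husq : u ^ 2 = (X - Y) ^ 2 := by rcases hs₁ with h | h <;> rw [h] at hu <;> subst hu <;> ring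
  have hvsq : v ^ 2 = (Z - W) ^ 2 := by rcases hs₂ with h | h <;> rw [h] at hv <;> subst hv <;> ring
  obtain ⟨x, hx⟩ : ∃ x, 2 * x = (X + 3 * Y) + 1 := ⟨(X + 3 * Y + 1) / 2, by omega⟩
  obtain ⟨y, hy⟩ : ∃ y, 2 * y = u + 1 := ⟨(u + 1) / 2, by omega⟩
  obtain ⟨z, hz⟩ : ∃ z, 2 * z = (Z + 3 * W) + 1 := ⟨(Z + 3 * W + 1) / 2, by omega⟩
  obtain ⟨w, hw⟩ : ∃ w, 2 * w = v + 1 := ⟨(v + 1) / 2, by omega⟩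
  have hx' : (X + 3 * Y + 1) / 2 = x := by omega
  have hy' : (u + 1) / 2 = y := by omega
  have hz' : (Z + 3 * W + 1) / 2 = z := by omega
  have hw' : (v + 1) / 2 = w := by omega
  rw [hx', hy', hz', hw']
  have e1 := quad_id a x (X + 3 * Y) hx
  have e2 := quad_id (3 * a) y u hy
  have e3 := quad_id b z (Z + 3 * W) hz
  have e4 := quad_id (3 * b) w v hw
  rw [husq] at e2
  rw [hvsq] at e4
  linarith [heq, e1, e2, e3, e4]

def Fv (ε₁ ε₂ : Bool) (v : ℤ × ℤ × ℤ × ℤ) : ℤ × ℤ × ℤ × ℤ :=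
  ((v.1 + 3 * v.2.1 + 1) / 2, (sg ε₁ * (v.1 - v.2.1) + 1) / 2,
   (v.2.2.1 + 3 * v.2.2.2 + 1) / 2, (sg ε₂ * (v.2.2.1 - v.2.2.2) + 1) / 2)

theorem stmt5 (a b n : ℤ) (ha : 0 < a) (hao : Odd a) (hb : 0 < b) (hbo : Odd b)
    (hn : 0 < n) (hmod : n % 2 = ((a - b) / 2) % 2) :
    t4 a (3*a) b (3*b) n = 4 * N4 a (3*a) b (3*b) (2*n + a + b) := by
  have ha2 : a % 2 = 1 := Int.odd_iff.mp hao
  have hb2 : b % 2 = 1 := Int.odd_iff.mp hbo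
  have key : ∀ v : ℤ × ℤ × ℤ × ℤ,
      2*n + a + b = a * v.1 ^ 2 + 3*a * v.2.1 ^ 2 + b * v.2.2.1 ^ 2 + 3*b * v.2.2.2 ^ 2 →
      (v.1 + v.2.1) % 2 = 1 ∧ (v.2.2.1 + v.2.2.2) % 2 = 1 := by
    rintro ⟨X, Y, Z, W⟩ hv
    exact parity4 a b n X Y Z W ha2 hb2 hmod hv
  have hFmem : ∀ (ε₁ ε₂ : Bool) (v : ℤ × ℤ × ℤ × ℤ),
      2*n + a + b = a * v.1 ^ 2 + 3*a * v.2.1 ^ 2 + b * v.2.2.1 ^ 2 + 3*b * v.2.2.2 ^ 2 →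
      2 * n = a * ((Fv ε₁ ε₂ v).1 * ((Fv ε₁ ε₂ v).1 - 1))
        + 3*a * ((Fv ε₁ ε₂ v).2.1 * ((Fv ε₁ ε₂ v).2.1 - 1))
        + b * ((Fv ε₁ ε₂ v).2.2.1 * ((Fv ε₁ ε₂ v).2.2.1 - 1))
        + 3*b * ((Fv ε₁ ε₂ v).2.2.2 * ((Fv ε₁ ε₂ v).2.2.2 - 1)) := by
    rintro ε₁ ε₂ ⟨X, Y, Z, W⟩ hv
    obtain ⟨hp, hq⟩ := key _ hv
    exact mem_fwd_aux a b n X Y Z W (sg ε₁) (sg ε₂) (sg_cases ε₁) (sg_cases ε₂) hp hq hv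
  -- the bijection
  have hbij : Function.Bijective
      (fun p : (Bool × Bool) × {v : ℤ × ℤ × ℤ × ℤ //
          2*n + a + b = a * v.1 ^ 2 + 3*a * v.2.1 ^ 2 + b * v.2.2.1 ^ 2 + 3*b * v.2.2.2 ^ 2} =>
        (⟨Fv p.1.1 p.1.2 p.2.1, hFmem p.1.1 p.1.2 p.2.1 p.2.2⟩ :
          {v : ℤ × ℤ × ℤ × ℤ // 2 * n = a * (v.1 * (v.1 - 1)) + 3*a * (v.2.1 * (v.2.1 - 1))
            + b * (v.2.2.1 * (v.2.2.1 - 1)) + 3*b * (v.2.2.2 * (v.2.2.2 - 1))})) := by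
    constructor
    · rintro ⟨⟨ε₁, ε₂⟩, ⟨⟨X, Y, Z, W⟩, hm⟩⟩ ⟨⟨ε₁', ε₂'⟩, ⟨⟨X', Y', Z', W'⟩, hm'⟩⟩ h
      obtain ⟨hp, hq⟩ := key _ hm
      obtain ⟨hp', hq'⟩ := key _ hm'
      have hval : Fv ε₁ ε₂ (X, Y, Z, W) = Fv ε₁' ε₂' (X', Y', Z', W') :=
        congrArg Subtype.val h
      simp only [Fv, Prod.mk.injEq] at hval
      obtain ⟨h1, h2, h3, h4⟩ := hval
      obtain ⟨hs1, hXX, hYY⟩ := pair_inj_aux X Y X' Y' _ _ (sg_cases ε₁) (sg_cases ε₁') hp hp' h1 h2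
      obtain ⟨hs2, hZZ, hWW⟩ := pair_inj_aux Z W Z' W' _ _ (sg_cases ε₂) (sg_cases ε₂') hq hq' h3 h4
      have he1 : ε₁ = ε₁' := sg_inj _ _ hs1
      have he2 : ε₂ = ε₂' := sg_inj _ _ hs2
      subst he1; subst he2; subst hXX; subst hYY; subst hZZ; subst hWW
      rfl
    · rintro ⟨⟨x, y, z, w⟩, hv⟩
      obtain ⟨ε₁, X, Y, h1, h2, h3⟩ := pair_lift a x y
      obtain ⟨ε₂, Z, W, g1, g2, g3⟩ := pair_lift b z w
      have hv' : 2 * n = a * (x * (x - 1)) + 3*a * (y * (y - 1)) + b * (z * (z - 1))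
          + 3*b * (w * (w - 1)) := hv
      have hmem : 2*n + a + b = a * (X, Y, Z, W).1 ^ 2 + 3*a * (X, Y, Z, W).2.1 ^ 2
          + b * (X, Y, Z, W).2.2.1 ^ 2 + 3*b * (X, Y, Z, W).2.2.2 ^ 2 := by
        show 2*n + a + b = a * X ^ 2 + 3*a * Y ^ 2 + b * Z ^ 2 + 3*b * W ^ 2
        linarith [h3, g3, hv']
      refine ⟨⟨(ε₁, ε₂), ⟨(X, Y, Z, W), hmem⟩⟩, ?_⟩
      apply Subtype.ext
      show Fv ε₁ ε₂ (X, Y, Z, W) = (x, y, z, w)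
      simp only [Fv, Prod.mk.injEq]
      refine ⟨by omega, ?_, by omega, ?_⟩
      · rw [h2]; omega
      · rw [g2]; omega
  have hcard := Nat.card_eq_of_bijective _ hbij
  have hT : t4 a (3*a) b (3*b) n
      = Nat.card {v : ℤ × ℤ × ℤ × ℤ // 2 * n = a * (v.1 * (v.1 - 1))
        + 3*a * (v.2.1 * (v.2.1 - 1)) + b * (v.2.2.1 * (v.2.2.1 - 1))
        + 3*b * (v.2.2.2 * (v.2.2.2 - 1))} := rfl
  have hN : N4 a (3*a) b (3*b) (2*n + a + b)
      = Nat.card {v : ℤ × ℤ × ℤ × ℤ //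
        2*n + a + b = a * v.1 ^ 2 + 3*a * v.2.1 ^ 2 + b * v.2.2.1 ^ 2 + 3*b * v.2.2.2 ^ 2} := rfl
  rw [hT, hN, ← hcard, Nat.card_prod]
  have h4 : Nat.card (Bool × Bool) = 4 := by simp [Nat.card_eq_fintype_card]
  rw [h4]
end

section
/- For positive integers a and b with a*b ≡ -1 (mod 4), and any nonnegative integer n, t(2a,2a,3a,b;n) = (1/3)*N(a,3a,16a,4b; 32n+28a+4b). -/
def P (S m X Y Z W : ℕ) : Prop :=
    ((1+8*S)*(X^2+3*Y^2+16*Z^2) + 4*(4*m+3)*W^2) % 32 = (28*(1+8*S)+4*(4*m+3)) % 32 →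
    (W % 2 = 1 ∧
      (((X % 8 = (4*Z+4) % 8 ∧ Y % 4 = 2) ∧ ¬((X+3*Y+8*Z+8) % 16 = 0 ∧ (X+7*Y) % 8 = 4) ∧ ¬((X+13*Y+8*Z+8) % 16 = 0 ∧ (X+Y) % 8 = 4)) ∨
       (¬(X % 8 = (4*Z+4) % 8 ∧ Y % 4 = 2) ∧ ((X+3*Y+8*Z+8) % 16 = 0 ∧ (X+7*Y) % 8 = 4) ∧ ¬((X+13*Y+8*Z+8) % 16 = 0 ∧ (X+Y) % 8 = 4)) ∨
       (¬(X % 8 = (4*Z+4) % 8 ∧ Y % 4 = 2) ∧ ¬((X+3*Y+8*Z+8) % 16 = 0 ∧ (X+7*Y) % 8 = 4) ∧ ((X+13*Y+8*Z+8) % 16 = 0 ∧ (X+Y) % 8 = 4))))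

instance (S m X Y Z W : ℕ) : Decidable (P S m X Y Z W) := by unfold P; infer_instance

set_option maxRecDepth 100000 in
lemma key₀ : ∀ (S : Fin 4) (m : Fin 2) (X Y : Fin 16) (Z : Fin 2) (W : Fin 4), P S.1 m.1 X.1 Y.1 Z.1 W.1 := by
  decide

/-- Int-level version, for residues. -/
lemma key₁ (S m X Y Z W : ℤ) (hS : 0 ≤ S ∧ S < 4) (hm : 0 ≤ m ∧ m < 2)
    (hX : 0 ≤ X ∧ X < 16) (hY : 0 ≤ Y ∧ Y < 16) (hZ : 0 ≤ Z ∧ Z < 2) (hW : 0 ≤ W ∧ W < 4)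
    (H : ((1+8*S)*(X^2+3*Y^2+16*Z^2) + 4*(4*m+3)*W^2) % 32 = (28*(1+8*S)+4*(4*m+3)) % 32) :
    W % 2 = 1 ∧
      (((X % 8 = (4*Z+4) % 8 ∧ Y % 4 = 2) ∧ ¬((X+3*Y+8*Z+8) % 16 = 0 ∧ (X+7*Y) % 8 = 4) ∧ ¬((X+13*Y+8*Z+8) % 16 = 0 ∧ (X+Y) % 8 = 4)) ∨
       (¬(X % 8 = (4*Z+4) % 8 ∧ Y % 4 = 2) ∧ ((X+3*Y+8*Z+8) % 16 = 0 ∧ (X+7*Y) % 8 = 4) ∧ ¬((X+13*Y+8*Z+8) % 16 = 0 ∧ (X+Y) % 8 = 4)) ∨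
       (¬(X % 8 = (4*Z+4) % 8 ∧ Y % 4 = 2) ∧ ¬((X+3*Y+8*Z+8) % 16 = 0 ∧ (X+7*Y) % 8 = 4) ∧ ((X+13*Y+8*Z+8) % 16 = 0 ∧ (X+Y) % 8 = 4))) := by
  lift S to ℕ using hS.1 with nS
  lift m to ℕ using hm.1 with nm
  lift X to ℕ using hX.1 with nX
  lift Y to ℕ using hY.1 with nY
  lift Z to ℕ using hZ.1 with nZ
  lift W to ℕ using hW.1 with nW
  have Hn : ((1+8*nS)*(nX^2+3*nY^2+16*nZ^2) + 4*(4*nm+3)*nW^2) % 32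
      = (28*(1+8*nS)+4*(4*nm+3)) % 32 := by exact_mod_cast H
  have h := key₀ ⟨nS, by exact_mod_cast hS.2⟩ ⟨nm, by exact_mod_cast hm.2⟩
    ⟨nX, by exact_mod_cast hX.2⟩ ⟨nY, by exact_mod_cast hY.2⟩
    ⟨nZ, by exact_mod_cast hZ.2⟩ ⟨nW, by exact_mod_cast hW.2⟩ Hn
  unfold P at h
  simp only [Fin.val_mk] at h
  omega

lemma sq_modEq (m x : ℤ) : (x % (2*m))^2 ≡ x^2 [ZMOD 4*m] := by
  have hk : x - x % (2*m) = 2*m*(x/(2*m)) := by rw [Int.emod_def]; ring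
  exact Int.modEq_iff_dvd.2 ⟨(x/(2*m))*(m*(x/(2*m)) + x % (2*m)),
    by linear_combination (x + x % (2*m) + 2*m*(x/(2*m)))*hk⟩

def phi0 (v : ℤ × ℤ × ℤ × ℤ) : ℤ × ℤ × ℤ × ℤ :=
  (4*(v.1 - v.2.1), 4*v.2.2.1 - 2, v.1 + v.2.1 - 1, 2*v.2.2.2 - 1)
def phi1 (v : ℤ × ℤ × ℤ × ℤ) : ℤ × ℤ × ℤ × ℤ :=
  (-2*(v.1 - v.2.1) - 6*v.2.2.1 + 3, 2*(v.1 - v.2.1) - 2*v.2.2.1 + 1, v.1 + v.2.1 - 1, 2*v.2.2.2 - 1)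
def phi2 (v : ℤ × ℤ × ℤ × ℤ) : ℤ × ℤ × ℤ × ℤ :=
  (-2*(v.1 - v.2.1) + 6*v.2.2.1 - 3, -2*(v.1 - v.2.1) - 2*v.2.2.1 + 1, v.1 + v.2.1 - 1, 2*v.2.2.2 - 1)

lemma phi0_inj : Function.Injective phi0 := by
  rintro ⟨p,q,r,s⟩ ⟨p',q',r',s'⟩ h
  simp only [phi0, Prod.mk.injEq] at h ⊢; omega
lemma phi1_inj : Function.Injective phi1 := by
  rintro ⟨p,q,r,s⟩ ⟨p',q',r',s'⟩ h
  simp only [phi1, Prod.mk.injEq] at h ⊢; omega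
lemma phi2_inj : Function.Injective phi2 := by
  rintro ⟨p,q,r,s⟩ ⟨p',q',r',s'⟩ h
  simp only [phi2, Prod.mk.injEq] at h ⊢; omega

set_option maxHeartbeats 4000000

theorem stmt6 (a b n : ℤ) (ha : 0 < a) (hb : 0 < b) (hab : (a * b) % 4 = 3)
    (hn : 0 ≤ n) :
    3 * t4 (2*a) (2*a) (3*a) b n = N4 a (3*a) (16*a) (4*b) (32*n + 28*a + 4*b) := by
  set T : Set (ℤ × ℤ × ℤ × ℤ) := {v : ℤ × ℤ × ℤ × ℤ |
    2 * n = 2 * a * (v.1 * (v.1 - 1)) + 2 * a * (v.2.1 * (v.2.1 - 1))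
      + 3 * a * (v.2.2.1 * (v.2.2.1 - 1)) + b * (v.2.2.2 * (v.2.2.2 - 1))} with hTdef
  set S : Set (ℤ × ℤ × ℤ × ℤ) := {v : ℤ × ℤ × ℤ × ℤ |
    32 * n + 28 * a + 4 * b = a * v.1 ^ 2 + 3 * a * v.2.1 ^ 2 + 16 * a * v.2.2.1 ^ 2
      + 4 * b * v.2.2.2 ^ 2} with hSdef
  rw [show t4 (2*a) (2*a) (3*a) b n = T.ncard from rfl,
      show N4 a (3*a) (16*a) (4*b) (32*n + 28*a + 4*b) = S.ncard from rfl]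
  -- a, b are odd
  have hao : a % 2 = 1 := by
    rcases Int.even_or_odd a with ⟨k, hk⟩ | ⟨k, hk⟩
    · exfalso; have : a * b = 2*(k*b) := by rw [hk]; ring
      omega
    · omega
  have hbo : b % 2 = 1 := by
    rcases Int.even_or_odd b with ⟨k, hk⟩ | ⟨k, hk⟩
    · exfalso; have : a * b = 2*(a*k) := by rw [hk]; ring
      omega
    · omega
  obtain ⟨s', hs'⟩ : ∃ s', a^2 = 1 + 8*s' := by
    obtain ⟨k, hk⟩ : ∃ k, a = 2*k+1 := ⟨a/2, by omega⟩
    obtain ⟨t, ht⟩ := Int.even_mul_succ_self k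
    exact ⟨t, by rw [hk]; linear_combination 4*ht⟩
  obtain ⟨m', hm'⟩ : ∃ m', a*b = 4*m'+3 := ⟨(a*b)/4, by omega⟩
  -- the key congruence dichotomy for elements of S
  have hmain : ∀ x y z w : ℤ,
      32*n + 28*a + 4*b = a * x^2 + 3*a * y^2 + 16*a * z^2 + 4*b * w^2 →
      (w % 2 = 1 ∧
        ((((x-4*z-4) % 8 = 0 ∧ (y-2) % 4 = 0) ∧ ¬((x+3*y+8*z+8) % 16 = 0 ∧ (x-y-4) % 8 = 0) ∧ ¬((x-3*y+8*z+8) % 16 = 0 ∧ (x+y-4) % 8 = 0)) ∨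
         (¬((x-4*z-4) % 8 = 0 ∧ (y-2) % 4 = 0) ∧ ((x+3*y+8*z+8) % 16 = 0 ∧ (x-y-4) % 8 = 0) ∧ ¬((x-3*y+8*z+8) % 16 = 0 ∧ (x+y-4) % 8 = 0)) ∨
         (¬((x-4*z-4) % 8 = 0 ∧ (y-2) % 4 = 0) ∧ ¬((x+3*y+8*z+8) % 16 = 0 ∧ (x-y-4) % 8 = 0) ∧ ((x-3*y+8*z+8) % 16 = 0 ∧ (x+y-4) % 8 = 0)))) := by
    intro x y z w hv
    have hx2 : x^2 ≡ (x % 16)^2 [ZMOD 32] := by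
      have h := (sq_modEq 8 x).symm; norm_num at h; exact h
    have hy2 : y^2 ≡ (y % 16)^2 [ZMOD 32] := by
      have h := (sq_modEq 8 y).symm; norm_num at h; exact h
    have hz2 : z^2 ≡ (z % 2)^2 [ZMOD 4] := by
      have h := (sq_modEq 1 z).symm; norm_num at h; exact h
    have hw2 : w^2 ≡ (w % 4)^2 [ZMOD 8] := by
      have h := (sq_modEq 2 w).symm; norm_num at h; exact h
    have ha2 : a^2 ≡ 1 + 8*(s' % 4) [ZMOD 32] := by
      show a^2 % 32 = (1 + 8*(s' % 4)) % 32
      rw [hs']; omega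
    have hab2 : a*b ≡ 4*(m' % 2) + 3 [ZMOD 8] := by
      show (a*b) % 8 = (4*(m' % 2) + 3) % 8
      rw [hm']; omega
    have t1 : a^2 * x^2 ≡ (1+8*(s' % 4)) * (x % 16)^2 [ZMOD 32] := ha2.mul hx2
    have t2 : 3*(a^2 * y^2) ≡ 3*((1+8*(s' % 4)) * (y % 16)^2) [ZMOD 32] :=
      (ha2.mul hy2).mul_left 3
    have t3 : 16*(a^2 * z^2) ≡ 16*((1+8*(s' % 4)) * (z % 2)^2) [ZMOD 32] := by
      have h := ((Int.ModEq.of_dvd (by norm_num) ha2).mul hz2).mul_left' (c := 16)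
      exact Int.ModEq.of_dvd (by norm_num) h
    have t4' : 4*((a*b) * w^2) ≡ 4*((4*(m' % 2)+3) * (w % 4)^2) [ZMOD 32] := by
      have h := (hab2.mul hw2).mul_left' (c := 4)
      exact Int.ModEq.of_dvd (by norm_num) h
    have hsum : a^2*x^2 + 3*(a^2*y^2) + 16*(a^2*z^2) + 4*((a*b)*w^2)
        ≡ (1+8*(s' % 4))*(x % 16)^2 + 3*((1+8*(s' % 4))*(y % 16)^2)
          + 16*((1+8*(s' % 4))*(z % 2)^2) + 4*((4*(m' % 2)+3)*(w % 4)^2) [ZMOD 32] :=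
      ((t1.add t2).add t3).add t4'
    have hconstsum : 28*a^2 + 4*(a*b) ≡ 28*(1+8*(s' % 4)) + 4*(4*(m' % 2)+3) [ZMOD 32] :=
      (ha2.mul_left 28).add (Int.ModEq.of_dvd (by norm_num) (hab2.mul_left' (c := 4)))
    have hbig : a^2*x^2 + 3*(a^2*y^2) + 16*(a^2*z^2) + 4*((a*b)*w^2)
        = 32*(a*n) + (28*a^2 + 4*(a*b)) := by linear_combination (-a)*hv
    have h8 : a^2*x^2 + 3*(a^2*y^2) + 16*(a^2*z^2) + 4*((a*b)*w^2)
        ≡ 28*(1+8*(s' % 4)) + 4*(4*(m' % 2)+3) [ZMOD 32] := by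
      rw [hbig]
      have hc : (28*a^2 + 4*(a*b)) % 32 = (28*(1+8*(s' % 4)) + 4*(4*(m' % 2)+3)) % 32 := hconstsum
      show (32*(a*n) + (28*a^2 + 4*(a*b))) % 32 = (28*(1+8*(s' % 4)) + 4*(4*(m' % 2)+3)) % 32
      omega
    have Hfull : ((1+8*(s' % 4))*((x % 16)^2+3*(y % 16)^2+16*(z % 2)^2)
        + 4*(4*(m' % 2)+3)*(w % 4)^2) % 32
        = (28*(1+8*(s' % 4)) + 4*(4*(m' % 2)+3)) % 32 := by
      have hring : (1+8*(s' % 4))*((x % 16)^2+3*(y % 16)^2+16*(z % 2)^2)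
          + 4*(4*(m' % 2)+3)*(w % 4)^2
          = (1+8*(s' % 4))*(x % 16)^2 + 3*((1+8*(s' % 4))*(y % 16)^2)
            + 16*((1+8*(s' % 4))*(z % 2)^2) + 4*((4*(m' % 2)+3)*(w % 4)^2) := by ring
      rw [hring]
      exact (hsum.symm.trans h8 : Int.ModEq 32 _ _)
    have hk := key₁ (s' % 4) (m' % 2) (x % 16) (y % 16) (z % 2) (w % 4)
      ⟨by omega, by omega⟩ ⟨by omega, by omega⟩ ⟨by omega, by omega⟩ ⟨by omega, by omega⟩
      ⟨by omega, by omega⟩ ⟨by omega, by omega⟩ Hfull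
    omega
  -- images of T under phi maps are inside S
  have him0 : phi0 '' T ⊆ S := by
    rintro _ ⟨⟨p,q,r,s⟩, ht, rfl⟩
    simp only [hTdef, Set.mem_setOf_eq] at ht
    simp only [hSdef, phi0, Set.mem_setOf_eq]
    linear_combination 16*ht
  have him1 : phi1 '' T ⊆ S := by
    rintro _ ⟨⟨p,q,r,s⟩, ht, rfl⟩
    simp only [hTdef, Set.mem_setOf_eq] at ht
    simp only [hSdef, phi1, Set.mem_setOf_eq]
    linear_combination 16*ht
  have him2 : phi2 '' T ⊆ S := by
    rintro _ ⟨⟨p,q,r,s⟩, ht, rfl⟩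
    simp only [hTdef, Set.mem_setOf_eq] at ht
    simp only [hSdef, phi2, Set.mem_setOf_eq]
    linear_combination 16*ht
  -- covering
  have hcover : S = (phi0 '' T ∪ phi1 '' T) ∪ phi2 '' T := by
    apply Set.Subset.antisymm
    · rintro ⟨x,y,z,w⟩ hv
      simp only [hSdef, Set.mem_setOf_eq] at hv
      obtain ⟨hw1, hd⟩ := hmain x y z w hv
      simp only [Set.mem_union]
      rcases hd with ⟨⟨hA1,hA2⟩,hnB,hnC⟩ | ⟨hnA,⟨hB1,hB2⟩,hnC⟩ | ⟨hnA,hnB,⟨hC1,hC2⟩⟩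
      · -- phi0
        left; left
        obtain ⟨p, hp⟩ : ∃ p:ℤ, p = (x/4 + z + 1)/2 := ⟨_, rfl⟩
        obtain ⟨q, hq⟩ : ∃ q:ℤ, q = p - x/4 := ⟨_, rfl⟩
        obtain ⟨r, hr⟩ : ∃ r:ℤ, r = (y+2)/4 := ⟨_, rfl⟩
        obtain ⟨s, hs⟩ : ∃ s:ℤ, s = (w+1)/2 := ⟨_, rfl⟩
        have hx : x = 4*(p-q) := by omega
        have hy : y = 4*r-2 := by omega
        have hz : z = p+q-1 := by omega
        have hw' : w = 2*s-1 := by omega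
        refine ⟨(p,q,r,s), ?_, ?_⟩
        · simp only [hTdef, Set.mem_setOf_eq]
          rw [hx, hy, hz, hw'] at hv
          have h16 : 16*(2*n) = 16*(2*a*(p*(p-1)) + 2*a*(q*(q-1)) + 3*a*(r*(r-1)) + b*(s*(s-1))) := by
            linear_combination hv
          linarith
        · simp only [phi0, Prod.mk.injEq]
          refine ⟨by omega, by omega, by omega, by omega⟩
      · -- B: phi2
        right
        obtain ⟨d, hd'⟩ : ∃ d:ℤ, d = (-x - 3*y)/8 := ⟨_, rfl⟩
        obtain ⟨r, hr⟩ : ∃ r:ℤ, r = (x - y + 4)/8 := ⟨_, rfl⟩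
        obtain ⟨p, hp⟩ : ∃ p:ℤ, p = (d + z + 1)/2 := ⟨_, rfl⟩
        obtain ⟨q, hq⟩ : ∃ q:ℤ, q = p - d := ⟨_, rfl⟩
        obtain ⟨s, hs⟩ : ∃ s:ℤ, s = (w+1)/2 := ⟨_, rfl⟩
        have hx : x = -2*(p-q) + 6*r - 3 := by omega
        have hy : y = -2*(p-q) - 2*r + 1 := by omega
        have hz : z = p+q-1 := by omega
        have hw' : w = 2*s-1 := by omega
        refine ⟨(p,q,r,s), ?_, ?_⟩
        · simp only [hTdef, Set.mem_setOf_eq]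
          rw [hx, hy, hz, hw'] at hv
          have h16 : 16*(2*n) = 16*(2*a*(p*(p-1)) + 2*a*(q*(q-1)) + 3*a*(r*(r-1)) + b*(s*(s-1))) := by
            linear_combination hv
          linarith
        · simp only [phi2, Prod.mk.injEq]
          refine ⟨by omega, by omega, by omega, by omega⟩
      · -- C: phi1
        left; right
        obtain ⟨d, hd'⟩ : ∃ d:ℤ, d = (3*y - x)/8 := ⟨_, rfl⟩
        obtain ⟨r, hr⟩ : ∃ r:ℤ, r = (4 - x - y)/8 := ⟨_, rfl⟩
        obtain ⟨p, hp⟩ : ∃ p:ℤ, p = (d + z + 1)/2 := ⟨_, rfl⟩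
        obtain ⟨q, hq⟩ : ∃ q:ℤ, q = p - d := ⟨_, rfl⟩
        obtain ⟨s, hs⟩ : ∃ s:ℤ, s = (w+1)/2 := ⟨_, rfl⟩
        have hx : x = -2*(p-q) - 6*r + 3 := by omega
        have hy : y = 2*(p-q) - 2*r + 1 := by omega
        have hz : z = p+q-1 := by omega
        have hw' : w = 2*s-1 := by omega
        refine ⟨(p,q,r,s), ?_, ?_⟩
        · simp only [hTdef, Set.mem_setOf_eq]
          rw [hx, hy, hz, hw'] at hv
          have h16 : 16*(2*n) = 16*(2*a*(p*(p-1)) + 2*a*(q*(q-1)) + 3*a*(r*(r-1)) + b*(s*(s-1))) := by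
            linear_combination hv
          linarith
        · simp only [phi1, Prod.mk.injEq]
          refine ⟨by omega, by omega, by omega, by omega⟩
    · intro v hv
      rcases hv with hv | hv
      · rcases hv with hv | hv
        exacts [him0 hv, him1 hv]
      · exact him2 hv
  -- disjointness
  have hdisj01 : Disjoint (phi0 '' T) (phi1 '' T) := by
    rw [Set.disjoint_left]
    rintro _ ⟨⟨p,q,r,s⟩, ht, rfl⟩ ⟨⟨p',q',r',s'⟩, ht', heq⟩
    have hv := him0 ⟨(p,q,r,s), ht, rfl⟩
    simp only [hSdef, Set.mem_setOf_eq, phi0] at hv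
    obtain ⟨hw1, hd⟩ := hmain _ _ _ _ hv
    simp only [phi0, phi1, Prod.mk.injEq] at heq
    obtain ⟨e1, e2, e3, e4⟩ := heq
    rcases hd with ⟨hA,hnB,hnC⟩ | ⟨hnA,hB,hnC⟩ | ⟨hnA,hnB,hC⟩
    · exact hnC ⟨by omega, by omega⟩
    · exact hnA ⟨by omega, by omega⟩
    · exact hnA ⟨by omega, by omega⟩
  have hdisj02 : Disjoint (phi0 '' T) (phi2 '' T) := by
    rw [Set.disjoint_left]
    rintro _ ⟨⟨p,q,r,s⟩, ht, rfl⟩ ⟨⟨p',q',r',s'⟩, ht', heq⟩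
    have hv := him0 ⟨(p,q,r,s), ht, rfl⟩
    simp only [hSdef, Set.mem_setOf_eq, phi0] at hv
    obtain ⟨hw1, hd⟩ := hmain _ _ _ _ hv
    simp only [phi0, phi2, Prod.mk.injEq] at heq
    obtain ⟨e1, e2, e3, e4⟩ := heq
    rcases hd with ⟨hA,hnB,hnC⟩ | ⟨hnA,hB,hnC⟩ | ⟨hnA,hnB,hC⟩
    · exact hnB ⟨by omega, by omega⟩
    · exact hnA ⟨by omega, by omega⟩
    · exact hnA ⟨by omega, by omega⟩
  have hdisj12 : Disjoint (phi1 '' T) (phi2 '' T) := by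
    rw [Set.disjoint_left]
    rintro _ ⟨⟨p,q,r,s⟩, ht, rfl⟩ ⟨⟨p',q',r',s'⟩, ht', heq⟩
    have hv := him1 ⟨(p,q,r,s), ht, rfl⟩
    simp only [hSdef, Set.mem_setOf_eq, phi1] at hv
    obtain ⟨hw1, hd⟩ := hmain _ _ _ _ hv
    simp only [phi1, phi2, Prod.mk.injEq] at heq
    obtain ⟨e1, e2, e3, e4⟩ := heq
    rcases hd with ⟨hA,hnB,hnC⟩ | ⟨hnA,hB,hnC⟩ | ⟨hnA,hnB,hC⟩
    · exact hnC ⟨by omega, by omega⟩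
    · exact hnC ⟨by omega, by omega⟩
    · exact hnB ⟨by omega, by omega⟩
  -- finiteness
  have hM1 : (1:ℤ) ≤ 32*n + 28*a + 4*b := by omega
  have hSfin : S.Finite := by
    set M := 32*n + 28*a + 4*b with hMdef
    apply Set.Finite.subset (Set.finite_Icc ((-M,-M,-M,-M) : ℤ×ℤ×ℤ×ℤ) (M,M,M,M))
    rintro ⟨x,y,z,w⟩ hv
    simp only [hSdef, Set.mem_setOf_eq] at hv
    have ha1 : (0:ℤ) ≤ a - 1 := by omega
    have h1 : a*x^2 ≤ M := by nlinarith [mul_nonneg ha.le (sq_nonneg y), mul_nonneg ha.le (sq_nonneg z), mul_nonneg hb.le (sq_nonneg w)]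
    have h2 : a*y^2 ≤ M := by nlinarith [mul_nonneg ha.le (sq_nonneg x), mul_nonneg ha.le (sq_nonneg z), mul_nonneg hb.le (sq_nonneg w), mul_nonneg ha.le (sq_nonneg y)]
    have h3 : a*z^2 ≤ M := by nlinarith [mul_nonneg ha.le (sq_nonneg y), mul_nonneg ha.le (sq_nonneg x), mul_nonneg hb.le (sq_nonneg w), mul_nonneg ha.le (sq_nonneg z)]
    have h4 : b*w^2 ≤ M := by nlinarith [mul_nonneg ha.le (sq_nonneg y), mul_nonneg ha.le (sq_nonneg z), mul_nonneg ha.le (sq_nonneg x), mul_nonneg hb.le (sq_nonneg w)]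
    have hx2 : x^2 ≤ M := by nlinarith [mul_nonneg ha1 (sq_nonneg x)]
    have hy2 : y^2 ≤ M := by nlinarith [mul_nonneg ha1 (sq_nonneg y)]
    have hz2 : z^2 ≤ M := by nlinarith [mul_nonneg ha1 (sq_nonneg z)]
    have hw2 : w^2 ≤ M := by nlinarith [mul_nonneg (by omega : (0:ℤ) ≤ b - 1) (sq_nonneg w)]
    have keybound : ∀ u:ℤ, u^2 ≤ M → -M ≤ u ∧ u ≤ M := by
      intro u hu
      constructor
      · nlinarith [sq_nonneg (u+1)]
      · nlinarith [sq_nonneg (u-1)]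
    obtain ⟨bx1, bx2⟩ := keybound x hx2
    obtain ⟨by1, by2⟩ := keybound y hy2
    obtain ⟨bz1, bz2⟩ := keybound z hz2
    obtain ⟨bw1, bw2⟩ := keybound w hw2
    simp only [Set.mem_Icc, Prod.le_def]
    exact ⟨⟨bx1, by1, bz1, bw1⟩, bx2, by2, bz2, bw2⟩
  have hfin0 : (phi0 '' T).Finite := hSfin.subset him0
  have hfin1 : (phi1 '' T).Finite := hSfin.subset him1
  have hfin2 : (phi2 '' T).Finite := hSfin.subset him2
  have hTfin : T.Finite := Set.Finite.of_finite_image hfin0 phi0_inj.injOn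
  -- counting
  have hc0 : (phi0 '' T).ncard = T.ncard := Set.ncard_image_of_injective T phi0_inj
  have hc1 : (phi1 '' T).ncard = T.ncard := Set.ncard_image_of_injective T phi1_inj
  have hc2 : (phi2 '' T).ncard = T.ncard := Set.ncard_image_of_injective T phi2_inj
  rw [hcover, Set.ncard_union_eq (hdisj02.union_left hdisj12) (hfin0.union hfin1) hfin2,
    Set.ncard_union_eq hdisj01 hfin0 hfin1, hc0, hc1, hc2]
  ring
end

section
/- For positive integers a and b with a*b ≡ 1 (mod 4), and any nonnegative integer n, t(a,6a,6a,b;n) = (1/3)*N(a,3a,48a,4b; 32n+52a+4b). -/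
def psi0 : ℤ×ℤ×ℤ×ℤ → ℤ×ℤ×ℤ×ℤ := fun p =>
  (4*p.1-2, 4*p.2.1+4*p.2.2.1-4, p.2.1-p.2.2.1, 2*p.2.2.2-1)
def psi1 : ℤ×ℤ×ℤ×ℤ → ℤ×ℤ×ℤ×ℤ := fun p =>
  (-2*p.1-6*p.2.1-6*p.2.2.1+7, 2*p.1-2*p.2.1-2*p.2.2.1+1, p.2.1-p.2.2.1, 2*p.2.2.2-1)
def psi2 : ℤ×ℤ×ℤ×ℤ → ℤ×ℤ×ℤ×ℤ := fun p =>
  (-2*p.1+6*p.2.1+6*p.2.2.1-5, -2*p.1-2*p.2.1-2*p.2.2.1+3, p.2.1-p.2.2.1, 2*p.2.2.2-1)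

def TT (a b n : ℤ) : Set (ℤ×ℤ×ℤ×ℤ) :=
  {v | 2 * n = a * (v.1 * (v.1 - 1)) + 6*a * (v.2.1 * (v.2.1 - 1))
      + 6*a * (v.2.2.1 * (v.2.2.1 - 1)) + b * (v.2.2.2 * (v.2.2.2 - 1))}

def SS (a b n : ℤ) : Set (ℤ×ℤ×ℤ×ℤ) :=
  {v | 32*n + 52*a + 4*b = a * v.1 ^ 2 + 3*a * v.2.1 ^ 2 + 48*a * v.2.2.1 ^ 2 + 4*b * v.2.2.2 ^ 2}

lemma psi0_inj : Function.Injective psi0 := by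
  rintro ⟨x,y,z,w⟩ ⟨x',y',z',w'⟩ h
  simp only [psi0, Prod.mk.injEq] at h ⊢
  refine ⟨by omega, by omega, by omega, by omega⟩

lemma psi1_inj : Function.Injective psi1 := by
  rintro ⟨x,y,z,w⟩ ⟨x',y',z',w'⟩ h
  simp only [psi1, Prod.mk.injEq] at h ⊢
  refine ⟨by omega, by omega, by omega, by omega⟩

lemma psi2_inj : Function.Injective psi2 := by
  rintro ⟨x,y,z,w⟩ ⟨x',y',z',w'⟩ h
  simp only [psi2, Prod.mk.injEq] at h ⊢
  refine ⟨by omega, by omega, by omega, by omega⟩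

lemma oddsq (m : ℤ) : ∃ s, (2*m+1)^2 = 8*s+1 := by
  obtain ⟨c, hc⟩ := Int.even_mul_succ_self m
  exact ⟨c, by linear_combination 4*hc⟩

lemma sq_par (m : ℤ) : ∃ c, m^2 = m + 2*c := by
  obtain ⟨c, hc⟩ := Int.even_mul_succ_self (m-1)
  exact ⟨c, by linear_combination hc⟩

lemma dvd4_of_odd (a c : ℤ) (ha : a % 2 = 1) (h : (4:ℤ) ∣ a * c) : (4:ℤ) ∣ c := by
  obtain ⟨α, rfl⟩ : ∃ α, a = 2*α+1 := ⟨(a-1)/2, by omega⟩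
  obtain ⟨t, ht⟩ := h
  exact ⟨(2*α+1)*t - (α^2+α)*c, by linear_combination (2*α+1)*ht⟩

lemma coord_bound (c M x : ℤ) (hc : 1 ≤ c) (h : c * x^2 ≤ M) : -M ≤ x ∧ x ≤ M := by
  have h2 : x^2 ≤ M := by nlinarith [sq_nonneg x]
  constructor
  · nlinarith [sq_nonneg (2*x+1)]
  · nlinarith [sq_nonneg (2*x-1)]

lemma maps0 (a b n : ℤ) : psi0 '' TT a b n ⊆ SS a b n := by
  rintro _ ⟨⟨x,y,z,w⟩, hu, rfl⟩
  simp only [TT, Set.mem_setOf_eq] at hu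
  simp only [SS, psi0, Set.mem_setOf_eq]
  linear_combination 16*hu

lemma maps1 (a b n : ℤ) : psi1 '' TT a b n ⊆ SS a b n := by
  rintro _ ⟨⟨x,y,z,w⟩, hu, rfl⟩
  simp only [TT, Set.mem_setOf_eq] at hu
  simp only [SS, psi1, Set.mem_setOf_eq]
  linear_combination 16*hu

lemma maps2 (a b n : ℤ) : psi2 '' TT a b n ⊆ SS a b n := by
  rintro _ ⟨⟨x,y,z,w⟩, hu, rfl⟩
  simp only [TT, Set.mem_setOf_eq] at hu
  simp only [SS, psi2, Set.mem_setOf_eq]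
  linear_combination 16*hu

lemma finS (a b n : ℤ) (ha : 0 < a) (hb : 0 < b) : (SS a b n).Finite := by
  set M := 32*n + 52*a + 4*b with hM
  apply Set.Finite.subset (((Set.finite_Icc (-M) M).prod (((Set.finite_Icc (-M) M)).prod
    (((Set.finite_Icc (-M) M)).prod ((Set.finite_Icc (-M) M))))))
  rintro ⟨x,y,z,w⟩ hv
  simp only [SS, Set.mem_setOf_eq] at hv
  have hx : a * x^2 ≤ M := by nlinarith [sq_nonneg y, sq_nonneg z, sq_nonneg w]
  have hy : 3*a * y^2 ≤ M := by nlinarith [sq_nonneg x, sq_nonneg z, sq_nonneg w]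
  have hz : 48*a * z^2 ≤ M := by nlinarith [sq_nonneg y, sq_nonneg x, sq_nonneg w]
  have hw : 4*b * w^2 ≤ M := by nlinarith [sq_nonneg y, sq_nonneg z, sq_nonneg x]
  have bx := coord_bound a M x (by omega) hx
  have by' := coord_bound (3*a) M y (by omega) (by linarith)
  have bz := coord_bound (48*a) M z (by omega) (by linarith)
  have bw := coord_bound (4*b) M w (by omega) (by linarith)
  simp only [Set.mem_prod, Set.mem_Icc]
  exact ⟨⟨bx.1, bx.2⟩, ⟨by'.1, by'.2⟩, ⟨bz.1, bz.2⟩, ⟨bw.1, bw.2⟩⟩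

lemma disj01 (a b n : ℤ) : Disjoint (psi0 '' TT a b n) (psi1 '' TT a b n) := by
  rw [Set.disjoint_left]
  rintro v ⟨⟨x,y,z,w⟩, -, rfl⟩ ⟨⟨x',y',z',w'⟩, -, h⟩
  simp only [psi0, psi1, Prod.mk.injEq] at h
  omega

lemma disj02 (a b n : ℤ) : Disjoint (psi0 '' TT a b n) (psi2 '' TT a b n) := by
  rw [Set.disjoint_left]
  rintro v ⟨⟨x,y,z,w⟩, -, rfl⟩ ⟨⟨x',y',z',w'⟩, -, h⟩
  simp only [psi0, psi2, Prod.mk.injEq] at h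
  omega

lemma disj12 (a b n : ℤ) : Disjoint (psi1 '' TT a b n) (psi2 '' TT a b n) := by
  rw [Set.disjoint_left]
  rintro v ⟨⟨x,y,z,w⟩, -, rfl⟩ ⟨⟨x',y',z',w'⟩, -, h⟩
  simp only [psi1, psi2, Prod.mk.injEq] at h
  omega

lemma surj (a b n : ℤ) (α β : ℤ) (hA : a = 2*α+1) (hB : b = 2*β+1) (hAB : (α+β) % 2 = 0) :
    SS a b n ⊆ psi0 '' TT a b n ∪ psi1 '' TT a b n ∪ psi2 '' TT a b n := by
  rintro ⟨X,Y,Z,W⟩ hv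
  simp only [SS, Set.mem_setOf_eq] at hv
  obtain ⟨k, hX | hX⟩ := Int.even_or_odd' X <;> subst hX <;>
    obtain ⟨l, hY | hY⟩ := Int.even_or_odd' Y <;> subst hY
  · -- X = 2k, Y = 2l : CASE A
    obtain ⟨g, hg | hg⟩ := Int.even_or_odd' (k+l)
    · -- k+l even : contradiction
      exfalso
      have hk : k = 2*g - l := by omega
      subst hk
      obtain ⟨ω, hW | hW⟩ := Int.even_or_odd' W <;> subst hW
      · obtain ⟨t, ht⟩ : ∃ t, 32*n+52*a+4*b = 16*t :=
          ⟨a*(g^2-g*l+l^2)+3*a*Z^2+b*ω^2, by linear_combination hv⟩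
        omega
      · obtain ⟨s3, hs3⟩ := oddsq ω
        obtain ⟨t, ht⟩ : ∃ t, 32*n+52*a = 16*t :=
          ⟨a*(g^2-g*l+l^2)+3*a*Z^2+2*b*s3, by linear_combination hv + 4*b*hs3⟩
        omega
    · -- k+l odd : class S0
      have hk : k = 2*g+1 - l := by omega
      subst hk
      obtain ⟨s1, hs1⟩ := oddsq g
      obtain ⟨ω, hW | hW⟩ := Int.even_or_odd' W <;> subst hW
      · exfalso
        obtain ⟨t, ht⟩ : ∃ t, 32*n+48*a+4*b = 8*t :=
          ⟨4*a*s1 - a*((2*g+1)*l) + 2*a*l^2 + 6*a*Z^2 + 2*b*ω^2, by linear_combination hv + 4*a*hs1⟩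
        omega
      · obtain ⟨s3, hs3⟩ := oddsq ω
        have h8 : 8*(a*((2*g+1)*l - 2*l^2 - 6*Z^2 + 6) - 4*(a*s1 + b*s3 - n)) = 0 := by
          linear_combination hv + 4*a*hs1 + 4*b*hs3
        have hd0 : a*((2*g+1)*l - 2*l^2 - 6*Z^2 + 6) = 4*(a*s1 + b*s3 - n) := by linarith
        obtain ⟨t, ht⟩ := dvd4_of_odd a _ (by omega) ⟨_, hd0⟩
        have ht' : 2*(g*l) + l - 2*l^2 - 6*Z^2 + 6 = 4*t := by linear_combination ht
        obtain ⟨ll, hll⟩ := sq_par l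
        obtain ⟨zz, hzz⟩ := sq_par Z
        rw [hll, hzz] at ht'
        obtain ⟨QQ, hQQ⟩ : ∃ x, g*l = x := ⟨_, rfl⟩
        rw [hQQ] at ht'
        have hleven : l % 2 = 0 := by omega
        obtain ⟨L, hL⟩ : ∃ L, l = 2*L := ⟨l/2, by omega⟩
        obtain ⟨QQ2, hQQ2⟩ : ∃ x, QQ = 2*x := ⟨g*L, by rw [← hQQ, hL]; ring⟩
        obtain ⟨x₀,y₀,z₀,w₀,C1,C2,C3,C4⟩ :
            ∃ x y z w, 4*x-2 = 2*(2*g+1-l) ∧ 4*y+4*z-4 = 2*l ∧ y-z = Z ∧ 2*w-1 = 2*ω+1 :=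
          ⟨(2*(2*g+1-l)+2)/4, (2*l+4+4*Z)/8, (2*l+4+4*Z)/8 - Z, ω+1,
            by omega, by omega, by omega, by omega⟩
        rw [← C1, ← C2, ← C3, ← C4] at hv
        refine Or.inl (Or.inl ⟨(x₀,y₀,z₀,w₀), ?_, ?_⟩)
        · simp only [TT, Set.mem_setOf_eq]
          have h16 : 16*(2*n) = 16*(a * (x₀ * (x₀ - 1)) + 6*a * (y₀ * (y₀ - 1))
              + 6*a * (z₀ * (z₀ - 1)) + b * (w₀ * (w₀ - 1))) := by linear_combination hv
          linarith
        · simp only [psi0, Prod.mk.injEq]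
          exact ⟨C1, C2, C3, C4⟩
  · -- X = 2k, Y = 2l+1 : contradiction
    exfalso
    obtain ⟨s, hs⟩ := oddsq l
    obtain ⟨t, ht⟩ : ∃ t, 32*n+52*a+4*b = 4*t + 3*a :=
      ⟨a*k^2+6*a*s+12*a*Z^2+b*W^2, by linear_combination hv + 3*a*hs⟩
    omega
  · -- X = 2k+1, Y = 2l : contradiction
    exfalso
    obtain ⟨s, hs⟩ := oddsq k
    obtain ⟨t, ht⟩ : ∃ t, 32*n+52*a+4*b = 4*t + a :=
      ⟨2*a*s+3*a*l^2+12*a*Z^2+b*W^2, by linear_combination hv + a*hs⟩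
    omega
  · -- X = 2k+1, Y = 2l+1 : CASE B
    obtain ⟨s1, hs1⟩ := oddsq k
    obtain ⟨s2, hs2⟩ := oddsq l
    obtain ⟨ω, hW | hW⟩ := Int.even_or_odd' W <;> subst hW
    · exfalso
      obtain ⟨t, ht⟩ : ∃ t, 32*n+48*a+4*b = 8*t :=
        ⟨a*s1+3*a*s2+6*a*Z^2+2*b*ω^2, by linear_combination hv + a*hs1 + 3*a*hs2⟩
      omega
    · obtain ⟨s3, hs3⟩ := oddsq ω
      have h8 : 8*(a*(s1+3*s2+6*Z^2-6) - 4*(n - b*s3)) = 0 := by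
        linear_combination -hv - a*hs1 - 3*a*hs2 - 4*b*hs3
      have hd0 : a*(s1+3*s2+6*Z^2-6) = 4*(n - b*s3) := by linarith
      obtain ⟨t, ht⟩ := dvd4_of_odd a _ (by omega) ⟨_, hd0⟩
      obtain ⟨zz, hzz⟩ := sq_par Z
      rw [hzz] at ht
      obtain ⟨u, hk | hk⟩ := Int.even_or_odd' k <;> subst hk <;>
        obtain ⟨v, hl | hl⟩ := Int.even_or_odd' l <;> subst hl <;>
        obtain ⟨uu, huu⟩ := sq_par u <;> obtain ⟨vv, hvv⟩ := sq_par v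
      · -- B3 : k=2u, l=2v : psi2
        have e1 : 8*s1 = 24*u + 32*uu := by linear_combination -hs1 + 16*huu
        have e2 : 8*s2 = 24*v + 32*vv := by linear_combination -hs2 + 16*hvv
        obtain ⟨x₀,y₀,z₀,w₀,C1,C2,C3,C4⟩ :
            ∃ x y z w, -2*x+6*y+6*z-5 = 2*(2*u)+1 ∧ -2*x-2*y-2*z+3 = 2*(2*v)+1
              ∧ y-z = Z ∧ 2*w-1 = 2*ω+1 :=
          ⟨(v - (u+v)/2) - 2*v, (1 - (v-(u+v)/2) + Z)/2, (1 - (v-(u+v)/2) + Z)/2 - Z, ω+1,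
            by omega, by omega, by omega, by omega⟩
        rw [← C1, ← C2, ← C3, ← C4] at hv
        refine Or.inr ⟨(x₀,y₀,z₀,w₀), ?_, ?_⟩
        · simp only [TT, Set.mem_setOf_eq]
          have h16 : 16*(2*n) = 16*(a * (x₀ * (x₀ - 1)) + 6*a * (y₀ * (y₀ - 1))
              + 6*a * (z₀ * (z₀ - 1)) + b * (w₀ * (w₀ - 1))) := by linear_combination hv
          linarith
        · simp only [psi2, Prod.mk.injEq]
          exact ⟨C1, C2, C3, C4⟩
      · -- B1 : k=2u, l=2v+1 : psi1
        have e1 : 8*s1 = 24*u + 32*uu := by linear_combination -hs1 + 16*huu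
        have e2 : 8*s2 = 40*v + 32*vv + 8 := by linear_combination -hs2 + 16*hvv
        obtain ⟨x₀,y₀,z₀,w₀,C1,C2,C3,C4⟩ :
            ∃ x y z w, -2*x-6*y-6*z+7 = 2*(2*u)+1 ∧ 2*x-2*y-2*z+1 = 2*(2*v+1)+1
              ∧ y-z = Z ∧ 2*w-1 = 2*ω+1 :=
          ⟨(2*v+1) - (u+v-1)/2, (Z - (u+v-1)/2)/2, (Z - (u+v-1)/2)/2 - Z, ω+1,
            by omega, by omega, by omega, by omega⟩
        rw [← C1, ← C2, ← C3, ← C4] at hv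
        refine Or.inl (Or.inr ⟨(x₀,y₀,z₀,w₀), ?_, ?_⟩)
        · simp only [TT, Set.mem_setOf_eq]
          have h16 : 16*(2*n) = 16*(a * (x₀ * (x₀ - 1)) + 6*a * (y₀ * (y₀ - 1))
              + 6*a * (z₀ * (z₀ - 1)) + b * (w₀ * (w₀ - 1))) := by linear_combination hv
          linarith
        · simp only [psi1, Prod.mk.injEq]
          exact ⟨C1, C2, C3, C4⟩
      · -- B2 : k=2u+1, l=2v : psi1
        have e1 : 8*s1 = 40*u + 32*uu + 8 := by linear_combination -hs1 + 16*huu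
        have e2 : 8*s2 = 24*v + 32*vv := by linear_combination -hs2 + 16*hvv
        obtain ⟨x₀,y₀,z₀,w₀,C1,C2,C3,C4⟩ :
            ∃ x y z w, -2*x-6*y-6*z+7 = 2*(2*u+1)+1 ∧ 2*x-2*y-2*z+1 = 2*(2*v)+1
              ∧ y-z = Z ∧ 2*w-1 = 2*ω+1 :=
          ⟨2*v - (u+v-1)/2, (Z - (u+v-1)/2)/2, (Z - (u+v-1)/2)/2 - Z, ω+1,
            by omega, by omega, by omega, by omega⟩
        rw [← C1, ← C2, ← C3, ← C4] at hv
        refine Or.inl (Or.inr ⟨(x₀,y₀,z₀,w₀), ?_, ?_⟩)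
        · simp only [TT, Set.mem_setOf_eq]
          have h16 : 16*(2*n) = 16*(a * (x₀ * (x₀ - 1)) + 6*a * (y₀ * (y₀ - 1))
              + 6*a * (z₀ * (z₀ - 1)) + b * (w₀ * (w₀ - 1))) := by linear_combination hv
          linarith
        · simp only [psi1, Prod.mk.injEq]
          exact ⟨C1, C2, C3, C4⟩
      · -- B4 : k=2u+1, l=2v+1 : psi2
        have e1 : 8*s1 = 40*u + 32*uu + 8 := by linear_combination -hs1 + 16*huu
        have e2 : 8*s2 = 40*v + 32*vv + 8 := by linear_combination -hs2 + 16*hvv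
        obtain ⟨x₀,y₀,z₀,w₀,C1,C2,C3,C4⟩ :
            ∃ x y z w, -2*x+6*y+6*z-5 = 2*(2*u+1)+1 ∧ -2*x-2*y-2*z+3 = 2*(2*v+1)+1
              ∧ y-z = Z ∧ 2*w-1 = 2*ω+1 :=
          ⟨(v - (u+v)/2) - 2*v - 1, (1 - (v-(u+v)/2) + Z)/2, (1 - (v-(u+v)/2) + Z)/2 - Z, ω+1,
            by omega, by omega, by omega, by omega⟩
        rw [← C1, ← C2, ← C3, ← C4] at hv
        refine Or.inr ⟨(x₀,y₀,z₀,w₀), ?_, ?_⟩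
        · simp only [TT, Set.mem_setOf_eq]
          have h16 : 16*(2*n) = 16*(a * (x₀ * (x₀ - 1)) + 6*a * (y₀ * (y₀ - 1))
              + 6*a * (z₀ * (z₀ - 1)) + b * (w₀ * (w₀ - 1))) := by linear_combination hv
          linarith
        · simp only [psi2, Prod.mk.injEq]
          exact ⟨C1, C2, C3, C4⟩


theorem stmt7 (a b n : ℤ) (ha : 0 < a) (hb : 0 < b) (hab : (a * b) % 4 = 1)
    (hn : 0 ≤ n) :
    3 * t4 a (6*a) (6*a) b n = N4 a (3*a) (48*a) (4*b) (32*n + 52*a + 4*b) := by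
  obtain ⟨P, hP⟩ : ∃ P, a*b = P := ⟨_, rfl⟩
  rw [hP] at hab
  have hPodd : Odd P := Int.odd_iff.mpr (by omega)
  rw [← hP] at hPodd
  obtain ⟨ha2, hb2⟩ := Int.odd_mul.mp hPodd
  obtain ⟨α, hA⟩ := ha2
  obtain ⟨β, hB⟩ := hb2
  have hprod : P = 4*(α*β) + 2*α + 2*β + 1 := by rw [← hP, hA, hB]; ring
  obtain ⟨pq, hpq⟩ : ∃ x, α*β = x := ⟨_, rfl⟩
  rw [hpq] at hprod
  have hAB : (α+β) % 2 = 0 := by omega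
  have key : SS a b n = psi0 '' TT a b n ∪ psi1 '' TT a b n ∪ psi2 '' TT a b n :=
    Set.Subset.antisymm (surj a b n α β hA hB hAB)
      (Set.union_subset (Set.union_subset (maps0 a b n) (maps1 a b n)) (maps2 a b n))
  have hfinS := finS a b n ha hb
  have hfinT : (TT a b n).Finite :=
    Set.Finite.of_finite_image (hfinS.subset (maps0 a b n)) psi0_inj.injOn
  have hcard : (SS a b n).ncard = (TT a b n).ncard + (TT a b n).ncard + (TT a b n).ncard := by
    rw [key,
      Set.ncard_union_eq (Set.disjoint_union_left.mpr ⟨disj02 a b n, disj12 a b n⟩)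
        ((hfinT.image _).union (hfinT.image _)) (hfinT.image _),
      Set.ncard_union_eq (disj01 a b n) (hfinT.image _) (hfinT.image _),
      Set.ncard_image_of_injective _ psi0_inj, Set.ncard_image_of_injective _ psi1_inj,
      Set.ncard_image_of_injective _ psi2_inj]
  show 3 * (TT a b n).ncard = (SS a b n).ncard
  omega
end

section
/- For every nonnegative integer n, r_3(8n+9) = 3*N(1,4,4; 8n+9), where r_3 counts representations as sums of three squares and N(1,4,4;m) counts integer triples with m = x^2 + 4y^2 + 4z^2. -/
/-- Number of representations of `n` by three squares with coefficients. -/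
noncomputable def N3 (a b c n : ℤ) : ℕ :=
  Set.ncard {v : ℤ × ℤ × ℤ | n = a * v.1 ^ 2 + b * v.2.1 ^ 2 + c * v.2.2 ^ 2}

/-- Number of representations as a sum of three squares. -/
noncomputable def r3 (n : ℤ) : ℕ := N3 1 1 1 n

private lemma finHelp9 (a b c m : ℤ) (ha : 1 ≤ a) (hb : 1 ≤ b) (hc : 1 ≤ c) (hm : 1 ≤ m) :
    {v : ℤ × ℤ × ℤ | m = a * v.1 ^ 2 + b * v.2.1 ^ 2 + c * v.2.2 ^ 2}.Finite := by
  apply Set.Finite.subset (Set.finite_Icc ((-m, -m, -m) : ℤ × ℤ × ℤ) (m, m, m))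
  rintro ⟨x, y, z⟩ h
  simp only [Set.mem_setOf_eq] at h
  have hx2 : x ^ 2 ≤ m := by
    nlinarith [mul_nonneg (by linarith : (0:ℤ) ≤ b) (sq_nonneg y),
      mul_nonneg (by linarith : (0:ℤ) ≤ c) (sq_nonneg z),
      mul_nonneg (by linarith : (0:ℤ) ≤ a - 1) (sq_nonneg x)]
  have hy2 : y ^ 2 ≤ m := by
    nlinarith [mul_nonneg (by linarith : (0:ℤ) ≤ a) (sq_nonneg x),
      mul_nonneg (by linarith : (0:ℤ) ≤ c) (sq_nonneg z),
      mul_nonneg (by linarith : (0:ℤ) ≤ b - 1) (sq_nonneg y)]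
  have hz2 : z ^ 2 ≤ m := by
    nlinarith [mul_nonneg (by linarith : (0:ℤ) ≤ a) (sq_nonneg x),
      mul_nonneg (by linarith : (0:ℤ) ≤ b) (sq_nonneg y),
      mul_nonneg (by linarith : (0:ℤ) ≤ c - 1) (sq_nonneg z)]
  simp only [Set.mem_Icc, Prod.mk_le_mk]
  refine ⟨⟨?_, ?_, ?_⟩, ?_, ?_, ?_⟩
  · nlinarith [sq_nonneg (x + 1)]
  · nlinarith [sq_nonneg (y + 1)]
  · nlinarith [sq_nonneg (z + 1)]
  · nlinarith [sq_nonneg (x - 1)]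
  · nlinarith [sq_nonneg (y - 1)]
  · nlinarith [sq_nonneg (z - 1)]

theorem stmt9 (n : ℤ) (hn : 0 ≤ n) :
    r3 (8*n + 9) = 3 * N3 1 4 4 (8*n + 9) := by
  set m : ℤ := 8 * n + 9 with hmdef
  have hm1 : 1 ≤ m := by omega
  set S : Set (ℤ × ℤ × ℤ) := {v | m = 1 * v.1 ^ 2 + 1 * v.2.1 ^ 2 + 1 * v.2.2 ^ 2} with hS
  set T : Set (ℤ × ℤ × ℤ) := {v | m = 1 * v.1 ^ 2 + 4 * v.2.1 ^ 2 + 4 * v.2.2 ^ 2} with hT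
  -- parity facts
  have notAllEven : ∀ x y z : ℤ, m = 1 * x ^ 2 + 1 * y ^ 2 + 1 * z ^ 2 →
      ¬(Even x ∧ Even y ∧ Even z) := by
    rintro x y z h ⟨⟨a, ha⟩, ⟨b, hb⟩, ⟨c, hc⟩⟩
    subst ha hb hc
    have h2 : m = 4 * (a ^ 2 + b ^ 2 + c ^ 2) := by rw [h]; ring
    obtain ⟨t, ht⟩ : ∃ t, t = a ^ 2 + b ^ 2 + c ^ 2 := ⟨_, rfl⟩
    rw [← ht, hmdef] at h2
    omega
  have cover : ∀ x y z : ℤ, m = 1 * x ^ 2 + 1 * y ^ 2 + 1 * z ^ 2 →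
      (Even y ∧ Even z) ∨ (Even x ∧ Even z) ∨ (Even x ∧ Even y) := by
    intro x y z h
    rcases Int.even_or_odd x with hx | hx <;>
      rcases Int.even_or_odd y with hy | hy <;>
      rcases Int.even_or_odd z with hz | hz
    · exact Or.inl ⟨hy, hz⟩
    · exact Or.inr (Or.inr ⟨hx, hy⟩)
    · exact Or.inr (Or.inl ⟨hx, hz⟩)
    · exfalso
      obtain ⟨a, ha⟩ := hx; obtain ⟨b, hb⟩ := hy; obtain ⟨c, hc⟩ := hz
      subst ha hb hc
      have h2 : m = 4 * (a ^ 2 + b ^ 2 + b + c ^ 2 + c) + 2 := by rw [h]; ring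
      obtain ⟨t, ht⟩ : ∃ t, t = a ^ 2 + b ^ 2 + b + c ^ 2 + c := ⟨_, rfl⟩
      rw [← ht, hmdef] at h2; omega
    · exact Or.inl ⟨hy, hz⟩
    · exfalso
      obtain ⟨a, ha⟩ := hx; obtain ⟨b, hb⟩ := hy; obtain ⟨c, hc⟩ := hz
      subst ha hb hc
      have h2 : m = 4 * (a ^ 2 + a + b ^ 2 + c ^ 2 + c) + 2 := by rw [h]; ring
      obtain ⟨t, ht⟩ : ∃ t, t = a ^ 2 + a + b ^ 2 + c ^ 2 + c := ⟨_, rfl⟩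
      rw [← ht, hmdef] at h2; omega
    · exfalso
      obtain ⟨a, ha⟩ := hx; obtain ⟨b, hb⟩ := hy; obtain ⟨c, hc⟩ := hz
      subst ha hb hc
      have h2 : m = 4 * (a ^ 2 + a + b ^ 2 + b + c ^ 2) + 2 := by rw [h]; ring
      obtain ⟨t, ht⟩ : ∃ t, t = a ^ 2 + a + b ^ 2 + b + c ^ 2 := ⟨_, rfl⟩
      rw [← ht, hmdef] at h2; omega
    · exfalso
      obtain ⟨a, ha⟩ := hx; obtain ⟨b, hb⟩ := hy; obtain ⟨c, hc⟩ := hz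
      subst ha hb hc
      have h2 : m = 4 * (a ^ 2 + a + b ^ 2 + b + c ^ 2 + c) + 3 := by rw [h]; ring
      obtain ⟨t, ht⟩ : ∃ t, t = a ^ 2 + a + b ^ 2 + b + c ^ 2 + c := ⟨_, rfl⟩
      rw [← ht, hmdef] at h2; omega
  set S1 : Set (ℤ × ℤ × ℤ) :=
    {v | (m = 1 * v.1 ^ 2 + 1 * v.2.1 ^ 2 + 1 * v.2.2 ^ 2) ∧ Even v.2.1 ∧ Even v.2.2} with hS1
  set S2 : Set (ℤ × ℤ × ℤ) :=
    {v | (m = 1 * v.1 ^ 2 + 1 * v.2.1 ^ 2 + 1 * v.2.2 ^ 2) ∧ Even v.1 ∧ Even v.2.2} with hS2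
  set S3 : Set (ℤ × ℤ × ℤ) :=
    {v | (m = 1 * v.1 ^ 2 + 1 * v.2.1 ^ 2 + 1 * v.2.2 ^ 2) ∧ Even v.1 ∧ Even v.2.1} with hS3
  have hSfin : S.Finite := finHelp9 1 1 1 m le_rfl le_rfl le_rfl hm1
  have hS1fin : S1.Finite := hSfin.subset fun v hv => hv.1
  have hS2fin : S2.Finite := hSfin.subset fun v hv => hv.1
  have hS3fin : S3.Finite := hSfin.subset fun v hv => hv.1
  have hcup : S = S1 ∪ S2 ∪ S3 := by
    ext ⟨x, y, z⟩
    constructor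
    · intro h
      rcases cover x y z h with hc | hc | hc
      · exact Or.inl (Or.inl ⟨h, hc⟩)
      · exact Or.inl (Or.inr ⟨h, hc⟩)
      · exact Or.inr ⟨h, hc⟩
    · rintro ((⟨h, -⟩ | ⟨h, -⟩) | ⟨h, -⟩) <;> exact h
  have hd12 : Disjoint S1 S2 := by
    rw [Set.disjoint_left]
    rintro ⟨x, y, z⟩ ⟨h, hy, hz⟩ ⟨-, hx, -⟩
    exact notAllEven x y z h ⟨hx, hy, hz⟩
  have hd13 : Disjoint S1 S3 := by
    rw [Set.disjoint_left]
    rintro ⟨x, y, z⟩ ⟨h, hy, hz⟩ ⟨-, hx, -⟩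
    exact notAllEven x y z h ⟨hx, hy, hz⟩
  have hd23 : Disjoint S2 S3 := by
    rw [Set.disjoint_left]
    rintro ⟨x, y, z⟩ ⟨h, hx, hz⟩ ⟨-, -, hy⟩
    exact notAllEven x y z h ⟨hx, hy, hz⟩
  have hcard : S.ncard = S1.ncard + S2.ncard + S3.ncard := by
    rw [hcup, Set.ncard_union_eq (Set.disjoint_union_left.mpr ⟨hd13, hd23⟩)
      (hS1fin.union hS2fin) hS3fin, Set.ncard_union_eq hd12 hS1fin hS2fin]
  -- S2 and S3 as images of S1
  have inj12 : Function.Injective (fun v : ℤ × ℤ × ℤ => (v.2.1, v.1, v.2.2)) := by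
    rintro ⟨a1, a2, a3⟩ ⟨b1, b2, b3⟩ h
    simp only [Prod.mk.injEq] at h ⊢
    tauto
  have inj13 : Function.Injective (fun v : ℤ × ℤ × ℤ => (v.2.2, v.2.1, v.1)) := by
    rintro ⟨a1, a2, a3⟩ ⟨b1, b2, b3⟩ h
    simp only [Prod.mk.injEq] at h ⊢
    tauto
  have e12 : S2 = (fun v : ℤ × ℤ × ℤ => (v.2.1, v.1, v.2.2)) '' S1 := by
    ext v
    constructor
    · rintro ⟨h, hx, hz⟩
      exact ⟨(v.2.1, v.1, v.2.2), ⟨by dsimp at h ⊢; linarith, hx, hz⟩, by simp⟩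
    · rintro ⟨⟨a, b, c⟩, ⟨h, hb, hc⟩, rfl⟩
      exact ⟨by dsimp at h ⊢; linarith, hb, hc⟩
  have e13 : S3 = (fun v : ℤ × ℤ × ℤ => (v.2.2, v.2.1, v.1)) '' S1 := by
    ext v
    constructor
    · rintro ⟨h, hx, hy⟩
      exact ⟨(v.2.2, v.2.1, v.1), ⟨by dsimp at h ⊢; linarith, hy, hx⟩, by simp⟩
    · rintro ⟨⟨a, b, c⟩, ⟨h, hb, hc⟩, rfl⟩
      exact ⟨by dsimp at h ⊢; linarith, hc, hb⟩
  have c2 : S2.ncard = S1.ncard := by rw [e12, Set.ncard_image_of_injective _ inj12]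
  have c3 : S3.ncard = S1.ncard := by rw [e13, Set.ncard_image_of_injective _ inj13]
  -- S1 as image of T
  have injT : Function.Injective (fun v : ℤ × ℤ × ℤ => (v.1, 2 * v.2.1, 2 * v.2.2)) := by
    rintro ⟨a1, a2, a3⟩ ⟨b1, b2, b3⟩ h
    simp only [Prod.mk.injEq] at h ⊢
    omega
  have eT : S1 = (fun v : ℤ × ℤ × ℤ => (v.1, 2 * v.2.1, 2 * v.2.2)) '' T := by
    ext v
    constructor
    · rintro ⟨h, ⟨u, hu⟩, ⟨w, hw⟩⟩
      refine ⟨(v.1, u, w), ?_, ?_⟩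
      · show m = 1 * v.1 ^ 2 + 4 * u ^ 2 + 4 * w ^ 2
        rw [h, hu, hw]; ring
      · show ((v.1, 2 * u, 2 * w) : ℤ × ℤ × ℤ) = v
        rw [show 2 * u = v.2.1 by omega, show 2 * w = v.2.2 by omega]
    · rintro ⟨⟨a, b, c⟩, h, rfl⟩
      refine ⟨?_, ⟨b, by ring⟩, ⟨c, by ring⟩⟩
      show m = 1 * a ^ 2 + 1 * (2 * b) ^ 2 + 1 * (2 * c) ^ 2
      rw [show m = 1 * a ^ 2 + 4 * b ^ 2 + 4 * c ^ 2 from h]; ring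
  have c1 : S1.ncard = T.ncard := by rw [eT, Set.ncard_image_of_injective _ injT]
  show S.ncard = 3 * T.ncard
  rw [hcard, c2, c3, c1]
  ring
end

section
/- For positive integers a, b, c with a odd, and any nonnegative integer n, t(a,a,2b,2c; 2n+a) = 2*t(a,4a,b,c;n). -/
/-- Auxiliary 2-to-1 map used in the proof of `stmt12`. -/
def Fmap12 : ((ℤ × ℤ × ℤ × ℤ) × Bool) → ℤ × ℤ × ℤ × ℤ := fun p =>
  if p.2 then (p.1.1 + 2 * p.1.2.1 - 1, 2 * p.1.2.1 - p.1.1, p.1.2.2.1, p.1.2.2.2)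
  else (p.1.1 + 2 * p.1.2.1 - 1, p.1.1 - 2 * p.1.2.1 + 1, p.1.2.2.1, p.1.2.2.2)

lemma Fmap12_inj : Function.Injective Fmap12 := by
  rintro ⟨⟨u, v, z, w⟩, bb⟩ ⟨⟨u', v', z', w'⟩, bb'⟩ h
  cases bb <;> cases bb' <;>
    simp only [Fmap12, if_true, if_false, Bool.false_eq_true, Prod.mk.injEq] at h ⊢ <;>
    obtain ⟨h1, h2, h3, h4⟩ := h
  · exact ⟨⟨by omega, by omega, h3, h4⟩, trivial⟩
  · exact ((by omega : False)).elim
  · exact ((by omega : False)).elim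
  · exact ⟨⟨by omega, by omega, h3, h4⟩, trivial⟩

lemma zmod4_aux1 : ∀ κ μ : ZMod 4, (2 * κ + 1) * μ = 2 * (2 * κ + 1) → μ = 2 := by decide

lemma zmod4_aux2 : ∀ ξ η : ZMod 4, ξ * (ξ - 1) + η * (η - 1) = 2 →
    (ξ - η = 2 ∨ ξ + η = 3) := by decide

theorem stmt12 (a b c n : ℤ) (ha : 0 < a) (hao : Odd a) (hb : 0 < b) (hc : 0 < c)
    (hn : 0 ≤ n) :
    t4 a a (2*b) (2*c) (2*n + a) = 2 * t4 a (4*a) b c n := by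
  classical
  obtain ⟨k, hk⟩ := hao
  subst hk
  unfold t4
  set A : Set (ℤ × ℤ × ℤ × ℤ) := {v : ℤ × ℤ × ℤ × ℤ |
    2 * (2*n + (2*k+1)) = (2*k+1) * (v.1 * (v.1 - 1)) + (2*k+1) * (v.2.1 * (v.2.1 - 1))
      + 2*b * (v.2.2.1 * (v.2.2.1 - 1)) + 2*c * (v.2.2.2 * (v.2.2.2 - 1))} with hA
  set B : Set (ℤ × ℤ × ℤ × ℤ) := {v : ℤ × ℤ × ℤ × ℤ |
    2 * n = (2*k+1) * (v.1 * (v.1 - 1)) + 4*(2*k+1) * (v.2.1 * (v.2.1 - 1))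
      + b * (v.2.2.1 * (v.2.2.1 - 1)) + c * (v.2.2.2 * (v.2.2.2 - 1))} with hB
  have key : A = Fmap12 '' (B ×ˢ (Set.univ : Set Bool)) := by
    ext ⟨x, y, z, w⟩
    constructor
    · intro hx
      simp only [hA, Set.mem_setOf_eq] at hx
      obtain ⟨p, hp⟩ : ∃ p : ℤ, z * (z - 1) = 2 * p := by
        rcases Int.even_or_odd z with ⟨j, hj⟩ | ⟨j, hj⟩
        · exact ⟨j * (z - 1), by rw [hj]; ring⟩
        · exact ⟨z * j, by rw [hj]; ring⟩
      obtain ⟨q, hq⟩ : ∃ q : ℤ, w * (w - 1) = 2 * q := by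
        rcases Int.even_or_odd w with ⟨j, hj⟩ | ⟨j, hj⟩
        · exact ⟨j * (w - 1), by rw [hj]; ring⟩
        · exact ⟨w * j, by rw [hj]; ring⟩
      have h1 : (4:ℤ) * n + 2 * (2*k+1)
          = (2*k+1) * (x * (x - 1) + y * (y - 1)) + 4 * (b * p) + 4 * (c * q) := by
        linear_combination hx + 2 * b * hp + 2 * c * hq
      have h2 : ((x * (x - 1) + y * (y - 1) : ℤ) : ZMod 4) = 2 := by
        apply zmod4_aux1 (k : ZMod 4)
        have hcast := congrArg (fun t : ℤ => (t : ZMod 4)) h1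
        push_cast at hcast ⊢
        have h4 : (4 : ZMod 4) = 0 := by decide
        linear_combination -hcast + ((n:ZMod 4) - (b:ZMod 4) * p - (c:ZMod 4) * q) * h4
      have h3 : ((x : ZMod 4) - y = 2 ∨ (x : ZMod 4) + y = 3) := by
        apply zmod4_aux2
        push_cast at h2
        linear_combination h2
      have h5 : (x - y) % 4 = 2 ∨ (x + y) % 4 = 3 := by
        rcases h3 with h | h
        · left
          have hc2 : ((x - y : ℤ) : ZMod 4) = ((2 : ℤ) : ZMod 4) := by
            push_cast; linear_combination h
          have := (ZMod.intCast_eq_intCast_iff _ _ _).mp hc2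
          unfold Int.ModEq at this
          omega
        · right
          have hc2 : ((x + y : ℤ) : ZMod 4) = ((3 : ℤ) : ZMod 4) := by
            push_cast; linear_combination h
          have := (ZMod.intCast_eq_intCast_iff _ _ _).mp hc2
          unfold Int.ModEq at this
          omega
      rcases h5 with h | h
      · refine ⟨⟨((x + y) / 2, (x - y + 2) / 4, z, w), false⟩, ⟨?_, trivial⟩, ?_⟩
        · simp only [hB, Set.mem_setOf_eq]
          set u : ℤ := (x + y) / 2 with hu
          set v : ℤ := (x - y + 2) / 4 with hv
          have hxu : x = u + 2 * v - 1 := by omega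
          have hyu : y = u - 2 * v + 1 := by omega
          rw [hxu, hyu] at hx
          have h6 : (2:ℤ) * (2 * n) = 2 * ((2*k+1) * (u * (u - 1)) + 4*(2*k+1) * (v * (v - 1))
              + b * (z * (z - 1)) + c * (w * (w - 1))) := by linear_combination hx
          exact mul_left_cancel₀ (by norm_num : (2:ℤ) ≠ 0) h6
        · simp only [Fmap12, if_false, Bool.false_eq_true, Prod.mk.injEq, and_true]
          exact ⟨by omega, by omega⟩
      · refine ⟨⟨((x - y + 1) / 2, (x + y + 1) / 4, z, w), true⟩, ⟨?_, trivial⟩, ?_⟩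
        · simp only [hB, Set.mem_setOf_eq]
          set u : ℤ := (x - y + 1) / 2 with hu
          set v : ℤ := (x + y + 1) / 4 with hv
          have hxu : x = u + 2 * v - 1 := by omega
          have hyu : y = 2 * v - u := by omega
          rw [hxu, hyu] at hx
          have h6 : (2:ℤ) * (2 * n) = 2 * ((2*k+1) * (u * (u - 1)) + 4*(2*k+1) * (v * (v - 1))
              + b * (z * (z - 1)) + c * (w * (w - 1))) := by linear_combination hx
          exact mul_left_cancel₀ (by norm_num : (2:ℤ) ≠ 0) h6
        · simp only [Fmap12, if_true, Prod.mk.injEq, and_true]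
          exact ⟨by omega, by omega⟩
    · rintro ⟨⟨⟨u, v, z', w'⟩, bb⟩, ⟨hBm, -⟩, hF⟩
      simp only [hB, Set.mem_setOf_eq] at hBm
      cases bb <;>
        simp only [Fmap12, if_true, if_false, Bool.false_eq_true, Prod.mk.injEq] at hF <;>
        obtain ⟨e1, e2, e3, e4⟩ := hF <;>
        · simp only [hA, Set.mem_setOf_eq]
          subst e1 e2 e3 e4
          linear_combination 2 * hBm
  calc A.ncard = (B ×ˢ (Set.univ : Set Bool)).ncard := by
        rw [key, Set.ncard_image_of_injective _ Fmap12_inj]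
    _ = 2 * B.ncard := by
        rw [← Nat.card_coe_set_eq,
          Nat.card_congr (Equiv.Set.prod B (Set.univ : Set Bool)), Nat.card_prod]
        have h2 : Nat.card ↥(Set.univ : Set Bool) = 2 := by
          simp [Nat.card_coe_set_eq, Set.ncard_univ, Nat.card_eq_fintype_card]
        rw [h2, Nat.card_coe_set_eq, mul_comm]
end

section
/- For positive integers a, b with a odd, and any nonnegative integer n: t(a,3a,4a,2b; 2n+a) = t(a,a,6a,b; n) and t(a,3a,12a,2b; 2n) = t(2a,3a,3a,b; n). -/
/-- piecewise linear map for the first identity -/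
def fm1 (v : ℤ × ℤ × ℤ × ℤ) : ℤ × ℤ × ℤ × ℤ :=
  if (v.1 + v.2.1) % 2 = 1 then
    ((5 - v.1 - v.2.1 - 6*v.2.2.1)/2, (1 - v.1 - v.2.1 + 2*v.2.2.1)/2,
      (1 - v.1 + v.2.1)/2, v.2.2.2)
  else
    ((4 + v.2.1 - v.1 - 6*v.2.2.1)/2, (2 + v.1 - v.2.1 - 2*v.2.2.1)/2,
      (2 - v.1 - v.2.1)/2, v.2.2.2)

/-- piecewise linear map for the second identity -/
def fm2 (v : ℤ × ℤ × ℤ × ℤ) : ℤ × ℤ × ℤ × ℤ :=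
  if (v.2.1 + v.2.2.1) % 2 = 1 then
    ((5 - 2*v.1 - 3*v.2.1 - 3*v.2.2.1)/2, (1 - 2*v.1 + v.2.1 + v.2.2.1)/2,
      (v.2.2.1 - v.2.1 + 1)/2, v.2.2.2)
  else
    ((2 - 2*v.1 + 3*v.2.2.1 - 3*v.2.1)/2, (2*v.1 - v.2.1 + v.2.2.1)/2,
      (2 - v.2.1 - v.2.2.1)/2, v.2.2.2)

lemma tri4 (X : ℤ) : ∃ P, X*(X-1) = P ∧
    ((X%4 = 0 ∨ X%4 = 1) ∧ P % 4 = 0 ∨ (X%4 = 2 ∨ X%4 = 3) ∧ P % 4 = 2) := by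
  refine ⟨X*(X-1), rfl, ?_⟩
  obtain ⟨q, hq⟩ : ∃ q, X = 4*q + X % 4 := ⟨X/4, by omega⟩
  have h4 : X % 4 = 0 ∨ X % 4 = 1 ∨ X % 4 = 2 ∨ X % 4 = 3 := by omega
  rcases h4 with h|h|h|h <;> rw [h] at hq
  · have e : X*(X-1) = 4*(q*(4*q-1)) := by rw [hq]; ring
    omega
  · have e : X*(X-1) = 4*(q*(4*q+1)) := by rw [hq]; ring
    omega
  · have e : X*(X-1) = 4*(q*(4*q+3)) + 2 := by rw [hq]; ring
    omega
  · have e : X*(X-1) = 4*(q*(4*q+5)+1) + 2 := by rw [hq]; ring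
    omega

lemma evens (X : ℤ) : ∃ p, X*(X-1) = 2*p := by
  rcases Int.even_or_odd X with ⟨c,hc⟩|⟨c,hc⟩
  · exact ⟨c*(X-1), by rw [hc]; ring⟩
  · exact ⟨(2*c+1)*c, by rw [hc]; ring⟩

lemma key1 (a b n X Y Z W : ℤ) (ha : a % 2 = 1)
    (h : 2*(2*n+a) = a*(X*(X-1)) + 3*a*(Y*(Y-1)) + 4*a*(Z*(Z-1)) + 2*b*(W*(W-1))) :
    (X*(X-1) + 3*(Y*(Y-1))) % 4 = 2 := by
  obtain ⟨p,hp⟩ := evens X; obtain ⟨q,hq⟩ := evens Y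
  obtain ⟨r,hr⟩ := evens Z; obtain ⟨t,ht⟩ := evens W
  have h2 : 2*(a*(p+3*q)) = 2*(2*n + a - 4*(a*r) - 2*(b*t)) := by
    linear_combination -h - a*hp - 3*a*hq - 4*a*hr - 2*b*ht
  have h3 : a*(p+3*q) = 2*n + a - 4*(a*r) - 2*(b*t) := by omega
  have h4 : Odd (a*(p+3*q)) := by
    rw [h3, Int.odd_iff]; omega
  have h5 : (p + 3*q) % 2 = 1 := Int.odd_iff.mp (Int.odd_mul.mp h4).2
  rw [hp, hq]; omega

lemma key2 (a b n X Y Z W : ℤ) (ha : a % 2 = 1)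
    (h : 2*(2*n) = a*(X*(X-1)) + 3*a*(Y*(Y-1)) + 12*a*(Z*(Z-1)) + 2*b*(W*(W-1))) :
    (X*(X-1) + 3*(Y*(Y-1))) % 4 = 0 := by
  obtain ⟨p,hp⟩ := evens X; obtain ⟨q,hq⟩ := evens Y
  obtain ⟨r,hr⟩ := evens Z; obtain ⟨t,ht⟩ := evens W
  have h2 : 2*(a*(p+3*q)) = 2*(2*n - 12*(a*r) - 2*(b*t)) := by
    linear_combination -h - a*hp - 3*a*hq - 12*a*hr - 2*b*ht
  have h3 : a*(p+3*q) = 2*n - 12*(a*r) - 2*(b*t) := by omega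
  have h4 : Even (a*(p+3*q)) := by
    rw [h3, Int.even_iff]; omega
  have h5 : (p + 3*q) % 2 = 0 := by
    rcases Int.even_mul.mp h4 with he|he
    · rw [Int.even_iff] at he; omega
    · exact Int.even_iff.mp he
  rw [hp, hq]; omega

lemma conv1e (X Y : ℤ) (h : (X*(X-1) + 3*(Y*(Y-1))) % 4 = 2) (hp : (X+Y) % 2 = 0) :
    (X - Y) % 4 = 2 := by
  obtain ⟨P,hP,dP⟩ := tri4 X; obtain ⟨Q,hQ,dQ⟩ := tri4 Y; rw [hP,hQ] at h; omega

lemma conv1o (X Y : ℤ) (h : (X*(X-1) + 3*(Y*(Y-1))) % 4 = 2) (hp : (X+Y) % 2 = 1) :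
    (X + Y) % 4 = 3 := by
  obtain ⟨P,hP,dP⟩ := tri4 X; obtain ⟨Q,hQ,dQ⟩ := tri4 Y; rw [hP,hQ] at h; omega

lemma conv2e (X Y : ℤ) (h : (X*(X-1) + 3*(Y*(Y-1))) % 4 = 0) (hp : (X+Y) % 2 = 0) :
    (X + 3*Y) % 4 = 0 := by
  obtain ⟨P,hP,dP⟩ := tri4 X; obtain ⟨Q,hQ,dQ⟩ := tri4 Y; rw [hP,hQ] at h; omega

lemma conv2o (X Y : ℤ) (h : (X*(X-1) + 3*(Y*(Y-1))) % 4 = 0) (hp : (X+Y) % 2 = 1) :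
    (X + Y) % 4 = 1 := by
  obtain ⟨P,hP,dP⟩ := tri4 X; obtain ⟨Q,hQ,dQ⟩ := tri4 Y; rw [hP,hQ] at h; omega

lemma fm1_inj : Function.Injective fm1 := by
  rintro ⟨x,y,z,w⟩ ⟨x',y',z',w'⟩ hpq
  unfold fm1 at hpq
  simp only [Prod.mk.injEq] at hpq ⊢
  split_ifs at hpq with h1 h2 h2 <;> simp only [Prod.mk.injEq] at hpq <;> omega

lemma fm2_inj : Function.Injective fm2 := by
  rintro ⟨x,y,z,w⟩ ⟨x',y',z',w'⟩ hpq
  unfold fm2 at hpq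
  simp only [Prod.mk.injEq] at hpq ⊢
  split_ifs at hpq with h1 h2 h2 <;> simp only [Prod.mk.injEq] at hpq <;> omega

theorem stmt13 (a b n : ℤ) (ha : 0 < a) (hao : Odd a) (hb : 0 < b) (hn : 0 ≤ n) :
    t4 a (3*a) (4*a) (2*b) (2*n + a) = t4 a a (6*a) b n ∧
    t4 a (3*a) (12*a) (2*b) (2*n) = t4 (2*a) (3*a) (3*a) b n := by
  have ha2 : a % 2 = 1 := Int.odd_iff.mp hao
  have h20 : (2:ℤ) ≠ 0 := by norm_num
  constructor
  · unfold t4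
    have himg : {v : ℤ × ℤ × ℤ × ℤ |
        2 * (2*n+a) = a * (v.1 * (v.1 - 1)) + 3*a * (v.2.1 * (v.2.1 - 1))
          + 4*a * (v.2.2.1 * (v.2.2.1 - 1)) + 2*b * (v.2.2.2 * (v.2.2.2 - 1))}
        = fm1 '' {v : ℤ × ℤ × ℤ × ℤ |
        2 * n = a * (v.1 * (v.1 - 1)) + a * (v.2.1 * (v.2.1 - 1))
          + 6*a * (v.2.2.1 * (v.2.2.1 - 1)) + b * (v.2.2.2 * (v.2.2.2 - 1))} := by
      ext v
      constructor
      · intro hq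
        obtain ⟨X,Y,Z,W⟩ := v
        simp only [Set.mem_setOf_eq] at hq
        rw [Set.mem_image]
        have hkey : (X*(X-1) + 3*(Y*(Y-1))) % 4 = 2 := key1 a b n X Y Z W ha2 hq
        by_cases hpar : (X + Y) % 2 = 0
        · have hd : (X - Y) % 4 = 2 := conv1e X Y hkey hpar
          obtain ⟨m, hm⟩ : ∃ m, X = 2 + Y - 4*m := ⟨(2-X+Y)/4, by omega⟩
          refine ⟨(1-Y-Z+m, m-Y+Z, m, W), ?_, ?_⟩
          · have h2 : 2*(2*n) = 2*(a * ((1-Y-Z+m) * ((1-Y-Z+m) - 1)) + a * ((m-Y+Z) * ((m-Y+Z) - 1))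
                + 6*a * (m * (m - 1)) + b * (W * (W - 1))) := by
              rw [hm] at hq; linear_combination hq
            exact mul_left_cancel₀ h20 h2
          · simp only [fm1]
            split_ifs with hc <;> simp only [Prod.mk.injEq, and_true] <;> omega
        · have hpar' : (X + Y) % 2 = 1 := by omega
          have hd : (X + Y) % 4 = 3 := conv1o X Y hkey hpar'
          obtain ⟨m, hm⟩ : ∃ m, X = 3 - Y - 4*m := ⟨(3-X-Y)/4, by omega⟩
          refine ⟨(Y+m-Z, 2-Z-Y-m, m, W), ?_, ?_⟩
          · have h2 : 2*(2*n) = 2*(a * ((Y+m-Z) * ((Y+m-Z) - 1)) + a * ((2-Z-Y-m) * ((2-Z-Y-m) - 1))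
                + 6*a * (m * (m - 1)) + b * (W * (W - 1))) := by
              rw [hm] at hq; linear_combination hq
            exact mul_left_cancel₀ h20 h2
          · simp only [fm1]
            split_ifs with hc <;> simp only [Prod.mk.injEq, and_true] <;> omega
      · rintro ⟨⟨x,y,z,w⟩, hp, rfl⟩
        simp only [Set.mem_setOf_eq] at hp ⊢
        simp only [fm1]
        split_ifs with h1
        · dsimp only at h1 ⊢
          obtain ⟨k, hk⟩ : ∃ k, y = 2*k+1-x := ⟨(x+y-1)/2, by omega⟩
          subst hk
          have c1 : (5 - x - (2*k+1-x) - 6*z)/2 = 2-k-3*z := by omega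
          have c2 : (1 - x - (2*k+1-x) + 2*z)/2 = z-k := by omega
          have c3 : (1 - x + (2*k+1-x))/2 = 1+k-x := by omega
          rw [c1, c2, c3]
          linear_combination 2*hp
        · dsimp only at h1 ⊢
          obtain ⟨k, hk⟩ : ∃ k, y = 2*k-x := ⟨(x+y)/2, by omega⟩
          subst hk
          have c1 : (4 + (2*k-x) - x - 6*z)/2 = 2+k-x-3*z := by omega
          have c2 : (2 + x - (2*k-x) - 2*z)/2 = 1+x-k-z := by omega
          have c3 : (2 - x - (2*k-x))/2 = 1-k := by omega
          rw [c1, c2, c3]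
          linear_combination 2*hp
    rw [himg, Set.ncard_image_of_injective _ fm1_inj]
  · unfold t4
    have himg : {v : ℤ × ℤ × ℤ × ℤ |
        2 * (2*n) = a * (v.1 * (v.1 - 1)) + 3*a * (v.2.1 * (v.2.1 - 1))
          + 12*a * (v.2.2.1 * (v.2.2.1 - 1)) + 2*b * (v.2.2.2 * (v.2.2.2 - 1))}
        = fm2 '' {v : ℤ × ℤ × ℤ × ℤ |
        2 * n = 2*a * (v.1 * (v.1 - 1)) + 3*a * (v.2.1 * (v.2.1 - 1))
          + 3*a * (v.2.2.1 * (v.2.2.1 - 1)) + b * (v.2.2.2 * (v.2.2.2 - 1))} := by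
      ext v
      constructor
      · intro hq
        obtain ⟨X,Y,Z,W⟩ := v
        simp only [Set.mem_setOf_eq] at hq
        rw [Set.mem_image]
        have hkey : (X*(X-1) + 3*(Y*(Y-1))) % 4 = 0 := key2 a b n X Y Z W ha2 hq
        by_cases hpar : (X + Y) % 2 = 0
        · have hd : (X + 3*Y) % 4 = 0 := conv2e X Y hkey hpar
          obtain ⟨m, hm⟩ : ∃ m, X = 4 - 3*Y - 4*m := ⟨(4-X-3*Y)/4, by omega⟩
          refine ⟨(m, Y+m-Z, Y+m+Z-1, W), ?_, ?_⟩
          · have h2 : 2*(2*n) = 2*(2*a * (m * (m - 1)) + 3*a * ((Y+m-Z) * ((Y+m-Z) - 1))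
                + 3*a * ((Y+m+Z-1) * ((Y+m+Z-1) - 1)) + b * (W * (W - 1))) := by
              rw [hm] at hq; linear_combination hq
            exact mul_left_cancel₀ h20 h2
          · simp only [fm2]
            split_ifs with hc <;> simp only [Prod.mk.injEq, and_true] <;> omega
        · have hpar' : (X + Y) % 2 = 1 := by omega
          have hd : (X + Y) % 4 = 1 := conv2o X Y hkey hpar'
          obtain ⟨m, hm⟩ : ∃ m, X = 1 - Y + 4*m := ⟨(X+Y-1)/4, by omega⟩
          refine ⟨(Y-m, 1-Z-m, 1-Z+m, W), ?_, ?_⟩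
          · have h2 : 2*(2*n) = 2*(2*a * ((Y-m) * ((Y-m) - 1)) + 3*a * ((1-Z-m) * ((1-Z-m) - 1))
                + 3*a * ((1-Z+m) * ((1-Z+m) - 1)) + b * (W * (W - 1))) := by
              rw [hm] at hq; linear_combination hq
            exact mul_left_cancel₀ h20 h2
          · simp only [fm2]
            split_ifs with hc <;> simp only [Prod.mk.injEq, and_true] <;> omega
      · rintro ⟨⟨x,y,z,w⟩, hp, rfl⟩
        simp only [Set.mem_setOf_eq] at hp ⊢
        simp only [fm2]
        split_ifs with h1
        · dsimp only at h1 ⊢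
          obtain ⟨k, hk⟩ : ∃ k, z = 2*k+1-y := ⟨(y+z-1)/2, by omega⟩
          subst hk
          have c1 : (5 - 2*x - 3*y - 3*(2*k+1-y))/2 = 1-x-3*k := by omega
          have c2 : (1 - 2*x + y + (2*k+1-y))/2 = 1-x+k := by omega
          have c3 : ((2*k+1-y) - y + 1)/2 = 1+k-y := by omega
          rw [c1, c2, c3]
          linear_combination 2*hp
        · dsimp only at h1 ⊢
          obtain ⟨k, hk⟩ : ∃ k, z = 2*k-y := ⟨(y+z)/2, by omega⟩
          subst hk
          have c1 : (2 - 2*x + 3*(2*k-y) - 3*y)/2 = 1-x+3*k-3*y := by omega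
          have c2 : (2*x - y + (2*k-y))/2 = x+k-y := by omega
          have c3 : (2 - y - (2*k-y))/2 = 1-k := by omega
          rw [c1, c2, c3]
          linear_combination 2*hp
    rw [himg, Set.ncard_image_of_injective _ fm2_inj]
end

section
/- For positive integers a, b, c with a odd, and any nonnegative integer n: t(a,3a,4b,4c; 4n+3a) = 2*t(3a,4a,b,c;n) and t(a,3a,4b,4c; 4n+6a) = 2*t(a,12a,b,c;n). -/
/-- A general "2-to-1 correspondence" counting lemma. -/
lemma aux_two_mul_ncard {α β : Type*} (S : Set α) (T : Set β) (f g : β → α)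
    (hf : Set.InjOn f T) (hg : Set.InjOn g T)
    (hfS : ∀ t ∈ T, f t ∈ S) (hgS : ∀ t ∈ T, g t ∈ S)
    (hdisj : ∀ t ∈ T, ∀ t' ∈ T, f t ≠ g t')
    (hsurj : ∀ s ∈ S, (∃ t ∈ T, f t = s) ∨ ∃ t ∈ T, g t = s) :
    S.ncard = 2 * T.ncard := by
  have hS : S = f '' T ∪ g '' T := by
    ext s
    constructor
    · intro hs
      rcases hsurj s hs with ⟨t, ht, rfl⟩ | ⟨t, ht, rfl⟩
      · exact Or.inl ⟨t, ht, rfl⟩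
      · exact Or.inr ⟨t, ht, rfl⟩
    · rintro (⟨t, ht, rfl⟩ | ⟨t, ht, rfl⟩)
      exacts [hfS t ht, hgS t ht]
  have hd : Disjoint (f '' T) (g '' T) := by
    rw [Set.disjoint_left]
    rintro x ⟨t, ht, rfl⟩ ⟨t', ht', h⟩
    exact hdisj t ht t' ht' h.symm
  rcases T.finite_or_infinite with hT | hT
  · rw [hS, Set.ncard_union_eq hd (hT.image f) (hT.image g),
      Set.ncard_image_of_injOn hf, Set.ncard_image_of_injOn hg]
    ring
  · have h1 : (f '' T).Infinite := hT.image hf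
    have h2 : (f '' T ∪ g '' T).Infinite := h1.mono Set.subset_union_left
    rw [hS, h2.ncard, hT.ncard]

lemma odd_sq_eight (a : ℤ) (h : Odd a) : ∃ t : ℤ, a * a = 8 * t + 1 := by
  obtain ⟨j, rfl⟩ := h
  rcases Int.even_or_odd j with ⟨k, rfl⟩ | ⟨k, rfl⟩
  · exact ⟨2 * k ^ 2 + k, by ring⟩
  · exact ⟨2 * k ^ 2 + 3 * k + 1, by ring⟩

lemma even_mul_pred (z : ℤ) : ∃ k : ℤ, z * (z - 1) = 2 * k := by
  rcases Int.even_or_odd z with ⟨k, rfl⟩ | ⟨k, rfl⟩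
  · exact ⟨k * (2 * k - 1), by ring⟩
  · exact ⟨(2 * k + 1) * k, by ring⟩

lemma key1_s14 (x y : ℤ) (h : (8 : ℤ) ∣ x * (x - 1) + 3 * (y * (y - 1)) - 6) :
    (8 : ℤ) ∣ x + 3 * y + 2 ∨ (8 : ℤ) ∣ x - 3 * y - 3 := by
  have hz : ((x : ZMod 8)) * ((x : ZMod 8) - 1) + 3 * ((y : ZMod 8) * ((y : ZMod 8) - 1)) - 6
      = 0 := by
    have h0 := (ZMod.intCast_zmod_eq_zero_iff_dvd _ 8).2 h
    push_cast at h0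
    linear_combination h0
  have key : ∀ u v : ZMod 8, u * (u - 1) + 3 * (v * (v - 1)) - 6 = 0 →
      u + 3 * v + 2 = 0 ∨ u - 3 * v - 3 = 0 := by decide
  rcases key _ _ hz with h1 | h1
  · left
    have h2 : ((x + 3 * y + 2 : ℤ) : ZMod 8) = 0 := by push_cast; linear_combination h1
    exact_mod_cast (ZMod.intCast_zmod_eq_zero_iff_dvd _ 8).1 h2
  · right
    have h2 : ((x - 3 * y - 3 : ℤ) : ZMod 8) = 0 := by push_cast; linear_combination h1
    exact_mod_cast (ZMod.intCast_zmod_eq_zero_iff_dvd _ 8).1 h2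

lemma key2_s14 (x y : ℤ) (h : (8 : ℤ) ∣ x * (x - 1) + 3 * (y * (y - 1)) - 12) :
    (8 : ℤ) ∣ x - y + 4 ∨ (8 : ℤ) ∣ x + y + 3 := by
  have hz : ((x : ZMod 8)) * ((x : ZMod 8) - 1) + 3 * ((y : ZMod 8) * ((y : ZMod 8) - 1)) - 12
      = 0 := by
    have h0 := (ZMod.intCast_zmod_eq_zero_iff_dvd _ 8).2 h
    push_cast at h0
    linear_combination h0
  have key : ∀ u v : ZMod 8, u * (u - 1) + 3 * (v * (v - 1)) - 12 = 0 →
      u - v + 4 = 0 ∨ u + v + 3 = 0 := by decide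
  rcases key _ _ hz with h1 | h1
  · left
    have h2 : ((x - y + 4 : ℤ) : ZMod 8) = 0 := by push_cast; linear_combination h1
    exact_mod_cast (ZMod.intCast_zmod_eq_zero_iff_dvd _ 8).1 h2
  · right
    have h2 : ((x + y + 3 : ℤ) : ZMod 8) = 0 := by push_cast; linear_combination h1
    exact_mod_cast (ZMod.intCast_zmod_eq_zero_iff_dvd _ 8).1 h2

theorem stmt14 (a b c n : ℤ) (ha : 0 < a) (hao : Odd a) (hb : 0 < b) (hc : 0 < c)
    (hn : 0 ≤ n) :
    t4 a (3*a) (4*b) (4*c) (4*n + 3*a) = 2 * t4 (3*a) (4*a) b c n ∧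
    t4 a (3*a) (4*b) (4*c) (4*n + 6*a) = 2 * t4 a (12*a) b c n := by
  obtain ⟨t0, ht0⟩ := odd_sq_eight a hao
  constructor
  · unfold t4
    apply aux_two_mul_ncard _ _
      (fun v : ℤ × ℤ × ℤ × ℤ => (2*v.2.1 - 3*v.1 + 1, v.1 + 2*v.2.1 - 1, v.2.2.1, v.2.2.2))
      (fun v : ℤ × ℤ × ℤ × ℤ => (3*v.1 - 2*v.2.1, v.1 + 2*v.2.1 - 1, v.2.2.1, v.2.2.2))
    · rintro ⟨p, q, r, s⟩ _ ⟨p', q', r', s'⟩ _ h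
      simp only [Prod.mk.injEq] at h ⊢
      obtain ⟨h1, h2, h3, h4⟩ := h
      refine ⟨by omega, by omega, h3, h4⟩
    · rintro ⟨p, q, r, s⟩ _ ⟨p', q', r', s'⟩ _ h
      simp only [Prod.mk.injEq] at h ⊢
      obtain ⟨h1, h2, h3, h4⟩ := h
      refine ⟨by omega, by omega, h3, h4⟩
    · rintro ⟨p, q, r, s⟩ ht
      simp only [Set.mem_setOf_eq] at ht ⊢
      linear_combination 4 * ht
    · rintro ⟨p, q, r, s⟩ ht
      simp only [Set.mem_setOf_eq] at ht ⊢
      linear_combination 4 * ht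
    · rintro ⟨p, q, r, s⟩ _ ⟨p', q', r', s'⟩ _ h
      simp only [Prod.mk.injEq] at h
      obtain ⟨h1, h2, _, _⟩ := h
      omega
    · rintro ⟨x, y, z, w⟩ hs
      simp only [Set.mem_setOf_eq] at hs
      obtain ⟨k1, hk1⟩ := even_mul_pred z
      obtain ⟨k2, hk2⟩ := even_mul_pred w
      have hK : a * (x * (x - 1) + 3 * (y * (y - 1)) - 6) = 8 * (n - b * k1 - c * k2) := by
        linear_combination -hs - 4 * b * hk1 - 4 * c * hk2
      have h8 : (8 : ℤ) ∣ x * (x - 1) + 3 * (y * (y - 1)) - 6 :=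
        ⟨a * (n - b * k1 - c * k2) - t0 * (x * (x - 1) + 3 * (y * (y - 1)) - 6), by
          linear_combination a * hK - (x * (x - 1) + 3 * (y * (y - 1)) - 6) * ht0⟩
      rcases key1_s14 x y h8 with ⟨e, he⟩ | ⟨e, he⟩
      · left
        refine ⟨(y + 1 - 2*e, e, z, w), ?_, ?_⟩
        · simp only [Set.mem_setOf_eq]
          have hx : x = 8*e - 3*y - 2 := by linarith
          rw [hx] at hs
          have h4 : 8 * n = 4 * ((3*a) * ((y + 1 - 2*e) * ((y + 1 - 2*e) - 1)) + (4*a) * ((e) * ((e) - 1)) + b * (z * (z - 1)) + c * (w * (w - 1))) := by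
            linear_combination hs
          linarith
        · simp only [Prod.mk.injEq]
          exact ⟨by omega, by omega, trivial⟩
      · right
        refine ⟨(y + 1 + 2*e, -e, z, w), ?_, ?_⟩
        · simp only [Set.mem_setOf_eq]
          have hx : x = 8*e + 3*y + 3 := by linarith
          rw [hx] at hs
          have h4 : 8 * n = 4 * ((3*a) * ((y + 1 + 2*e) * ((y + 1 + 2*e) - 1)) + (4*a) * ((-e) * ((-e) - 1)) + b * (z * (z - 1)) + c * (w * (w - 1))) := by
            linear_combination hs
          linarith
        · simp only [Prod.mk.injEq]
          exact ⟨by omega, by omega, trivial⟩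
  · unfold t4
    apply aux_two_mul_ncard _ _
      (fun v : ℤ × ℤ × ℤ × ℤ => (v.1 + 6*v.2.1 - 3, v.1 - 2*v.2.1 + 1, v.2.2.1, v.2.2.2))
      (fun v : ℤ × ℤ × ℤ × ℤ => (v.1 + 6*v.2.1 - 3, 2*v.2.1 - v.1, v.2.2.1, v.2.2.2))
    · rintro ⟨p, q, r, s⟩ _ ⟨p', q', r', s'⟩ _ h
      simp only [Prod.mk.injEq] at h ⊢
      obtain ⟨h1, h2, h3, h4⟩ := h
      refine ⟨by omega, by omega, h3, h4⟩
    · rintro ⟨p, q, r, s⟩ _ ⟨p', q', r', s'⟩ _ h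
      simp only [Prod.mk.injEq] at h ⊢
      obtain ⟨h1, h2, h3, h4⟩ := h
      refine ⟨by omega, by omega, h3, h4⟩
    · rintro ⟨p, q, r, s⟩ ht
      simp only [Set.mem_setOf_eq] at ht ⊢
      linear_combination 4 * ht
    · rintro ⟨p, q, r, s⟩ ht
      simp only [Set.mem_setOf_eq] at ht ⊢
      linear_combination 4 * ht
    · rintro ⟨p, q, r, s⟩ _ ⟨p', q', r', s'⟩ _ h
      simp only [Prod.mk.injEq] at h
      obtain ⟨h1, h2, _, _⟩ := h
      omega
    · rintro ⟨x, y, z, w⟩ hs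
      simp only [Set.mem_setOf_eq] at hs
      obtain ⟨k1, hk1⟩ := even_mul_pred z
      obtain ⟨k2, hk2⟩ := even_mul_pred w
      have hK : a * (x * (x - 1) + 3 * (y * (y - 1)) - 12) = 8 * (n - b * k1 - c * k2) := by
        linear_combination -hs - 4 * b * hk1 - 4 * c * hk2
      have h8 : (8 : ℤ) ∣ x * (x - 1) + 3 * (y * (y - 1)) - 12 :=
        ⟨a * (n - b * k1 - c * k2) - t0 * (x * (x - 1) + 3 * (y * (y - 1)) - 12), by
          linear_combination a * hK - (x * (x - 1) + 3 * (y * (y - 1)) - 12) * ht0⟩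
      rcases key2_s14 x y h8 with ⟨e, he⟩ | ⟨e, he⟩
      · left
        refine ⟨(y + 2*e - 1, e, z, w), ?_, ?_⟩
        · simp only [Set.mem_setOf_eq]
          have hx : x = 8*e + y - 4 := by linarith
          rw [hx] at hs
          have h4 : 8 * n = 4 * (a * ((y + 2*e - 1) * ((y + 2*e - 1) - 1)) + (12*a) * ((e) * ((e) - 1)) + b * (z * (z - 1)) + c * (w * (w - 1))) := by
            linear_combination hs
          linarith
        · simp only [Prod.mk.injEq]
          exact ⟨by omega, by omega, trivial⟩
      · right
        refine ⟨(2*e - y, e, z, w), ?_, ?_⟩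
        · simp only [Set.mem_setOf_eq]
          have hx : x = 8*e - y - 3 := by linarith
          rw [hx] at hs
          have h4 : 8 * n = 4 * (a * ((2*e - y) * ((2*e - y) - 1)) + (12*a) * ((e) * ((e) - 1)) + b * (z * (z - 1)) + c * (w * (w - 1))) := by
            linear_combination hs
          linarith
        · simp only [Prod.mk.injEq]
          exact ⟨by omega, by omega, trivial⟩
end
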